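/- arXiv:2105.10031 — 9 statements merged into one kernel-verified Lean document; each statement's English description precedes it below -/
import Mathlib

section
/- Every simple graph with at least 2 and at most 5 vertices has a non-identical automorphism, and there exists a simple graph on exactly 6 vertices whose only automorphism is the identity. (In other words, the minimum number of vertices of an asymmetric graph with at least two vertices is 6.) -/
/-!
After relabelling its vertices by `Fin n`, a graph is coded by a number `s < 2 ^ (n choose 2)`
whose bits are its edges, so for `2 ≤ n ≤ 5` the claim is a finite check: for every code the
kernel finds a transposition or a product of two transpositions that is an automorphism. Conversely
a triangle with a pendant vertex at one corner and a pendant path of length two at another has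
trivial automorphism group, which the kernel checks over all `720` permutations of its vertices.
-/

theorem Nat.testBit_sum_two_pow (S : Finset ℕ) (k : ℕ) :
    (∑ i ∈ S, 2 ^ i).testBit k = true ↔ k ∈ S := by
  rw [← Nat.mem_bitIndices, ← List.mem_toFinset, Finset.toFinset_bitIndices_sum_two_pow]

namespace SimpleGraph

/-- The position of the pair `i < j` when two-element subsets of `ℕ` are listed by their larger
element; this is `j.choose 2 + i`, written in a form the kernel evaluates fast. -/
def pairIndex (i j : ℕ) : ℕ := j * (j - 1) / 2 + i

theorem pairIndex_eq_choose (i j : ℕ) : pairIndex i j = j.choose 2 + i := by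
  rw [pairIndex, Nat.choose_two_right]

theorem pairIndex_lt_choose {i j n : ℕ} (hij : i < j) (hjn : j < n) :
    pairIndex i j < n.choose 2 := by
  have hsucc : (j + 1).choose 2 = j.choose 2 + j := by
    rw [Nat.choose_succ_succ', Nat.choose_one_right, add_comm]
  calc pairIndex i j < (j + 1).choose 2 := by rw [pairIndex_eq_choose, hsucc]; omega
    _ ≤ n.choose 2 := Nat.choose_le_choose 2 hjn

theorem pairIndex_eq_pairIndex_iff {a b c d : ℕ} (hab : a < b) (hcd : c < d) :
    pairIndex a b = pairIndex c d ↔ a = c ∧ b = d := by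
  refine ⟨fun h => ?_, by rintro ⟨rfl, rfl⟩; rfl⟩
  have hlt : ∀ {a b c d : ℕ}, a < b → b < d → pairIndex a b < pairIndex c d := fun hab hbd =>
    (pairIndex_lt_choose hab hbd).trans_le (by rw [pairIndex_eq_choose]; omega)
  obtain rfl : b = d := by
    by_contra hne
    rcases lt_or_gt_of_ne hne with hbd | hdb
    · exact (hlt hab hbd).ne h
    · exact (hlt hcd hdb).ne' h
  exact ⟨by simpa [pairIndex] using h, rfl⟩

def ofCode (n s : ℕ) : SimpleGraph (Fin n) :=
  fromRel fun i j => i < j ∧ s.testBit (pairIndex i j)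

instance (n s : ℕ) : DecidableRel (ofCode n s).Adj :=
  fun _ _ => inferInstanceAs (Decidable (_ ∧ _))

section EdgeCode

variable {n : ℕ} (G : SimpleGraph (Fin n)) [DecidableRel G.Adj]

def edgeCode : ℕ :=
  ∑ k ∈ ({p : Fin n × Fin n | p.1 < p.2 ∧ G.Adj p.1 p.2} : Finset _).image
    (fun p => pairIndex p.1 p.2), 2 ^ k

theorem edgeCode_lt : G.edgeCode < 2 ^ n.choose 2 := by
  refine Nat.geomSum_lt le_rfl fun k hk => ?_
  obtain ⟨p, hp, rfl⟩ := Finset.mem_image.1 hk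
  exact pairIndex_lt_choose (Finset.mem_filter.1 hp).2.1 p.2.2

theorem testBit_edgeCode {i j : Fin n} (hij : i < j) :
    G.edgeCode.testBit (pairIndex i j) = true ↔ G.Adj i j := by
  simp only [edgeCode, Nat.testBit_sum_two_pow, Finset.mem_image, Finset.mem_filter,
    Finset.mem_univ, true_and, Prod.exists]
  constructor
  · rintro ⟨a, b, ⟨hab, hadj⟩, h⟩
    obtain ⟨hai, hbj⟩ := (pairIndex_eq_pairIndex_iff hab hij).1 h
    rwa [← Fin.ext hai, ← Fin.ext hbj]
  · exact fun hadj => ⟨i, j, ⟨hij, hadj⟩, rfl⟩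

theorem ofCode_edgeCode : ofCode n G.edgeCode = G := by
  ext i j
  rcases lt_trichotomy i j with hij | rfl | hji
  · simp [ofCode, hij, hij.ne, hij.not_gt, G.testBit_edgeCode hij]
  · simp [ofCode]
  · simp [ofCode, hji, hji.ne', hji.not_gt, G.testBit_edgeCode hji, G.adj_comm j i]

end EdgeCode

def transpositions (n : ℕ) : List (Equiv.Perm (Fin n)) :=
  (List.finRange n).flatMap fun a => ((List.finRange n).filter (a < ·)).map (Equiv.swap a)

def candidatePerms (n : ℕ) : List (Equiv.Perm (Fin n)) :=
  transpositions n ++ (transpositions n).flatMap fun σ => (transpositions n).map (σ * ·)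

theorem exists_candidatePerm_ofCode {n : ℕ} (hn : 2 ≤ n) (hn' : n ≤ 5) :
    ∀ s < 2 ^ n.choose 2, ∃ σ ∈ candidatePerms n, (∃ v, σ v ≠ v) ∧
      ∀ i j, (ofCode n s).Adj (σ i) (σ j) ↔ (ofCode n s).Adj i j := by
  interval_cases n <;> decide +kernel

theorem Iso.exists_apply_ne {V W : Type*} {G : SimpleGraph V} {H : SimpleGraph W} (e : G ≃g H)
    (h : ∃ φ : H ≃g H, ∃ w, φ w ≠ w) : ∃ φ : G ≃g G, ∃ v, φ v ≠ v := by
  obtain ⟨φ, w, hw⟩ := h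
  refine ⟨e.trans (φ.trans e.symm), e.symm w, fun h => hw ?_⟩
  simpa using congrArg e h

theorem exists_aut_apply_ne_of_card_le_five {V : Type*} [Fintype V] (h2 : 2 ≤ Fintype.card V)
    (h5 : Fintype.card V ≤ 5) (G : SimpleGraph V) : ∃ φ : G ≃g G, ∃ v, φ v ≠ v := by
  classical
  refine (G.overFinIso rfl).exists_apply_ne ?_
  rw [← (G.overFin rfl).ofCode_edgeCode]
  obtain ⟨σ, -, hσ, haut⟩ := exists_candidatePerm_ofCode h2 h5 _ (G.overFin rfl).edgeCode_lt
  exact ⟨⟨σ, haut _ _⟩, hσ⟩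

def asymGraph : SimpleGraph (Fin 6) :=
  fromRel fun i j => (i, j) ∈ [(0, 1), (0, 2), (1, 2), (0, 3), (1, 4), (4, 5)]

instance : DecidableRel asymGraph.Adj :=
  fun _ _ => inferInstanceAs (Decidable (_ ∧ _))

theorem asymGraph_perm_eq_one : ∀ σ : Equiv.Perm (Fin 6),
    (∀ i j, asymGraph.Adj (σ i) (σ j) ↔ asymGraph.Adj i j) → σ = 1 := by
  decide +kernel

theorem asymGraph_aut_apply (φ : asymGraph ≃g asymGraph) (v : Fin 6) : φ v = v :=
  DFunLike.congr_fun (asymGraph_perm_eq_one φ.toEquiv fun _ _ => φ.map_rel_iff) v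

end SimpleGraph

/-- Every simple graph with at least 2 and at most 5 vertices has a non-identical
automorphism, and there is a simple graph on exactly 6 vertices whose only
automorphism is the identity. -/
theorem stmt_0 :
    (∀ (V : Type) [Fintype V], 2 ≤ Fintype.card V → Fintype.card V ≤ 5 →
      ∀ G : SimpleGraph V, ∃ φ : G ≃g G, ∃ v : V, φ v ≠ v) ∧
    (∃ G : SimpleGraph (Fin 6), ∀ φ : G ≃g G, ∀ v : Fin 6, φ v = v) :=
  ⟨fun _ _ h2 h5 G => G.exists_aut_apply_ne_of_card_le_five h2 h5,
    ⟨_, SimpleGraph.asymGraph_aut_apply⟩⟩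
end

section
/- For every integer k ≥ 4: every k-uniform hypergraph with at least 2 and at most k+1 vertices has a non-identical automorphism, and there exists a k-uniform hypergraph on exactly k+2 vertices whose only automorphism is the identity. (In other words, n(k) = k+2 for k ≥ 4, where n(k) denotes the minimum number of vertices of an asymmetric k-uniform hypergraph with at least two vertices.) -/
/-- An automorphism of a hypergraph `(X, M)`: a permutation of the ambient type that
fixes every vertex outside `X` (so it is essentially a permutation of `X`) and
preserves the edge set `M`. -/
def IsAuto {V : Type*} [DecidableEq V] (X : Finset V) (M : Finset (Finset V))
    (σ : Equiv.Perm V) : Prop :=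
  (∀ v ∉ X, σ v = v) ∧ ∀ E : Finset V, E ∈ M ↔ E.image σ ∈ M

/- Auxiliary lemmas. -/

lemma image_swap_of_mem {V : Type*} [DecidableEq V] {X : Finset V} {a b : V}
    (ha : a ∈ X) (hb : b ∈ X) : X.image (Equiv.swap a b) = X := by
  refine Finset.eq_of_subset_of_card_le ?_ ?_
  · intro x hx
    simp only [Finset.mem_image] at hx
    obtain ⟨y, hy, rfl⟩ := hx
    rcases eq_or_ne y a with rfl | hya
    · rwa [Equiv.swap_apply_left]
    rcases eq_or_ne y b with rfl | hyb
    · rwa [Equiv.swap_apply_right]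
    · rwa [Equiv.swap_apply_of_ne_of_ne hya hyb]
  · rw [Finset.card_image_of_injective _ (Equiv.injective _)]

lemma image_image_swap {V : Type*} [DecidableEq V] (a b : V) (E : Finset V) :
    (E.image (Equiv.swap a b)).image (Equiv.swap a b) = E := by
  rw [Finset.image_image]
  have : (Equiv.swap a b) ∘ (Equiv.swap a b) = id := by
    funext x; simp [Function.comp, Equiv.swap_apply_self]
  rw [this, Finset.image_id]

/-- adjacency of the rigid graph: a path `0-1-2-⋯` together with the chord `{1,3}`. -/
def adj (x y : ℕ) : Prop :=
  x + 1 = y ∨ y + 1 = x ∨ (x = 1 ∧ y = 3) ∨ (x = 3 ∧ y = 1)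

instance (x y : ℕ) : Decidable (adj x y) :=
  inferInstanceAs (Decidable (x + 1 = y ∨ y + 1 = x ∨ (x = 1 ∧ y = 3) ∨ (x = 3 ∧ y = 1)))

lemma adj_symm {x y : ℕ} (h : adj x y) : adj y x := by unfold adj at h ⊢; omega

lemma adj_ne {x y : ℕ} (h : adj x y) : x ≠ y := by unfold adj at h; omega

lemma rigid_tri {s1 s2 s3 : ℕ} (a12 : adj s1 s2) (a23 : adj s2 s3) (a13 : adj s1 s3)
    (n12 : s1 ≠ s2) (n13 : s1 ≠ s3) (n23 : s2 ≠ s3) :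
    1 ≤ s1 ∧ s1 ≤ 3 ∧ 1 ≤ s2 ∧ s2 ≤ 3 ∧ 1 ≤ s3 ∧ s3 ≤ 3 := by
  unfold adj at a12 a23 a13; omega

lemma nbr0 {x : ℕ} (h : adj 0 x) : x = 1 := by unfold adj at h; omega
lemma nbr1 {x : ℕ} (h : adj 1 x) : x = 0 ∨ x = 2 ∨ x = 3 := by unfold adj at h; omega
lemma nbr2 {x : ℕ} (h : adj 2 x) : x = 1 ∨ x = 3 := by unfold adj at h; omega
lemma nbr3 {x : ℕ} (h : adj 3 x) : x = 1 ∨ x = 2 ∨ x = 4 := by unfold adj at h; omega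
lemma nbr4 {x : ℕ} (h : adj 4 x) : x = 3 ∨ x = 5 := by unfold adj at h; omega
lemma nbr_big {m x : ℕ} (hm : 5 ≤ m) (h : adj m x) : x = m - 1 ∨ x = m + 1 := by
  unfold adj at h; omega

/-- The only way six (values of) vertices can be an embedding of the first six vertices
of the rigid graph is the identity. -/
lemma rigid_base {s0 s1 s2 s3 s4 s5 : ℕ}
    (a01 : adj s0 s1) (a12 : adj s1 s2) (a23 : adj s2 s3) (a34 : adj s3 s4)
    (a45 : adj s4 s5) (a13 : adj s1 s3)
    (n02 : s0 ≠ s2) (n03 : s0 ≠ s3)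
    (n12 : s1 ≠ s2) (n13 : s1 ≠ s3) (n14 : s1 ≠ s4)
    (n23 : s2 ≠ s3) (n24 : s2 ≠ s4)
    (n34 : s3 ≠ s4) (n35 : s3 ≠ s5) :
    s0 = 0 ∧ s1 = 1 ∧ s2 = 2 ∧ s3 = 3 ∧ s4 = 4 ∧ s5 = 5 := by
  obtain ⟨l1, u1, l2, u2, l3, u3⟩ := rigid_tri a12 a23 a13 n12 n13 n23
  interval_cases s1 <;> interval_cases s2 <;> interval_cases s3 <;>
    first
    | omega
    | (have hs4 := nbr2 a34; omega)
    | (have hs0 := nbr2 (adj_symm a01); omega)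
    | (have hs4 := nbr1 a34
       have e4 : s4 = 0 := by omega
       rw [e4] at a45
       have hs5 := nbr0 a45
       omega)
    | (have hs0 := nbr1 (adj_symm a01)
       have hs4 := nbr3 a34
       have e4 : s4 = 4 := by omega
       rw [e4] at a45
       have hs5 := nbr4 a45
       omega)

/-- the hyperedges: complements of the graph edges. -/
def hedges (n : ℕ) : Finset (Finset (Fin n)) :=
  (Finset.univ.filter (fun p : Fin n × Fin n => adj p.1.val p.2.val)).image
    (fun p => ({p.1, p.2} : Finset (Fin n))ᶜ)

lemma mem_hedges {n : ℕ} {E : Finset (Fin n)} :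
    E ∈ hedges n ↔ ∃ a b : Fin n, adj a.val b.val ∧ ({a, b} : Finset (Fin n))ᶜ = E := by
  unfold hedges
  simp only [Finset.mem_image, Finset.mem_filter, Finset.mem_univ, true_and, Prod.exists]

lemma image_compl_perm {n : ℕ} (σ : Equiv.Perm (Fin n)) (s : Finset (Fin n)) :
    sᶜ.image σ = (s.image σ)ᶜ := by
  ext x
  simp only [Finset.mem_image, Finset.mem_compl]
  constructor
  · rintro ⟨y, hy, rfl⟩ ⟨z, hz, hzy⟩
    exact hy (σ.injective hzy ▸ hz)
  · intro hx
    exact ⟨σ.symm x, fun hs => hx ⟨σ.symm x, hs, σ.apply_symm_apply x⟩, σ.apply_symm_apply x⟩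

/-- For k ≥ 4: every k-uniform hypergraph with at least 2 and at most k+1 vertices
has a non-identical automorphism, and there is a k-uniform hypergraph on exactly
k+2 vertices whose only automorphism is the identity (so n(k) = k+2). -/
theorem stmt_2 (k : ℕ) (hk : 4 ≤ k) :
    (∀ (V : Type) [DecidableEq V] (X : Finset V) (M : Finset (Finset V)),
      (∀ E ∈ M, E ⊆ X) → (∀ E ∈ M, E.card = k) → 2 ≤ X.card → X.card ≤ k + 1 →
      ∃ σ : Equiv.Perm V, IsAuto X M σ ∧ σ ≠ 1) ∧
    (∃ M : Finset (Finset (Fin (k + 2))), (∀ E ∈ M, E.card = k) ∧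
      ∀ σ : Equiv.Perm (Fin (k + 2)), IsAuto Finset.univ M σ → σ = 1) := by
  constructor
  · -- Part 1: small hypergraphs are symmetric
    intro V _ X M hsub hcard h2 hle
    by_cases hX : X.card ≤ k
    · -- at most k vertices: the only possible edge is X itself
      have h1lt : 1 < X.card := by omega
      obtain ⟨a, b, ha, hb, hab⟩ := Finset.one_lt_card_iff.mp h1lt
      have hfwd : ∀ E, E ∈ M → E.image (Equiv.swap a b) ∈ M := by
        intro E hE
        have hEX : E = X := Finset.eq_of_subset_of_card_le (hsub E hE)
          (by rw [hcard E hE]; exact hX)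
        rw [hEX, image_swap_of_mem ha hb]
        exact hEX ▸ hE
      refine ⟨Equiv.swap a b, ⟨fun v hv => Equiv.swap_apply_of_ne_of_ne
        (by rintro rfl; exact hv ha) (by rintro rfl; exact hv hb),
        fun E => ⟨hfwd E, fun h => ?_⟩⟩, fun h => hab (Equiv.swap_eq_one_iff.mp h)⟩
      have := hfwd _ h
      rwa [image_image_swap] at this
    · -- exactly k+1 vertices: edges are complements of points; pigeonhole on 3 points
      have hXc : X.card = k + 1 := by omega
      have h2lt : 2 < X.card := by omega
      obtain ⟨a, b, c, ha, hb, hc, hab, hac, hbc⟩ := Finset.two_lt_card_iff.mp h2lt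
      have hpick : ∃ x y, x ∈ X ∧ y ∈ X ∧ x ≠ y ∧ (X.erase x ∈ M ↔ X.erase y ∈ M) := by
        by_cases h1 : (X.erase a ∈ M ↔ X.erase b ∈ M)
        · exact ⟨a, b, ha, hb, hab, h1⟩
        by_cases h2' : (X.erase a ∈ M ↔ X.erase c ∈ M)
        · exact ⟨a, c, ha, hc, hac, h2'⟩
        · exact ⟨b, c, hb, hc, hbc, by tauto⟩
      obtain ⟨x, y, hx, hy, hxy, hstat⟩ := hpick
      have hfwd : ∀ E, E ∈ M → E.image (Equiv.swap x y) ∈ M := by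
        intro E hE
        have hEX := hsub E hE
        have h1 : (X \ E).card = 1 := by
          rw [Finset.card_sdiff_of_subset hEX, hcard E hE]; omega
        obtain ⟨v, hv⟩ := Finset.card_eq_one.mp h1
        have hvm : v ∈ X \ E := hv ▸ Finset.mem_singleton_self v
        have hvX : v ∈ X := (Finset.mem_sdiff.mp hvm).1
        have hvE : v ∉ E := (Finset.mem_sdiff.mp hvm).2
        have hEv : E = X.erase v := by
          ext w
          simp only [Finset.mem_erase]
          constructor
          · intro hw; exact ⟨fun h => hvE (h ▸ hw), hEX hw⟩
          · rintro ⟨hwv, hwX⟩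
            by_contra hwE
            have : w ∈ X \ E := Finset.mem_sdiff.mpr ⟨hwX, hwE⟩
            rw [hv] at this
            exact hwv (Finset.mem_singleton.mp this)
        rw [hEv] at hE ⊢
        rw [Finset.image_erase (Equiv.injective _), image_swap_of_mem hx hy]
        rcases eq_or_ne v x with rfl | hvx
        · rw [Equiv.swap_apply_left]; exact hstat.mp hE
        rcases eq_or_ne v y with rfl | hvy
        · rw [Equiv.swap_apply_right]; exact hstat.mpr hE
        · rw [Equiv.swap_apply_of_ne_of_ne hvx hvy]; exact hE
      refine ⟨Equiv.swap x y, ⟨fun v hv => Equiv.swap_apply_of_ne_of_ne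
        (by rintro rfl; exact hv hx) (by rintro rfl; exact hv hy),
        fun E => ⟨hfwd E, fun h => ?_⟩⟩, fun h => hxy (Equiv.swap_eq_one_iff.mp h)⟩
      have := hfwd _ h
      rwa [image_image_swap] at this
  · -- Part 2: an asymmetric k-uniform hypergraph on k+2 vertices
    refine ⟨hedges (k + 2), ?_, ?_⟩
    · intro E hE
      obtain ⟨a, b, hadj, rfl⟩ := mem_hedges.mp hE
      have hne : a ≠ b := fun h => adj_ne hadj (by rw [h])
      rw [Finset.card_compl, Finset.card_pair hne, Fintype.card_fin]
      omega
    · intro σ hauto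
      obtain ⟨-, hM⟩ := hauto
      -- images of pair-complements
      have himg : ∀ a b : Fin (k + 2),
          (({a, b} : Finset (Fin (k + 2)))ᶜ).image σ = ({σ a, σ b} : Finset (Fin (k + 2)))ᶜ := by
        intro a b
        rw [image_compl_perm]
        congr 1
        simp
      have hpair : ∀ a b : Fin (k + 2),
          adj a.val b.val ↔ ({a, b} : Finset (Fin (k + 2)))ᶜ ∈ hedges (k + 2) := by
        intro a b
        constructor
        · intro h; exact mem_hedges.mpr ⟨a, b, h, rfl⟩
        · intro h
          obtain ⟨a', b', hadj', heq⟩ := mem_hedges.mp h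
          have hpq : ({a', b'} : Finset (Fin (k + 2))) = {a, b} := compl_injective heq
          have hset : ({a', b'} : Set (Fin (k + 2))) = {a, b} := by
            have := congrArg (fun s : Finset (Fin (k + 2)) => (s : Set (Fin (k + 2)))) hpq
            simpa using this
          rcases Set.pair_eq_pair_iff.mp hset with ⟨h1, h2⟩ | ⟨h1, h2⟩
          · rw [← h1, ← h2]; exact hadj'
          · rw [← h2, ← h1]; exact adj_symm hadj'
      have hAdj : ∀ a b : Fin (k + 2), adj a.val b.val ↔ adj (σ a).val (σ b).val := by
        intro a b
        rw [hpair a b, hM (({a, b} : Finset (Fin (k + 2)))ᶜ), himg a b, ← hpair (σ a) (σ b)]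
      -- value-level versions
      have hA : ∀ (a b : ℕ) (ha : a < k + 2) (hb : b < k + 2), adj a b →
          adj (σ ⟨a, ha⟩).val (σ ⟨b, hb⟩).val := by
        intro a b ha hb h
        exact (hAdj ⟨a, ha⟩ ⟨b, hb⟩).mp h
      have hne : ∀ (a b : ℕ) (ha : a < k + 2) (hb : b < k + 2), a ≠ b →
          (σ ⟨a, ha⟩).val ≠ (σ ⟨b, hb⟩).val := by
        intro a b ha hb hab h
        exact hab (congrArg Fin.val (σ.injective (Fin.val_injective h)))
      -- fixed bound proofs so that atoms coincide syntactically
      have b0 : 0 < k + 2 := by omega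
      have b1 : 1 < k + 2 := by omega
      have b2 : 2 < k + 2 := by omega
      have b3 : 3 < k + 2 := by omega
      have b4 : 4 < k + 2 := by omega
      have b5 : 5 < k + 2 := by omega
      have hbase := rigid_base
        (hA 0 1 b0 b1 (Or.inl rfl)) (hA 1 2 b1 b2 (Or.inl rfl))
        (hA 2 3 b2 b3 (Or.inl rfl)) (hA 3 4 b3 b4 (Or.inl rfl))
        (hA 4 5 b4 b5 (Or.inl rfl)) (hA 1 3 b1 b3 (Or.inr (Or.inr (Or.inl ⟨rfl, rfl⟩))))
        (hne 0 2 b0 b2 (by omega)) (hne 0 3 b0 b3 (by omega))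
        (hne 1 2 b1 b2 (by omega)) (hne 1 3 b1 b3 (by omega)) (hne 1 4 b1 b4 (by omega))
        (hne 2 3 b2 b3 (by omega)) (hne 2 4 b2 b4 (by omega))
        (hne 3 4 b3 b4 (by omega)) (hne 3 5 b3 b5 (by omega))
      have main : ∀ m : ℕ, ∀ h : m < k + 2, (σ ⟨m, h⟩).val = m := by
        intro m
        induction m using Nat.strong_induction_on with
        | _ m ih =>
          intro h
          by_cases hm5 : m ≤ 5
          · interval_cases m
            · exact hbase.1
            · exact hbase.2.1
            · exact hbase.2.2.1
            · exact hbase.2.2.2.1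
            · exact hbase.2.2.2.2.1
            · exact hbase.2.2.2.2.2
          · push_neg at hm5
            have hm1 : m - 1 < k + 2 := by omega
            have hm2 : m - 2 < k + 2 := by omega
            have e1 := ih (m - 1) (by omega) hm1
            have e2 := ih (m - 2) (by omega) hm2
            have hadj : adj (m - 1) m := by unfold adj; omega
            have a1 := hA (m - 1) m hm1 h hadj
            rw [e1] at a1
            have hne2 : (σ ⟨m, h⟩).val ≠ m - 2 := by
              intro hh
              have h1 : σ ⟨m, h⟩ = σ ⟨m - 2, hm2⟩ := Fin.val_injective (by rw [hh, e2])
              have h2 := congrArg Fin.val (σ.injective h1)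
              simp only at h2
              omega
            rcases nbr_big (by omega) a1 with hc | hc <;> omega
      ext x
      have := main x.val x.isLt
      simp only [Fin.eta] at this
      simp [this]
end

section
/- For every integer k ≥ 4, there exists a minimal asymmetric k-uniform hypergraph on exactly k+2 vertices, i.e., a k-graph (X, M) with |X| = k+2 that is asymmetric and such that every induced subhypergraph on a vertex subset X' with 1 < |X'| < |X| is symmetric. -/
/-- The underlying graph: `a ~ b` iff `a+b ≥ k+2` or `{a,b} = {0, (k+3)/2}`. -/
def HAdj (k : ℕ) (a b : Fin (k + 2)) : Prop :=
  a ≠ b ∧ (k + 2 ≤ a.val + b.val ∨ (a.val = 0 ∧ b.val = (k + 3) / 2) ∨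
    (a.val = (k + 3) / 2 ∧ b.val = 0))

instance (k : ℕ) (a b : Fin (k + 2)) : Decidable (HAdj k a b) := by
  unfold HAdj; infer_instance

lemma HAdj.symm' {k : ℕ} {a b : Fin (k + 2)} (h : HAdj k a b) : HAdj k b a := by
  obtain ⟨h1, h2⟩ := h
  exact ⟨h1.symm, by omega⟩

/-- The hypergraph: complements of edges of the graph. -/
def HM (k : ℕ) : Finset (Finset (Fin (k + 2))) :=
  ((Finset.univ ×ˢ Finset.univ).filter fun p => HAdj k p.1 p.2).image
    fun p => ({p.1, p.2} : Finset (Fin (k + 2)))ᶜ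

lemma mem_HM {k : ℕ} {E : Finset (Fin (k + 2))} :
    E ∈ HM k ↔ ∃ a b, HAdj k a b ∧ E = ({a, b} : Finset (Fin (k + 2)))ᶜ := by
  unfold HM
  simp only [Finset.mem_image, Finset.mem_filter, Finset.mem_product, Finset.mem_univ,
    true_and, Prod.exists]
  constructor
  · rintro ⟨a, b, ⟨h, rfl⟩⟩; exact ⟨a, b, h, rfl⟩
  · rintro ⟨a, b, h, rfl⟩; exact ⟨a, b, ⟨h, rfl⟩⟩

lemma pair_compl_mem {k : ℕ} (a b : Fin (k + 2)) :
    (({a, b} : Finset (Fin (k + 2)))ᶜ ∈ HM k) ↔ HAdj k a b := by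
  rw [mem_HM]
  constructor
  · rintro ⟨x, y, hxy, hE⟩
    rw [compl_inj_iff] at hE
    have hx : x ∈ ({a, b} : Finset (Fin (k + 2))) := by rw [hE]; simp
    have hy : y ∈ ({a, b} : Finset (Fin (k + 2))) := by rw [hE]; simp
    have ha : a ∈ ({x, y} : Finset (Fin (k + 2))) := by rw [← hE]; simp
    simp only [Finset.mem_insert, Finset.mem_singleton] at hx hy ha
    have hne := hxy.1
    rcases hx with rfl | rfl
    · rcases hy with rfl | rfl
      · exact absurd rfl hne
      · exact hxy
    · rcases hy with rfl | rfl
      · exact hxy.symm'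
      · exact absurd rfl hne
  · intro h; exact ⟨a, b, h, rfl⟩

lemma card_of_mem_HM {k : ℕ} {E : Finset (Fin (k + 2))} (h : E ∈ HM k) : E.card = k := by
  obtain ⟨a, b, hab, rfl⟩ := mem_HM.mp h
  rw [Finset.card_compl, Finset.card_pair hab.1]
  simp

lemma image_compl {α : Type*} [Fintype α] [DecidableEq α] (σ : Equiv.Perm α) (s : Finset α) :
    sᶜ.image σ = (s.image σ)ᶜ := by
  ext x
  simp only [Finset.mem_image, Finset.mem_compl]
  constructor
  · rintro ⟨y, hy, rfl⟩ ⟨z, hz, hzx⟩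
    exact hy (by rwa [σ.injective hzx] at hz)
  · intro hx
    exact ⟨σ.symm x, fun h => hx ⟨_, h, by simp⟩, by simp⟩

lemma image_pair_compl {k : ℕ} (σ : Equiv.Perm (Fin (k + 2))) (a b : Fin (k + 2)) :
    (({a, b} : Finset (Fin (k + 2)))ᶜ).image σ = ({σ a, σ b} : Finset (Fin (k + 2)))ᶜ := by
  rw [image_compl, Finset.image_insert, Finset.image_singleton]

lemma auto_adj {k : ℕ} {σ : Equiv.Perm (Fin (k + 2))}
    (h : ∀ E : Finset (Fin (k + 2)), E ∈ HM k ↔ E.image σ ∈ HM k) (a b : Fin (k + 2)) :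
    HAdj k a b ↔ HAdj k (σ a) (σ b) := by
  rw [← pair_compl_mem, ← pair_compl_mem (σ a), h, image_pair_compl]

/-- Neighborhood of a vertex in the graph. -/
def nbhd (k : ℕ) (a : Fin (k + 2)) : Finset (Fin (k + 2)) :=
  Finset.univ.filter fun b => HAdj k a b

lemma nbhd_map {k : ℕ} {σ : Equiv.Perm (Fin (k + 2))}
    (h : ∀ E : Finset (Fin (k + 2)), E ∈ HM k ↔ E.image σ ∈ HM k) (a : Fin (k + 2)) :
    nbhd k (σ a) = (nbhd k a).image σ := by
  ext b
  simp only [nbhd, Finset.mem_image, Finset.mem_filter, Finset.mem_univ, true_and]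
  constructor
  · intro hb
    refine ⟨σ.symm b, ?_, by simp⟩
    rw [auto_adj h]
    simpa using hb
  · rintro ⟨y, hy, rfl⟩
    exact (auto_adj h a y).mp hy

lemma card_filter_ge (k x : ℕ) (hx : x < k + 2) :
    (Finset.univ.filter fun b : Fin (k + 2) => x ≤ b.val).card = k + 2 - x := by
  have : (Finset.univ.filter fun b : Fin (k + 2) => x ≤ b.val)
      = Finset.Ici (⟨x, hx⟩ : Fin (k + 2)) := by
    ext b; simp [Fin.le_def]
  rw [this, Fin.card_Ici]

/-- Target degree function. -/
def Dk (k v : ℕ) : ℕ :=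
  if v = 0 then 1 else if v = (k + 3) / 2 then (k + 3) / 2
  else if k + 2 ≤ 2 * v then v - 1 else v

lemma card_nbhd {k : ℕ} (hk : 4 ≤ k) (a : Fin (k + 2)) :
    (nbhd k a).card = Dk k a.val := by
  have hc2 : (k + 3) / 2 < k + 2 := by omega
  by_cases ha0 : a.val = 0
  · have : nbhd k a = {(⟨(k + 3) / 2, hc2⟩ : Fin (k + 2))} := by
      ext b
      simp only [nbhd, Finset.mem_filter, Finset.mem_univ, true_and, HAdj, ne_eq,
        Fin.ext_iff, Finset.mem_singleton, ha0]
      have := b.isLt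
      omega
    rw [this, Finset.card_singleton, Dk, if_pos ha0]
  · by_cases hac : a.val = (k + 3) / 2
    · have hnc : k + 2 - (k + 3) / 2 < k + 2 := by omega
      have : nbhd k a = insert (⟨0, by omega⟩ : Fin (k + 2))
          ((Finset.Ici (⟨k + 2 - (k + 3) / 2, hnc⟩ : Fin (k + 2))).erase a) := by
        ext b
        simp only [nbhd, Finset.mem_filter, Finset.mem_univ, true_and, HAdj, ne_eq,
          Fin.ext_iff, Finset.mem_insert, Finset.mem_erase, Finset.mem_Ici, Fin.le_def]
        have := b.isLt
        omega
      rw [this, Finset.card_insert_of_notMem, Finset.card_erase_of_mem, Fin.card_Ici]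
      · simp only [Dk, if_neg ha0, if_pos hac]
        omega
      · simp only [Finset.mem_Ici, Fin.le_def]
        omega
      · simp only [Finset.mem_erase, Finset.mem_Ici, Fin.le_def, ne_eq, Fin.ext_iff]
        omega
    · have hna : k + 2 - a.val < k + 2 := by omega
      by_cases h2a : k + 2 ≤ 2 * a.val
      · have : nbhd k a = (Finset.Ici (⟨k + 2 - a.val, hna⟩ : Fin (k + 2))).erase a := by
          ext b
          simp only [nbhd, Finset.mem_filter, Finset.mem_univ, true_and, HAdj, ne_eq,
            Fin.ext_iff, Finset.mem_erase, Finset.mem_Ici, Fin.le_def]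
          have := b.isLt
          omega
        rw [this, Finset.card_erase_of_mem, Fin.card_Ici]
        · simp only [Dk, if_neg ha0, if_neg hac, if_pos h2a]
          have := a.isLt
          omega
        · simp only [Finset.mem_Ici, Fin.le_def]
          omega
      · have : nbhd k a = Finset.Ici (⟨k + 2 - a.val, hna⟩ : Fin (k + 2)) := by
          ext b
          simp only [nbhd, Finset.mem_filter, Finset.mem_univ, true_and, HAdj, ne_eq,
            Fin.ext_iff, Finset.mem_Ici, Fin.le_def]
          have := b.isLt
          omega
        rw [this, Fin.card_Ici]
        simp only [Dk, if_neg ha0, if_neg hac, if_neg h2a]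
        omega

lemma deg_almost_inj {k : ℕ} (hk : 4 ≤ k) (u v : ℕ) (hu : u < k + 2) (hv : v < k + 2)
    (h : Dk k u = Dk k v) :
    u = v ∨ (u = 0 ∧ v = 1) ∨ (u = 1 ∧ v = 0) ∨
      (u = (k + 3) / 2 ∧ v = (k + 3) / 2 + 1) ∨ (u = (k + 3) / 2 + 1 ∧ v = (k + 3) / 2) := by
  unfold Dk at h
  split_ifs at h <;> omega

lemma asym {k : ℕ} (hk : 4 ≤ k) (σ : Equiv.Perm (Fin (k + 2)))
    (h : ∀ E : Finset (Fin (k + 2)), E ∈ HM k ↔ E.image σ ∈ HM k) : σ = 1 := by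
  have hdeg : ∀ a : Fin (k + 2), Dk k (σ a).val = Dk k a.val := by
    intro a
    rw [← card_nbhd hk, ← card_nbhd hk, nbhd_map h, Finset.card_image_of_injective _ σ.injective]
  have hpair : ∀ a : Fin (k + 2), (σ a).val = a.val ∨
      ((σ a).val = 0 ∧ a.val = 1) ∨ ((σ a).val = 1 ∧ a.val = 0) ∨
      ((σ a).val = (k + 3) / 2 ∧ a.val = (k + 3) / 2 + 1) ∨
      ((σ a).val = (k + 3) / 2 + 1 ∧ a.val = (k + 3) / 2) :=
    fun a => deg_almost_inj hk _ _ (σ a).isLt a.isLt (hdeg a)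
  have p0 : 0 < k + 2 := by omega
  have p1 : 1 < k + 2 := by omega
  have pN : k + 1 < k + 2 := by omega
  have pc : (k + 3) / 2 < k + 2 := by omega
  have pc1 : (k + 3) / 2 + 1 < k + 2 := by omega
  -- the top vertex is fixed
  have hN : σ ⟨k + 1, pN⟩ = ⟨k + 1, pN⟩ := by
    have hp := hpair ⟨k + 1, pN⟩
    simp only [Fin.val_mk] at hp
    apply Fin.ext
    simp only [Fin.val_mk]
    omega
  -- vertex 0 is fixed
  have h0 : σ ⟨0, p0⟩ = ⟨0, p0⟩ := by
    have hp := hpair ⟨0, p0⟩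
    simp only [Fin.val_mk] at hp
    have hcase : (σ (⟨0, p0⟩ : Fin (k + 2))).val = 0 ∨
        (σ (⟨0, p0⟩ : Fin (k + 2))).val = 1 := by omega
    rcases hcase with hc0 | hc1
    · exact Fin.ext (by simp only [Fin.val_mk]; omega)
    · exfalso
      have h1 : σ (⟨0, p0⟩ : Fin (k + 2)) = (⟨1, p1⟩ : Fin (k + 2)) :=
        Fin.ext (by simp only [Fin.val_mk]; omega)
      have hiff := auto_adj h (⟨0, p0⟩ : Fin (k + 2)) ⟨k + 1, pN⟩
      rw [h1, hN] at hiff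
      have hA : HAdj k (⟨1, p1⟩ : Fin (k + 2)) ⟨k + 1, pN⟩ :=
        ⟨by simp only [ne_eq, Fin.mk.injEq]; omega,
         Or.inl (show k + 2 ≤ 1 + (k + 1) by omega)⟩
      have hB : ¬ HAdj k (⟨0, p0⟩ : Fin (k + 2)) ⟨k + 1, pN⟩ := by
        rintro ⟨-, hB⟩
        simp only [Fin.val_mk] at hB
        omega
      exact hB (hiff.mpr hA)
  -- vertex 1 is fixed
  have h1 : σ ⟨1, p1⟩ = ⟨1, p1⟩ := by
    have hp := hpair ⟨1, p1⟩
    simp only [Fin.val_mk] at hp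
    have hcase : (σ (⟨1, p1⟩ : Fin (k + 2))).val = 1 ∨
        (σ (⟨1, p1⟩ : Fin (k + 2))).val = 0 := by omega
    rcases hcase with hc1 | hc0
    · exact Fin.ext (by simp only [Fin.val_mk]; omega)
    · exfalso
      have heq : σ (⟨1, p1⟩ : Fin (k + 2)) = σ ⟨0, p0⟩ := by
        rw [h0]
        exact Fin.ext (by simp only [Fin.val_mk]; omega)
      have := σ.injective heq
      simp only [Fin.ext_iff, Fin.val_mk] at this
      omega
  -- vertex c is fixed
  have hcfix : σ ⟨(k + 3) / 2, pc⟩ = ⟨(k + 3) / 2, pc⟩ := by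
    have hp := hpair ⟨(k + 3) / 2, pc⟩
    simp only [Fin.val_mk] at hp
    have hcase : (σ (⟨(k + 3) / 2, pc⟩ : Fin (k + 2))).val = (k + 3) / 2 ∨
        (σ (⟨(k + 3) / 2, pc⟩ : Fin (k + 2))).val = (k + 3) / 2 + 1 := by omega
    rcases hcase with hc0 | hc1
    · exact Fin.ext (by simp only [Fin.val_mk]; omega)
    · exfalso
      have hsc : σ (⟨(k + 3) / 2, pc⟩ : Fin (k + 2))
          = (⟨(k + 3) / 2 + 1, pc1⟩ : Fin (k + 2)) :=
        Fin.ext (by simp only [Fin.val_mk]; omega)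
      have hiff := auto_adj h (⟨(k + 3) / 2, pc⟩ : Fin (k + 2)) ⟨0, p0⟩
      rw [hsc, h0] at hiff
      have hA : HAdj k (⟨(k + 3) / 2, pc⟩ : Fin (k + 2)) ⟨0, p0⟩ :=
        ⟨by simp only [ne_eq, Fin.mk.injEq]; omega,
         Or.inr (Or.inr ⟨rfl, rfl⟩)⟩
      have hB : ¬ HAdj k (⟨(k + 3) / 2 + 1, pc1⟩ : Fin (k + 2)) ⟨0, p0⟩ := by
        rintro ⟨-, hB⟩
        simp only [Fin.val_mk] at hB
        omega
      exact hB (hiff.mp hA)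
  -- vertex c+1 is fixed
  have hc1fix : σ ⟨(k + 3) / 2 + 1, pc1⟩ = ⟨(k + 3) / 2 + 1, pc1⟩ := by
    have hp := hpair ⟨(k + 3) / 2 + 1, pc1⟩
    simp only [Fin.val_mk] at hp
    have hcase : (σ (⟨(k + 3) / 2 + 1, pc1⟩ : Fin (k + 2))).val = (k + 3) / 2 + 1 ∨
        (σ (⟨(k + 3) / 2 + 1, pc1⟩ : Fin (k + 2))).val = (k + 3) / 2 := by omega
    rcases hcase with hc1 | hc0
    · exact Fin.ext (by simp only [Fin.val_mk]; omega)
    · exfalso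
      have heq : σ (⟨(k + 3) / 2 + 1, pc1⟩ : Fin (k + 2)) = σ ⟨(k + 3) / 2, pc⟩ := by
        rw [hcfix]
        exact Fin.ext (by simp only [Fin.val_mk]; omega)
      have := σ.injective heq
      simp only [Fin.ext_iff, Fin.val_mk] at this
      omega
  -- all vertices are fixed
  apply Equiv.ext
  intro a
  simp only [Equiv.Perm.one_apply]
  have hp := hpair a
  rcases hp with hp | hp | hp | hp | hp
  · exact Fin.ext hp
  · have ha : a = (⟨1, p1⟩ : Fin (k + 2)) := Fin.ext (by simp only [Fin.val_mk]; omega)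
    rw [ha]
    exact h1
  · have ha : a = (⟨0, p0⟩ : Fin (k + 2)) := Fin.ext (by simp only [Fin.val_mk]; omega)
    rw [ha]
    exact h0
  · have ha : a = (⟨(k + 3) / 2 + 1, pc1⟩ : Fin (k + 2)) :=
      Fin.ext (by simp only [Fin.val_mk]; omega)
    rw [ha]
    exact hc1fix
  · have ha : a = (⟨(k + 3) / 2, pc⟩ : Fin (k + 2)) :=
      Fin.ext (by simp only [Fin.val_mk]; omega)
    rw [ha]
    exact hcfix

lemma invol_auto {V : Type*} [DecidableEq V] (σ : Equiv.Perm V) (hσ : ∀ x, σ (σ x) = x)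
    (M' : Finset (Finset V)) (h : ∀ E ∈ M', E.image σ ∈ M') :
    ∀ E : Finset V, E ∈ M' ↔ E.image σ ∈ M' := by
  intro E
  constructor
  · exact h E
  · intro hE
    have := h _ hE
    rwa [Finset.image_image, show (⇑σ ∘ ⇑σ : V → V) = id from funext hσ, Finset.image_id] at this

lemma swap_ne_one {V : Type*} [DecidableEq V] {a b : V} (hab : a ≠ b) :
    Equiv.swap a b ≠ 1 := by
  intro h
  have : Equiv.swap a b a = (1 : Equiv.Perm V) a := by rw [h]
  rw [Equiv.swap_apply_left, Equiv.Perm.one_apply] at this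
  exact hab this.symm

/-- For every k ≥ 4 there is a minimal asymmetric k-uniform hypergraph on exactly
k+2 vertices: it is asymmetric and every induced subhypergraph on a vertex set X'
with 1 < |X'| < k+2 is symmetric. -/
theorem stmt_6 (k : ℕ) (hk : 4 ≤ k) :
    ∃ M : Finset (Finset (Fin (k + 2))),
      (∀ E ∈ M, E.card = k) ∧
      (∀ σ : Equiv.Perm (Fin (k + 2)), IsAuto Finset.univ M σ → σ = 1) ∧
      (∀ X' : Finset (Fin (k + 2)), 1 < X'.card → X'.card < k + 2 →
        ∃ σ : Equiv.Perm (Fin (k + 2)),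
          IsAuto X' (M.filter (fun E => E ⊆ X')) σ ∧ σ ≠ 1) := by
  refine ⟨HM k, fun E hE => card_of_mem_HM hE, fun σ hσ => asym hk σ hσ.2, ?_⟩
  intro X' h1 h2
  by_cases hXk : X'.card ≤ k
  · -- small case: the only possible edge inside X' is X' itself
    obtain ⟨a, ha, b, hb, hab⟩ := Finset.one_lt_card.mp h1
    refine ⟨Equiv.swap a b, ⟨?_, ?_⟩, swap_ne_one hab⟩
    · intro v hv
      exact Equiv.swap_apply_of_ne_of_ne (fun hh => hv (hh ▸ ha)) (fun hh => hv (hh ▸ hb))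
    · apply invol_auto _ (fun x => Equiv.swap_apply_self a b x)
      intro E hE
      rw [Finset.mem_filter] at hE ⊢
      obtain ⟨hEM, hEX⟩ := hE
      have hcard : E.card = k := card_of_mem_HM hEM
      have hEX' : E = X' := by
        apply Finset.eq_of_subset_of_card_le hEX
        rw [hcard]
        exact hXk
      have himg : X'.image (Equiv.swap a b) = X' := by
        apply Finset.eq_of_subset_of_card_le
        · intro x hx
          obtain ⟨y, hy, rfl⟩ := Finset.mem_image.mp hx
          rcases eq_or_ne y a with rfl | hya
          · rwa [Equiv.swap_apply_left]
          rcases eq_or_ne y b with rfl | hyb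
          · rwa [Equiv.swap_apply_right]
          · rwa [Equiv.swap_apply_of_ne_of_ne hya hyb]
        · rw [Finset.card_image_of_injective _ (Equiv.swap a b).injective]
      rw [hEX', himg]
      exact ⟨hEX' ▸ hEM, Finset.Subset.refl _⟩
  · -- X' has k+1 elements, it misses exactly one vertex v
    have hXcard : X'.card = k + 1 := by omega
    have hcompl : X'ᶜ.card = 1 := by
      rw [Finset.card_compl, hXcard, Fintype.card_fin]
      omega
    obtain ⟨v, hv⟩ := Finset.card_eq_one.mp hcompl
    have hX'eq : X' = {v}ᶜ := by rw [← hv, compl_compl]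
    have hvX : v ∉ X' := by
      rw [hX'eq]
      simp
    -- split X' by adjacency to v
    set S := X'.filter (fun w => HAdj k v w) with hS
    set T := X'.filter (fun w => ¬ HAdj k v w) with hT
    have hST : S.card + T.card = k + 1 := by
      rw [hS, hT, Finset.card_filter_add_card_filter_not, hXcard]
    -- get two elements with the same adjacency status to v
    obtain ⟨a, ha, b, hb, hab⟩ :
        ∃ a ∈ X', ∃ b ∈ X', a ≠ b ∧ (HAdj k v a ↔ HAdj k v b) := by
      by_cases h2S : 2 ≤ S.card
      · obtain ⟨a, ha, b, hb, hab⟩ := Finset.one_lt_card.mp h2S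
        rw [hS, Finset.mem_filter] at ha hb
        exact ⟨a, ha.1, b, hb.1, hab, by rw [iff_true_intro ha.2, iff_true_intro hb.2]⟩
      · have h2T : 2 ≤ T.card := by omega
        obtain ⟨a, ha, b, hb, hab⟩ := Finset.one_lt_card.mp h2T
        rw [hT, Finset.mem_filter] at ha hb
        exact ⟨a, ha.1, b, hb.1, hab, by rw [iff_false_intro ha.2, iff_false_intro hb.2]⟩
    obtain ⟨hab, hsame⟩ := hab
    have hva : v ≠ a := fun h => hvX (h ▸ ha)
    have hvb : v ≠ b := fun h => hvX (h ▸ hb)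
    have hkey : ∀ w : Fin (k + 2), HAdj k v (Equiv.swap a b w) ↔ HAdj k v w := by
      intro w
      rcases eq_or_ne w a with rfl | hwa
      · rw [Equiv.swap_apply_left]; exact hsame.symm
      rcases eq_or_ne w b with rfl | hwb
      · rw [Equiv.swap_apply_right]; exact hsame
      · rw [Equiv.swap_apply_of_ne_of_ne hwa hwb]
    have hσv : Equiv.swap a b v = v :=
      Equiv.swap_apply_of_ne_of_ne hva hvb
    -- membership characterization of the induced edge set
    have hmem : ∀ E : Finset (Fin (k + 2)),
        E ∈ (HM k).filter (fun E => E ⊆ X') ↔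
          ∃ w, HAdj k v w ∧ E = ({v, w} : Finset (Fin (k + 2)))ᶜ := by
      intro E
      rw [Finset.mem_filter, mem_HM]
      constructor
      · rintro ⟨⟨x, y, hxy, rfl⟩, hsub⟩
        have hvxy : v ∈ ({x, y} : Finset (Fin (k + 2))) := by
          by_contra hvm
          have : v ∈ ({x, y} : Finset (Fin (k + 2)))ᶜ := Finset.mem_compl.mpr hvm
          exact hvX (hsub this)
        simp only [Finset.mem_insert, Finset.mem_singleton] at hvxy
        rcases hvxy with rfl | rfl
        · exact ⟨y, hxy, rfl⟩
        · exact ⟨x, hxy.symm', by rw [Finset.pair_comm]⟩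
      · rintro ⟨w, hw, rfl⟩
        refine ⟨⟨v, w, hw, rfl⟩, ?_⟩
        rw [hX'eq]
        intro x hx
        simp only [Finset.mem_compl, Finset.mem_insert, Finset.mem_singleton] at hx ⊢
        intro hxv
        exact hx (Or.inl hxv)
    refine ⟨Equiv.swap a b, ⟨?_, ?_⟩, swap_ne_one hab⟩
    · intro w hw
      exact Equiv.swap_apply_of_ne_of_ne (fun hh => hw (hh ▸ ha)) (fun hh => hw (hh ▸ hb))
    · apply invol_auto _ (fun x => Equiv.swap_apply_self a b x)
      intro E hE
      obtain ⟨w, hw, rfl⟩ := (hmem E).mp hE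
      rw [hmem]
      refine ⟨Equiv.swap a b w, (hkey w).mpr hw, ?_⟩
      rw [image_pair_compl, hσv]
end

section
/- For every integer k ≥ 3 and every natural number N, there exists a strongly minimal asymmetric k-uniform hypergraph (X, M) with more than N vertices in which every vertex has degree at most 3 (i.e., every vertex belongs to at most 3 edges of M). -/
/-!
The hypergraph is the dual of a set system `𝕃` on the points `0, …, m - 1`: its vertices are the
members of `𝕃`, and the edge of a point `i` consists of the members containing `i`. It is
`k`-uniform when every point lies in exactly `k` members, and its degrees are at most 3 when every
member has at most 3 points. Here `𝕃` consists of the singletons other than `{1}`, the path edges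
`{x, x + 1}` and the triple `{0, 1, m - 1}`, which give every point degree 3, together with
circulant triples `{i, i + d, i + 2d} mod m`, which raise the degree to `k`.

An automorphism of the dual induces a permutation of the points preserving `𝕃`. It preserves the
path, so it is the identity or the reversal, and the reversal maps `{m - 2}` to the non-member
`{1}`. A proper subgraph uses only the edges of a proper nonempty set `A` of points. If a point
`i ≠ 1` of `A` has a neighbour outside `A`, the singleton `{i}` and the path edge from `i` to that
neighbour meet `A` in the same set, and exchanging them is an automorphism of the subgraph.
Otherwise `A` is `{1}`, `{0, 1}` or `{1, …, m - 1}`; in the first two cases two other members with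
the same trace on `A` are exchanged, and in the last the reflection `x ↦ -x mod m` does the job.
-/

open Finset

namespace StronglyMinimalAsymmetric

/-! ### Dual hypergraphs -/

lemma exists_isAuto_empty {V : Type*} [DecidableEq V] {X : Finset V} (hX : 2 ≤ X.card) :
    ∃ σ : Equiv.Perm V, IsAuto X ∅ σ ∧ σ ≠ 1 := by
  obtain ⟨a, ha, b, hb, hab⟩ := one_lt_card.1 hX
  refine ⟨Equiv.swap a b, ⟨fun v hv => ?_, by simp⟩, by simpa [Equiv.swap_eq_one_iff]⟩
  exact Equiv.swap_apply_of_ne_of_ne (by rintro rfl; exact hv ha) (by rintro rfl; exact hv hb)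

def IsRigid (m : ℕ) (𝕃 : Finset (Finset ℕ)) : Prop :=
  ∀ f : ℕ → ℕ, Set.MapsTo f (range m) (range m) → Set.InjOn f (range m) →
    (∀ L ∈ 𝕃, L.image f ∈ 𝕃) → Set.EqOn f id (range m)

/-- On the dual hypergraph, `g` becomes a nontrivial automorphism of the subgraph formed by the
edges of the points of `A`: it sends the edge of `a` to the edge of `π a`, and fixes the vertices
lying in none of these edges. -/
def IsTraceSymmetric (𝕃 : Finset (Finset ℕ)) (A : Finset ℕ) : Prop :=
  ∃ (g : Finset ℕ → Finset ℕ) (π : ℕ → ℕ),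
    (∀ L ∈ 𝕃, g L ∈ 𝕃 ∧ g (g L) = L) ∧ (∃ L ∈ 𝕃, g L ≠ L) ∧
    (∀ a ∈ A, π a ∈ A ∧ π (π a) = a) ∧
    (∀ L ∈ 𝕃, ∀ a ∈ A, π a ∈ g L ↔ a ∈ L) ∧ (∀ L ∈ 𝕃, Disjoint L A → g L = L)

lemma exists_coe_apply_eq {V : Type*} {𝕃 : Finset (Finset ℕ)} (e : V ≃ 𝕃) {L : Finset ℕ}
    (hL : L ∈ 𝕃) : ∃ v, (e v : Finset ℕ) = L :=
  ⟨e.symm ⟨L, hL⟩, by simp⟩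

section Dual

variable {V : Type*} [Fintype V] {𝕃 : Finset (Finset ℕ)} {m : ℕ}

def dualEdge (e : V ≃ 𝕃) (i : ℕ) : Finset V := univ.filter fun v => i ∈ (e v : Finset ℕ)

def dualEdges [DecidableEq V] (e : V ≃ 𝕃) (m : ℕ) : Finset (Finset V) :=
  (range m).image (dualEdge e)

@[simp]
lemma mem_dualEdge {e : V ≃ 𝕃} {i : ℕ} {v : V} :
    v ∈ dualEdge e i ↔ i ∈ (e v : Finset ℕ) := by
  simp [dualEdge]

lemma card_dualEdge (e : V ≃ 𝕃) (i : ℕ) :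
    (dualEdge e i).card = (𝕃.filter (i ∈ ·)).card := by
  refine card_nbij (fun v => (e v : Finset ℕ)) (fun v hv => ?_) (fun v _ w _ h => ?_) ?_
  · simpa using hv
  · exact e.injective (Subtype.ext h)
  · intro L hL
    obtain ⟨hL, hiL⟩ := mem_filter.1 hL
    obtain ⟨v, rfl⟩ := exists_coe_apply_eq e hL
    exact ⟨v, by simpa using hiL, rfl⟩

lemma card_filter_mem_dualEdges_le [DecidableEq V] (e : V ≃ 𝕃) (m : ℕ) (v : V) :
    ((dualEdges e m).filter (v ∈ ·)).card ≤ (e v : Finset ℕ).card :=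
  calc _ ≤ ((e v : Finset ℕ).image (dualEdge e)).card := by
        refine card_le_card fun F hF => ?_
        obtain ⟨hF, hvF⟩ := mem_filter.1 hF
        obtain ⟨i, -, rfl⟩ := mem_image.1 hF
        exact mem_image_of_mem _ (mem_dualEdge.1 hvF)
    _ ≤ _ := card_image_le

lemma dualEdge_injOn (e : V ≃ 𝕃)
    (hsep : ∀ i < m, ∀ j < m, (∀ L ∈ 𝕃, i ∈ L ↔ j ∈ L) → i = j) :
    Set.InjOn (dualEdge e) (range m) := by
  intro i hi j hj hij
  refine hsep i (by simpa using hi) j (by simpa using hj) fun L hL => ?_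
  obtain ⟨v, rfl⟩ := exists_coe_apply_eq e hL
  simpa using congrArg (v ∈ ·) hij

lemma exists_pointMap_of_isAuto [DecidableEq V] (e : V ≃ 𝕃) (hsub : ∀ L ∈ 𝕃, L ⊆ range m)
    (hinj : Set.InjOn (dualEdge e) (range m)) {σ : Equiv.Perm V}
    (hσ : IsAuto univ (dualEdges e m) σ) :
    ∃ f : ℕ → ℕ, Set.MapsTo f (range m) (range m) ∧ Set.InjOn f (range m) ∧
      ∀ v, (e (σ v) : Finset ℕ) = (e v : Finset ℕ).image f := by
  have hedge : ∀ i ∈ range m, ∃ j ∈ range m, dualEdge e j = (dualEdge e i).image σ :=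
    fun i hi => mem_image.1 ((hσ.2 _).1 (mem_image_of_mem _ hi))
  choose! f hfm hf using hedge
  have hfinj : Set.InjOn f (range m) := fun i hi j hj hij =>
    hinj hi hj (image_injective σ.injective (by rw [← hf i hi, ← hf j hj, hij]))
  have hfsurj := surjOn_of_injOn_of_card_le f hfm hfinj le_rfl
  have hmem : ∀ i ∈ range m, ∀ v, f i ∈ (e (σ v) : Finset ℕ) ↔ i ∈ (e v : Finset ℕ) := by
    intro i hi v
    rw [← mem_dualEdge, ← mem_dualEdge, hf i hi, σ.injective.mem_finset_image]
  refine ⟨f, hfm, hfinj, fun v => ext fun j => ⟨fun hj => ?_, fun hj => ?_⟩⟩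
  · obtain ⟨i, hi, rfl⟩ := hfsurj (hsub _ (e (σ v)).2 hj)
    exact mem_image_of_mem f ((hmem i hi v).1 hj)
  · obtain ⟨i, hi, rfl⟩ := mem_image.1 hj
    exact (hmem i (hsub _ (e v).2 hi) v).2 hi

lemma eq_one_of_isAuto_dualEdges [DecidableEq V] (e : V ≃ 𝕃) (hsub : ∀ L ∈ 𝕃, L ⊆ range m)
    (hsep : ∀ i < m, ∀ j < m, (∀ L ∈ 𝕃, i ∈ L ↔ j ∈ L) → i = j) (hrigid : IsRigid m 𝕃)
    {σ : Equiv.Perm V} (hσ : IsAuto univ (dualEdges e m) σ) : σ = 1 := by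
  obtain ⟨f, hfm, hfinj, hf⟩ := exists_pointMap_of_isAuto e hsub (dualEdge_injOn e hsep) hσ
  have hid : Set.EqOn f id (range m) := hrigid f hfm hfinj fun L hL => by
    obtain ⟨v, rfl⟩ := exists_coe_apply_eq e hL
    rw [← hf]
    exact (e (σ v)).2
  ext v
  have hfix : (e (σ v) : Finset ℕ) = e v := by
    rw [hf, image_congr (hid.mono (coe_subset.2 (hsub _ (e v).2))), image_id]
  simpa using e.injective (Subtype.ext hfix)

lemma exists_isAuto_of_isTraceSymmetric [DecidableEq V] (e : V ≃ 𝕃) {A : Finset ℕ}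
    {X : Finset V} (hA : IsTraceSymmetric 𝕃 A)
    (hX : ∀ v ∉ X, Disjoint (e v : Finset ℕ) A) :
    ∃ σ : Equiv.Perm V, IsAuto X (A.image (dualEdge e)) σ ∧ σ ≠ 1 := by
  obtain ⟨g, π, hg, ⟨L₀, hL₀, hgL₀⟩, hπ, htrace, hfix⟩ := hA
  let τ : V → V := fun v => e.symm ⟨g (e v), (hg _ (e v).2).1⟩
  have hτ : ∀ v, (e (τ v) : Finset ℕ) = g (e v) := by simp [τ]
  have hττ : Function.Involutive τ := fun v =>
    e.injective (Subtype.ext (by rw [hτ, hτ, (hg _ (e v).2).2]))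
  have himage : ∀ a ∈ A, (dualEdge e a).image τ = dualEdge e (π a) := by
    intro a ha
    ext w
    have hw := htrace _ (hg _ (e w).2).1 a ha
    rw [(hg _ (e w).2).2] at hw
    rw [mem_dualEdge (i := π a), hw, ← hτ, ← mem_dualEdge]
    conv_lhs => rw [← hττ w]
    exact hττ.injective.mem_finset_image
  refine ⟨hττ.toPerm, ⟨fun v hv => ?_, fun F => ⟨fun hF => ?_, fun hF => ?_⟩⟩, fun h => ?_⟩
  · refine e.injective (Subtype.ext ?_)
    rw [Function.Involutive.coe_toPerm, hτ, hfix _ (e v).2 (hX v hv)]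
  · obtain ⟨a, ha, rfl⟩ := mem_image.1 hF
    exact mem_image.2 ⟨π a, (hπ a ha).1, (himage a ha).symm⟩
  · obtain ⟨b, hb, hbF⟩ := mem_image.1 hF
    have hF' : F = (dualEdge e b).image τ := by
      rw [Function.Involutive.coe_toPerm] at hbF
      rw [hbF, image_image, hττ.comp_self, image_id]
    rw [hF', himage b hb]
    exact mem_image_of_mem _ (hπ b hb).1
  · obtain ⟨v, rfl⟩ := exists_coe_apply_eq e hL₀
    apply hgL₀
    rw [← hτ, show τ v = v from congrFun (congrArg DFunLike.coe h) v]

lemma exists_isAuto_of_subgraph_dualEdges [DecidableEq V] (e : V ≃ 𝕃)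
    (hsub : ∀ L ∈ 𝕃, L ⊆ range m) (hne : ∀ L ∈ 𝕃, L.Nonempty)
    (hsym : ∀ A ⊆ range m, A.Nonempty → A ≠ range m → IsTraceSymmetric 𝕃 A)
    {X : Finset V} {M : Finset (Finset V)} (hM : ∀ E ∈ M, E ∈ dualEdges e m ∧ E ⊆ X)
    (hX : 2 ≤ X.card) (hproper : ¬(X = univ ∧ M = dualEdges e m)) :
    ∃ σ : Equiv.Perm V, IsAuto X M σ ∧ σ ≠ 1 := by
  obtain ⟨A, hAm, rfl⟩ := subset_image_iff.1 fun E hE => (hM E hE).1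
  have hcover : ∀ v, ∀ a ∈ A, a ∈ (e v : Finset ℕ) → v ∈ X := fun v a ha hav =>
    (hM _ (mem_image_of_mem _ ha)).2 (mem_dualEdge.2 hav)
  rcases A.eq_empty_or_nonempty with rfl | hAne
  · simpa using exists_isAuto_empty hX
  by_cases hAall : A = range m
  · subst hAall
    refine (hproper ⟨eq_univ_of_forall fun v => ?_, rfl⟩).elim
    obtain ⟨i, hi⟩ := hne _ (e v).2
    exact hcover v i (hsub _ (e v).2 hi) hi
  refine exists_isAuto_of_isTraceSymmetric e (hsym A hAm hAne hAall) fun v hv => ?_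
  exact disjoint_right.2 fun a ha hav => hv (hcover v a ha hav)

end Dual

/-! ### Circulant triples -/

lemma eq_of_add_mod_eq {m i s t : ℕ} (hs : s < m) (ht : t < m)
    (h : (i + s) % m = (i + t) % m) : s = t :=
  (Nat.ModEq.add_left_cancel' i h).eq_of_lt_of_lt hs ht

lemma ne_add_mod {m i t : ℕ} (hi : i < m) (ht0 : 0 < t) (ht : t < m) : i ≠ (i + t) % m := by
  intro h
  have := eq_of_add_mod_eq (i := i) (s := 0) (by omega) ht (by rwa [add_zero, Nat.mod_eq_of_lt hi])
  omega

lemma eq_add_mod_iff {m i j d : ℕ} (hi : i < m) (hj : j < m) (hd : d ≤ m) :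
    j = (i + d) % m ↔ i = (j + (m - d)) % m := by
  constructor <;> rintro rfl
  · rw [Nat.mod_add_mod, add_assoc, Nat.add_sub_cancel' hd, Nat.add_mod_right,
      Nat.mod_eq_of_lt hi]
  · rw [Nat.mod_add_mod, add_assoc, Nat.sub_add_cancel hd, Nat.add_mod_right,
      Nat.mod_eq_of_lt hj]

def circTriple (m d i : ℕ) : Finset ℕ := {i, (i + d) % m, (i + 2 * d) % m}

section CircTriple

variable {m d i j : ℕ}

lemma mem_circTriple {x : ℕ} :
    x ∈ circTriple m d i ↔ x = i ∨ x = (i + d) % m ∨ x = (i + 2 * d) % m := by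
  simp [circTriple]

lemma circTriple_subset_range (hi : i < m) : circTriple m d i ⊆ range m := by
  intro x hx
  rcases mem_circTriple.1 hx with rfl | rfl | rfl <;> simp [Nat.mod_lt, hi, (show 0 < m by omega)]

lemma card_circTriple (hi : i < m) (hd : 0 < d) (h2d : 2 * d < m) :
    (circTriple m d i).card = 3 := by
  have h12 : (i + d) % m ≠ (i + 2 * d) % m := fun h => by
    have := eq_of_add_mod_eq (by omega) h2d h
    omega
  rw [circTriple, card_eq_three]
  exact ⟨_, _, _, ne_add_mod hi hd (by omega), ne_add_mod hi (by omega) h2d, h12, rfl⟩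

lemma eq_or_eq_of_mem_circTriple {x e : ℕ} (hi : i < m) (hd : 0 < d) (h6 : 6 * d < m)
    (he : 0 < e) (he2 : e + 2 * d < m) (hx : x ∈ circTriple m d i)
    (hxe : (x + e) % m ∈ circTriple m d i) : e = d ∨ e = 2 * d := by
  rw [mem_circTriple] at hx hxe
  rcases hx with rfl | rfl | rfl
  · rcases hxe with h | h | h
    · exact absurd h.symm (ne_add_mod hi he (by omega))
    · exact .inl (eq_of_add_mod_eq (by omega) (by omega) h)
    · exact .inr (eq_of_add_mod_eq (by omega) (by omega) h)
  all_goals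
    rw [Nat.mod_add_mod, add_assoc] at hxe
    rcases hxe with h | h | h
    · exact absurd h.symm (ne_add_mod hi (by omega) (by omega))
    all_goals have := eq_of_add_mod_eq (by omega) (by omega) h; omega

lemma circTriple_injOn (hd : 0 < d) (h6 : 6 * d < m) :
    Set.InjOn (circTriple m d) (range m) := by
  intro i hi i' hi' h
  simp only [coe_range, Set.mem_Iio] at hi hi'
  have hfar : (i + 3 * d) % m ∉ circTriple m d i := fun hmem => by
    have := eq_or_eq_of_mem_circTriple hi hd h6 (by omega) (by omega) (by simp [circTriple]) hmem
    omega
  have hi'i : i' ∈ circTriple m d i := by rw [h]; simp [circTriple]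
  rcases mem_circTriple.1 hi'i with rfl | h1 | h1
  · rfl
  · refine (hfar ?_).elim
    rw [h, mem_circTriple, h1]
    refine .inr (.inr ?_)
    rw [Nat.mod_add_mod]
    ring_nf
  · refine (hfar ?_).elim
    rw [h, mem_circTriple, h1]
    refine .inr (.inl ?_)
    rw [Nat.mod_add_mod]
    ring_nf

lemma circTriple_ne_circTriple {d' i' : ℕ} (hi : i < m) (hi' : i' < m) (hd : 0 < d)
    (hdd' : d < d') (h6 : 6 * d' < m) : circTriple m d i ≠ circTriple m d' i' := by
  intro h
  have h1 := eq_or_eq_of_mem_circTriple (x := i') (e := d') hi hd (by omega) (by omega) (by omega)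
    (by rw [h]; simp [circTriple]) (by rw [h]; simp [circTriple])
  have h2 := eq_or_eq_of_mem_circTriple (x := i) (e := d) hi' (by omega) h6 hd (by omega)
    (by rw [← h]; simp [circTriple]) (by rw [← h]; simp [circTriple])
  omega

lemma filter_mem_circTriple (hj : j < m) (hd : d ≤ m) (h2d : 2 * d ≤ m) :
    (range m).filter (fun i => j ∈ circTriple m d i) =
      {j, (j + (m - d)) % m, (j + (m - 2 * d)) % m} := by
  have hm : 0 < m := by omega
  ext i
  simp only [mem_filter, mem_range, mem_circTriple, mem_insert, mem_singleton]
  constructor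
  · rintro ⟨hi, rfl | h | h⟩
    · exact .inl rfl
    · exact .inr (.inl ((eq_add_mod_iff hi hj hd).1 h))
    · exact .inr (.inr ((eq_add_mod_iff hi hj h2d).1 h))
  · rintro (rfl | rfl | rfl)
    · exact ⟨hj, .inl rfl⟩
    · exact ⟨Nat.mod_lt _ hm, .inr (.inl ((eq_add_mod_iff (Nat.mod_lt _ hm) hj hd).2 rfl))⟩
    · exact ⟨Nat.mod_lt _ hm, .inr (.inr ((eq_add_mod_iff (Nat.mod_lt _ hm) hj h2d).2 rfl))⟩

end CircTriple

def circTriples (m d : ℕ) (S : Finset ℕ) : Finset (Finset ℕ) :=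
  ((range m).filter (· % 3 ∈ S)).image (circTriple m d)

lemma mem_circTriples {m d : ℕ} {S : Finset ℕ} {L : Finset ℕ} :
    L ∈ circTriples m d S ↔ ∃ i < m, i % 3 ∈ S ∧ L = circTriple m d i := by
  simp only [circTriples, mem_image, mem_filter, mem_range]
  exact ⟨fun ⟨i, ⟨hi, hS⟩, h⟩ => ⟨i, hi, hS, h.symm⟩,
    fun ⟨i, hi, hS, h⟩ => ⟨i, ⟨hi, hS⟩, h.symm⟩⟩

/-- For `d ≡ 1 [MOD 3]` the three triples through a point start at points of the three different
residues mod 3, so exactly `S.card` of them are selected. -/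
lemma card_filter_mem_circTriples {m d j : ℕ} {S : Finset ℕ} (hm : 3 ∣ m) (hd : d % 3 = 1)
    (h6 : 6 * d < m) (hS : S ⊆ range 3) (hj : j < m) :
    ((circTriples m d S).filter (j ∈ ·)).card = S.card := by
  rw [circTriples, filter_image, card_image_of_injOn
    ((circTriple_injOn (by omega) h6).mono
      (coe_subset.2 ((filter_subset _ _).trans (filter_subset _ _)))), filter_comm,
    filter_mem_circTriple hj (by omega) (by omega)]
  set w₁ := (j + (m - d)) % m
  set w₂ := (j + (m - 2 * d)) % m
  have h₁ : w₁ % 3 = (j + 2) % 3 := by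
    rw [Nat.mod_mod_of_dvd _ hm]
    omega
  have h₂ : w₂ % 3 = (j + 1) % 3 := by
    rw [Nat.mod_mod_of_dvd _ hm]
    omega
  refine card_nbij (· % 3) (fun x hx => (mem_filter.1 hx).2) ?_ ?_
  · intro x hx y hy hxy
    simp only [coe_filter, mem_insert, mem_singleton, Set.mem_ofPred_eq] at hx hy hxy
    rcases hx.1 with rfl | rfl | rfl <;> rcases hy.1 with rfl | rfl | rfl <;> omega
  · intro t ht
    have ht3 : t < 3 := mem_range.1 (hS ht)
    simp only [coe_filter, mem_insert, mem_singleton, Set.mem_image, Set.mem_ofPred_eq]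
    rcases (show t = j % 3 ∨ t = w₁ % 3 ∨ t = w₂ % 3 by omega) with rfl | rfl | rfl
    · exact ⟨j, ⟨.inl rfl, ht⟩, rfl⟩
    · exact ⟨w₁, ⟨.inr (.inl rfl), ht⟩, rfl⟩
    · exact ⟨w₂, ⟨.inr (.inr rfl), ht⟩, rfl⟩

def reflect (m x : ℕ) : ℕ := (m - x) % m

section Reflect

variable {m : ℕ}

@[simp]
lemma reflect_zero : reflect m 0 = 0 := by simp [reflect]

lemma reflect_of_pos {x : ℕ} (hx : 0 < x) (hxm : x < m) : reflect m x = m - x :=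
  Nat.mod_eq_of_lt (by omega)

lemma reflect_reflect {x : ℕ} (hx : x < m) : reflect m (reflect m x) = x := by
  rcases Nat.eq_zero_or_pos x with rfl | hx0
  · simp
  · rw [reflect_of_pos hx0 hx, reflect_of_pos (by omega) (by omega)]
    omega

lemma reflect_lt {x : ℕ} (hm : 0 < m) : reflect m x < m := Nat.mod_lt _ hm

lemma image_reflect_image_reflect {L : Finset ℕ} (hL : L ⊆ range m) :
    (L.image (reflect m)).image (reflect m) = L := by
  rw [image_image]
  conv_rhs => rw [← image_id (s := L)]
  exact image_congr fun x hx => reflect_reflect (mem_range.1 (hL hx))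

lemma natCast_reflect {x : ℕ} (hx : x ≤ m) : (reflect m x : ZMod m) = -x := by
  rw [reflect, ZMod.natCast_mod, Nat.cast_sub hx, ZMod.natCast_self, zero_sub]

lemma eq_of_natCast_eq {a b : ℕ} (ha : a < m) (hb : b < m) (h : (a : ZMod m) = b) :
    a = b := by
  rwa [ZMod.natCast_eq_natCast_iff', Nat.mod_eq_of_lt ha, Nat.mod_eq_of_lt hb] at h

lemma image_reflect_circTriple {d i : ℕ} (hi : i < m) :
    (circTriple m d i).image (reflect m) = circTriple m d (reflect m ((i + 2 * d) % m)) := by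
  have hm : 0 < m := by omega
  set c := reflect m ((i + 2 * d) % m)
  have hc : (c : ZMod m) = -(i + 2 * d) := by
    rw [natCast_reflect (Nat.mod_lt _ hm).le, ZMod.natCast_mod]
    push_cast
    ring
  have h₀ : reflect m i = (c + 2 * d) % m := by
    refine eq_of_natCast_eq (Nat.mod_lt _ hm) (Nat.mod_lt _ hm) ?_
    rw [natCast_reflect hi.le, ZMod.natCast_mod]
    push_cast
    rw [hc]
    ring
  have h₁ : reflect m ((i + d) % m) = (c + d) % m := by
    refine eq_of_natCast_eq (Nat.mod_lt _ hm) (Nat.mod_lt _ hm) ?_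
    rw [natCast_reflect (Nat.mod_lt _ hm).le, ZMod.natCast_mod, ZMod.natCast_mod]
    push_cast
    rw [hc]
    ring
  rw [circTriple, circTriple, image_insert, image_insert, image_singleton, h₀, h₁]
  ext y
  simp only [mem_insert, mem_singleton]
  tauto

end Reflect

lemma image_reflect_mem_circTriples {m d : ℕ} {S L : Finset ℕ} (hm : 3 ∣ m) (hd : d % 3 = 1)
    (hS : ∀ t ∈ S, (4 - t) % 3 ∈ S) (hL : L ∈ circTriples m d S) :
    L.image (reflect m) ∈ circTriples m d S := by
  obtain ⟨i, hi, hiS, rfl⟩ := mem_circTriples.1 hL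
  have hm0 : 0 < m := by omega
  refine mem_circTriples.2 ⟨_, Nat.mod_lt _ hm0, ?_, image_reflect_circTriple hi⟩
  have hx := Nat.mod_lt (i + 2 * d) hm0
  have hx3 := Nat.mod_mod_of_dvd (i + 2 * d) hm
  -- the reflected triple starts at `-(i + 2 * d) ≡ 4 - i [MOD 3]`
  have : reflect m ((i + 2 * d) % m) % 3 = (4 - i % 3) % 3 := by
    rw [reflect, Nat.mod_mod_of_dvd _ hm]
    omega
  exact this ▸ hS _ hiS

/-! ### The set system -/

def pathEdge (x : ℕ) : Finset ℕ := {x, x + 1}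

def cornerTriple (m : ℕ) : Finset ℕ := {0, 1, m - 1}

def singletons (m : ℕ) : Finset (Finset ℕ) := ((range m).erase 1).image singleton

def pathEdges (m : ℕ) : Finset (Finset ℕ) := (range (m - 1)).image pathEdge

def baseSystem (m : ℕ) : Finset (Finset ℕ) := singletons m ∪ pathEdges m ∪ {cornerTriple m}

section BaseSystem

variable {m j : ℕ}

lemma pathEdge_injective : Function.Injective pathEdge := by
  intro a b h
  have h1 : a ∈ pathEdge b := by rw [← h]; simp [pathEdge]
  have h2 : b ∈ pathEdge a := by rw [h]; simp [pathEdge]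
  simp only [pathEdge, mem_insert, mem_singleton] at h1 h2
  omega

lemma card_pathEdge (x : ℕ) : (pathEdge x).card = 2 := card_pair (by omega)

lemma card_cornerTriple (hm : 3 ≤ m) : (cornerTriple m).card = 3 :=
  card_eq_three.2 ⟨_, _, _, by omega, by omega, by omega, rfl⟩

lemma mem_baseSystem {L : Finset ℕ} :
    L ∈ baseSystem m ↔
      (∃ x < m, x ≠ 1 ∧ L = {x}) ∨ (∃ x, x + 1 < m ∧ L = pathEdge x) ∨ L = cornerTriple m := by
  simp only [baseSystem, singletons, pathEdges, mem_union, mem_image, mem_erase, mem_range,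
    mem_singleton]
  constructor
  · rintro ((⟨x, ⟨hx1, hx⟩, rfl⟩ | ⟨x, hx, rfl⟩) | rfl)
    · exact .inl ⟨x, hx, hx1, rfl⟩
    · exact .inr (.inl ⟨x, by omega, rfl⟩)
    · exact .inr (.inr rfl)
  · rintro (⟨x, hx, hx1, rfl⟩ | ⟨x, hx, rfl⟩ | rfl)
    · exact .inl (.inl ⟨x, ⟨hx1, hx⟩, rfl⟩)
    · exact .inl (.inr ⟨x, by omega, rfl⟩)
    · exact .inr rfl

lemma card_filter_mem_singletons (hj : j < m) :
    ((singletons m).filter (j ∈ ·)).card = if j = 1 then 0 else 1 := by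
  rw [singletons, filter_image, card_image_of_injective _ singleton_injective]
  simp only [mem_singleton, filter_eq, mem_erase, mem_range]
  by_cases h1 : j = 1 <;> simp [h1, hj]

lemma card_filter_mem_pathEdges (hm : 2 ≤ m) (hj : j < m) :
    ((pathEdges m).filter (j ∈ ·)).card = if j = 0 ∨ j = m - 1 then 1 else 2 := by
  rw [pathEdges, filter_image, card_image_of_injective _ pathEdge_injective]
  simp only [pathEdge, mem_insert, mem_singleton]
  by_cases h0 : j = 0
  · rw [if_pos (.inl h0), card_eq_one]
    exact ⟨0, by ext x; simp only [mem_filter, mem_range, mem_singleton]; omega⟩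
  by_cases hlast : j = m - 1
  · rw [if_pos (.inr hlast), card_eq_one]
    exact ⟨m - 2, by ext x; simp only [mem_filter, mem_range, mem_singleton]; omega⟩
  rw [if_neg (by tauto), card_eq_two]
  refine ⟨j - 1, j, by omega, ?_⟩
  ext x
  simp only [mem_filter, mem_range, mem_insert, mem_singleton]
  omega

lemma card_filter_mem_baseSystem (hm : 3 ≤ m) (hj : j < m) :
    ((baseSystem m).filter (j ∈ ·)).card = 3 := by
  have hcard : ∀ {L}, L ∈ singletons m ∪ pathEdges m → L.card ≤ 2 := by
    simp only [singletons, pathEdges, mem_union, mem_image]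
    rintro _ (⟨x, -, rfl⟩ | ⟨x, -, rfl⟩)
    · simp
    · exact (card_pathEdge x).le
  have hdisj₁ : Disjoint (singletons m) (pathEdges m) := by
    simp only [singletons, pathEdges, disjoint_left, mem_image]
    rintro _ ⟨x, -, rfl⟩ ⟨y, -, h⟩
    simpa [card_pathEdge] using congrArg card h
  have hdisj₂ : Disjoint (singletons m ∪ pathEdges m) {cornerTriple m} :=
    disjoint_singleton_right.2 fun h => by
      have := hcard h
      rw [card_cornerTriple hm] at this
      omega
  rw [baseSystem, filter_union, card_union_of_disjoint (disjoint_filter_filter hdisj₂),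
    filter_union, card_union_of_disjoint (disjoint_filter_filter hdisj₁),
    card_filter_mem_singletons hj, card_filter_mem_pathEdges (by omega) hj, filter_singleton]
  simp only [cornerTriple, mem_insert, mem_singleton]
  split_ifs <;> simp only [card_singleton, card_empty] <;> omega

end BaseSystem

/-- All differences are `≡ 1 [MOD 3]`; the family of difference 4 keeps only the triples starting
in a residue class of `S`, so that it is `S.card`-regular. -/
def tripleSystem (m B : ℕ) (S : Finset ℕ) : Finset (Finset ℕ) :=
  circTriples m 4 S ∪ (range B).biUnion fun t => circTriples m (7 + 3 * t) (range 3)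

section TripleSystem

variable {m B : ℕ} {S : Finset ℕ}

lemma exists_eq_circTriple_of_mem_tripleSystem {L : Finset ℕ}
    (hL : L ∈ tripleSystem m B S) :
    ∃ d i, 4 ≤ d ∧ d ≤ 4 + 3 * B ∧ i < m ∧ L = circTriple m d i := by
  simp only [tripleSystem, mem_union, mem_biUnion, mem_range] at hL
  rcases hL with hL | ⟨t, ht, hL⟩
  · obtain ⟨i, hi, -, rfl⟩ := mem_circTriples.1 hL
    exact ⟨4, i, le_rfl, by omega, hi, rfl⟩
  · obtain ⟨i, hi, -, rfl⟩ := mem_circTriples.1 hL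
    exact ⟨7 + 3 * t, i, by omega, by omega, hi, rfl⟩

lemma disjoint_circTriples {d d' : ℕ} {S' : Finset ℕ} (hd : 0 < d) (hdd' : d < d')
    (h6 : 6 * d' < m) : Disjoint (circTriples m d S) (circTriples m d' S') := by
  rw [disjoint_left]
  intro L hL hL'
  obtain ⟨i, hi, -, rfl⟩ := mem_circTriples.1 hL
  obtain ⟨i', hi', -, h⟩ := mem_circTriples.1 hL'
  exact circTriple_ne_circTriple hi hi' hd hdd' h6 h

lemma card_filter_mem_tripleSystem {j : ℕ} (hm3 : 3 ∣ m) (hm : 6 * (4 + 3 * B) < m)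
    (hS : S ⊆ range 3) (hj : j < m) :
    ((tripleSystem m B S).filter (j ∈ ·)).card = S.card + 3 * B := by
  have hdisj : Disjoint (circTriples m 4 S)
      ((range B).biUnion fun t => circTriples m (7 + 3 * t) (range 3)) := by
    refine (disjoint_biUnion_right _ _ _).2 fun t ht => ?_
    have := mem_range.1 ht
    exact disjoint_circTriples (by omega) (by omega) (by omega)
  rw [tripleSystem, filter_union, card_union_of_disjoint (disjoint_filter_filter hdisj),
    card_filter_mem_circTriples hm3 (by omega) (by omega) hS hj, filter_biUnion,
    card_biUnion, sum_congr rfl fun t ht => ?_, sum_const, card_range, smul_eq_mul, mul_comm]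
  · have := mem_range.1 ht
    exact card_filter_mem_circTriples hm3 (by omega) (by omega) subset_rfl hj
  · intro t ht t' ht' htt'
    simp only [coe_range, Set.mem_Iio] at ht ht'
    apply disjoint_filter_filter
    rcases lt_or_gt_of_ne htt' with h | h
    · exact disjoint_circTriples (by omega) (by omega) (by omega)
    · exact (disjoint_circTriples (by omega) (by omega) (by omega)).symm

lemma image_reflect_mem_tripleSystem {L : Finset ℕ} (hm3 : 3 ∣ m)
    (hS : ∀ t ∈ S, (4 - t) % 3 ∈ S) (hL : L ∈ tripleSystem m B S) :
    L.image (reflect m) ∈ tripleSystem m B S := by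
  simp only [tripleSystem, mem_union, mem_biUnion, mem_range] at hL ⊢
  rcases hL with hL | ⟨t, ht, hL⟩
  · exact .inl (image_reflect_mem_circTriples hm3 (by omega) hS hL)
  · refine .inr ⟨t, ht, image_reflect_mem_circTriples hm3 (by omega) (fun t ht => ?_) hL⟩
    simp only [mem_range] at ht ⊢
    omega

end TripleSystem

def residueClasses (r : ℕ) : Finset ℕ := if r = 1 then {2} else if r = 2 then {0, 1} else ∅

lemma residueClasses_subset (r : ℕ) : residueClasses r ⊆ range 3 := by
  unfold residueClasses
  split_ifs <;> decide

lemma card_residueClasses {r : ℕ} (hr : r < 3) : (residueClasses r).card = r := by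
  interval_cases r <;> decide

lemma residueClasses_reflect (r : ℕ) :
    ∀ t ∈ residueClasses r, (4 - t) % 3 ∈ residueClasses r := by
  unfold residueClasses
  split_ifs <;> decide

lemma cornerTriple_ne_circTriple {m d i : ℕ} (hi : i < m) (hd : 2 ≤ d) (h6 : 6 * d < m) :
    cornerTriple m ≠ circTriple m d i := by
  intro h
  have := eq_or_eq_of_mem_circTriple (x := 0) (e := 1) hi (by omega) h6 one_pos (by omega)
    (by rw [← h]; simp [cornerTriple])
    (by rw [← h, Nat.mod_eq_of_lt (by omega)]; simp [cornerTriple])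
  omega

def pointSystem (m B : ℕ) (S : Finset ℕ) : Finset (Finset ℕ) :=
  baseSystem m ∪ tripleSystem m B S

section PointSystem

variable {m B : ℕ} {S : Finset ℕ}

lemma mem_pointSystem_cases (hm : 6 * (4 + 3 * B) < m) {L : Finset ℕ}
    (hL : L ∈ pointSystem m B S) :
    (∃ x < m, x ≠ 1 ∧ L = {x}) ∨ (∃ x, x + 1 < m ∧ L = pathEdge x) ∨
      (L ⊆ range m ∧ L.card = 3) := by
  rcases mem_union.1 hL with hL | hL
  · rcases mem_baseSystem.1 hL with h | h | rfl
    · exact .inl h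
    · exact .inr (.inl h)
    · refine .inr (.inr ⟨fun y hy => ?_, card_cornerTriple (by omega)⟩)
      simp only [cornerTriple, mem_insert, mem_singleton] at hy
      exact mem_range.2 (by omega)
  · obtain ⟨d, i, hd, hdB, hi, rfl⟩ := exists_eq_circTriple_of_mem_tripleSystem hL
    exact .inr (.inr ⟨circTriple_subset_range hi, card_circTriple hi (by omega) (by omega)⟩)

lemma subset_range_of_mem_pointSystem (hm : 6 * (4 + 3 * B) < m) {L : Finset ℕ}
    (hL : L ∈ pointSystem m B S) : L ⊆ range m := by
  rcases mem_pointSystem_cases hm hL with ⟨x, hx, -, rfl⟩ | ⟨x, hx, rfl⟩ | ⟨h, -⟩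
  · simpa using hx
  · intro y hy
    simp only [pathEdge, mem_insert, mem_singleton] at hy
    exact mem_range.2 (by omega)
  · exact h

lemma card_le_three_of_mem_pointSystem (hm : 6 * (4 + 3 * B) < m) {L : Finset ℕ}
    (hL : L ∈ pointSystem m B S) : L.card ≤ 3 := by
  rcases mem_pointSystem_cases hm hL with ⟨x, -, -, rfl⟩ | ⟨x, -, rfl⟩ | ⟨-, h⟩
  · simp
  · simp [card_pathEdge]
  · exact h.le

lemma nonempty_of_mem_pointSystem (hm : 6 * (4 + 3 * B) < m) {L : Finset ℕ}
    (hL : L ∈ pointSystem m B S) : L.Nonempty := by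
  rcases mem_pointSystem_cases hm hL with ⟨x, -, -, rfl⟩ | ⟨x, -, rfl⟩ | ⟨-, h⟩
  · exact singleton_nonempty x
  · exact insert_nonempty _ _
  · exact card_pos.1 (by omega)

lemma singleton_mem_pointSystem_iff (hm : 6 * (4 + 3 * B) < m) {x : ℕ} :
    {x} ∈ pointSystem m B S ↔ x < m ∧ x ≠ 1 := by
  refine ⟨fun h => ?_, fun ⟨hx, hx1⟩ =>
    mem_union_left _ (mem_baseSystem.2 (.inl ⟨x, hx, hx1, rfl⟩))⟩
  rcases mem_pointSystem_cases hm h with ⟨y, hy, hy1, h⟩ | ⟨y, -, h⟩ | ⟨-, h⟩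
  · rw [singleton_inj] at h
    exact h ▸ ⟨hy, hy1⟩
  · simpa [card_pathEdge] using congrArg card h
  · simp at h

lemma pathEdge_mem_pointSystem {x : ℕ} (hx : x + 1 < m) : pathEdge x ∈ pointSystem m B S :=
  mem_union_left _ (mem_baseSystem.2 (.inr (.inl ⟨x, hx, rfl⟩)))

lemma cornerTriple_mem_pointSystem : cornerTriple m ∈ pointSystem m B S :=
  mem_union_left _ (mem_baseSystem.2 (.inr (.inr rfl)))

lemma exists_eq_pathEdge_of_mem_pointSystem (hm : 6 * (4 + 3 * B) < m) {L : Finset ℕ}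
    (hL : L ∈ pointSystem m B S) (h2 : L.card = 2) : ∃ x, x + 1 < m ∧ L = pathEdge x := by
  rcases mem_pointSystem_cases hm hL with ⟨x, -, -, rfl⟩ | h | ⟨-, h⟩
  · simp at h2
  · exact h
  · omega

lemma disjoint_baseSystem_tripleSystem (hm : 6 * (4 + 3 * B) < m) :
    Disjoint (baseSystem m) (tripleSystem m B S) := by
  rw [disjoint_left]
  intro L hL hL'
  obtain ⟨d, i, hd, hdB, hi, rfl⟩ := exists_eq_circTriple_of_mem_tripleSystem hL'
  have hcard := card_circTriple hi (m := m) (d := d) (by omega) (by omega)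
  rcases mem_baseSystem.1 hL with ⟨x, -, -, h⟩ | ⟨x, -, h⟩ | h
  · rw [h, card_singleton] at hcard
    omega
  · rw [h, card_pathEdge] at hcard
    omega
  · exact cornerTriple_ne_circTriple hi (by omega) (by omega) h.symm

lemma card_filter_mem_pointSystem {j : ℕ} (hm3 : 3 ∣ m) (hm : 6 * (4 + 3 * B) < m)
    (hS : S ⊆ range 3) (hj : j < m) :
    ((pointSystem m B S).filter (j ∈ ·)).card = 3 + S.card + 3 * B := by
  rw [pointSystem, filter_union,
    card_union_of_disjoint (disjoint_filter_filter (disjoint_baseSystem_tripleSystem hm)),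
    card_filter_mem_baseSystem (by omega) hj, card_filter_mem_tripleSystem hm3 hm hS hj,
    add_assoc]

lemma pointSystem_separates (hm : 6 * (4 + 3 * B) < m) :
    ∀ i < m, ∀ j < m, (∀ L ∈ pointSystem m B S, i ∈ L ↔ j ∈ L) → i = j := by
  intro i hi j hj h
  by_cases hi1 : i = 1
  · by_cases hj1 : j = 1
    · rw [hi1, hj1]
    · simpa [eq_comm] using
        (h {j} ((singleton_mem_pointSystem_iff hm).2 ⟨hj, hj1⟩)).2 (mem_singleton_self j)
  · simpa [eq_comm] using
      (h {i} ((singleton_mem_pointSystem_iff hm).2 ⟨hi, hi1⟩)).1 (mem_singleton_self i)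

lemma le_card_pointSystem (hm : 2 ≤ m) : m - 1 ≤ (pointSystem m B S).card :=
  calc m - 1 = (singletons m).card := by
        rw [singletons, card_image_of_injective _ singleton_injective,
          card_erase_of_mem (mem_range.2 (by omega)), card_range]
    _ ≤ _ := card_le_card (subset_union_left.trans subset_union_left |>.trans subset_union_left)

end PointSystem

/-! ### Rigidity -/

lemma succ_eq_iff_of_adjacent {m : ℕ} {f : ℕ → ℕ} (hinj : Set.InjOn f (range m))
    (hadj : ∀ x, x + 1 < m → f (x + 1) = f x + 1 ∨ f x = f (x + 1) + 1) :
    ∀ x, x + 1 < m → (f (x + 1) = f x + 1 ↔ f 1 = f 0 + 1) := by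
  intro x
  induction x with
  | zero => simp
  | succ x ih =>
    intro hx
    -- a step back would revisit `f x`
    have hne : f x ≠ f (x + 1 + 1) := fun h => by
      have := hinj (mem_range.2 (by omega)) (mem_range.2 hx) h
      omega
    have := hadj x (by omega)
    have := hadj (x + 1) hx
    rw [← ih (by omega)]
    omega

lemma eqOn_id_or_eqOn_reverse_of_adjacent {m : ℕ} {f : ℕ → ℕ} (hm : 2 ≤ m)
    (hmaps : Set.MapsTo f (range m) (range m)) (hinj : Set.InjOn f (range m))
    (hadj : ∀ x, x + 1 < m → f (x + 1) = f x + 1 ∨ f x = f (x + 1) + 1) :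
    Set.EqOn f id (range m) ∨ Set.EqOn f (fun x => m - 1 - x) (range m) := by
  have hlt : ∀ x < m, f x < m := fun x hx => by simpa using hmaps (mem_range.2 hx)
  have hsame := succ_eq_iff_of_adjacent hinj hadj
  by_cases h01 : f 1 = f 0 + 1
  · have hup : ∀ x < m, f x = f 0 + x := by
      intro x
      induction x with
      | zero => simp
      | succ x ih =>
        intro hx
        have := (hsame x hx).2 h01
        have := ih (by omega)
        omega
    have := hup (m - 1) (by omega)
    have := hlt (m - 1) (by omega)
    refine .inl fun x hx => ?_
    have := hup x (mem_range.1 hx)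
    simp only [id]
    omega
  · have hdown : ∀ x < m, f x + x = f 0 := by
      intro x
      induction x with
      | zero => simp
      | succ x ih =>
        intro hx
        have := (hsame x hx).not.2 h01
        have := hadj x hx
        have := ih (by omega)
        omega
    have := hdown (m - 1) (by omega)
    have := hlt 0 (by omega)
    refine .inr fun x hx => ?_
    have := hdown x (mem_range.1 hx)
    show f x = m - 1 - x
    omega

lemma isRigid_pointSystem {m B : ℕ} {S : Finset ℕ} (hm : 6 * (4 + 3 * B) < m) :
    IsRigid m (pointSystem m B S) := by
  intro f hmaps hinj hpres
  have hadj : ∀ x, x + 1 < m → f (x + 1) = f x + 1 ∨ f x = f (x + 1) + 1 := by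
    intro x hx
    have hfx : f x ≠ f (x + 1) := fun h => by
      have := hinj (mem_range.2 (by omega)) (mem_range.2 hx) h
      omega
    have hmem := hpres _ (pathEdge_mem_pointSystem hx)
    rw [pathEdge, image_insert, image_singleton] at hmem
    obtain ⟨y, -, hy⟩ := exists_eq_pathEdge_of_mem_pointSystem hm hmem (card_pair hfx)
    have h₁ : f x ∈ pathEdge y := hy ▸ mem_insert_self _ _
    have h₂ : f (x + 1) ∈ pathEdge y := hy ▸ mem_insert_of_mem (mem_singleton_self _)
    simp only [pathEdge, mem_insert, mem_singleton] at h₁ h₂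
    omega
  refine (eqOn_id_or_eqOn_reverse_of_adjacent (by omega) hmaps hinj hadj).resolve_right
    fun hrev => ?_
  have hmem := hpres {m - 2} ((singleton_mem_pointSystem_iff hm).2 ⟨by omega, by omega⟩)
  have hf : f (m - 2) = 1 := (hrev (mem_range.2 (by omega))).trans (by simp only; omega)
  rw [image_singleton, hf, singleton_mem_pointSystem_iff hm] at hmem
  exact hmem.2 rfl

/-! ### Symmetric proper subgraphs -/

lemma pair_ne_singleton {α : Type*} [DecidableEq α] {a b c : α} (hab : a ≠ b) :
    ({a, b} : Finset α) ≠ {c} := fun h => by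
  simpa [card_pair hab] using congrArg card h

lemma isTraceSymmetric_swap {𝕃 : Finset (Finset ℕ)} {A P Q : Finset ℕ} (hP : P ∈ 𝕃)
    (hQ : Q ∈ 𝕃) (hPQ : P ≠ Q) (htrace : ∀ a ∈ A, a ∈ P ↔ a ∈ Q) (hmeet : ∃ a ∈ A, a ∈ P) :
    IsTraceSymmetric 𝕃 A := by
  refine ⟨Equiv.swap P Q, id, fun L hL => ⟨?_, Equiv.swap_apply_self _ _ _⟩,
    ⟨P, hP, by simpa using hPQ.symm⟩, fun a ha => ⟨ha, rfl⟩, fun L hL a ha => ?_,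
    fun L hL hdisj => ?_⟩
  · rw [Equiv.swap_apply_def]
    split_ifs <;> assumption
  · rw [id, Equiv.swap_apply_def]
    split_ifs with h₁ h₂
    · exact h₁ ▸ (htrace a ha).symm
    · exact h₂ ▸ htrace a ha
    · rfl
  · obtain ⟨a, ha, haP⟩ := hmeet
    refine Equiv.swap_apply_of_ne_of_ne ?_ ?_ <;> rintro rfl
    · exact disjoint_left.1 hdisj haP ha
    · exact disjoint_left.1 hdisj ((htrace a ha).1 haP) ha

lemma mem_of_forall_neighbour_mem {m i : ℕ} {A : Finset ℕ} (hi : i ∈ A) (hi2 : 2 ≤ i)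
    (hup : ∀ i ∈ A, i ≠ 1 → i + 1 < m → i + 1 ∈ A)
    (hdown : ∀ i ∈ A, i ≠ 1 → 0 < i → i - 1 ∈ A) : ∀ j, 0 < j → j < m → j ∈ A := by
  have habove : ∀ t, i + t < m → i + t ∈ A := by
    intro t
    induction t with
    | zero => exact fun _ => hi
    | succ t ih =>
      intro ht
      exact hup (i + t) (ih (by omega)) (by omega) (by omega)
  have hbelow : ∀ t, t < i → i - t ∈ A := by
    intro t
    induction t with
    | zero => exact fun _ => hi
    | succ t ih =>
      intro ht
      have := hdown _ (ih (by omega)) (by omega) (by omega)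
      rwa [Nat.sub_sub] at this
  intro j hj hjm
  rcases le_or_gt i j with h | h
  · simpa [Nat.add_sub_cancel' h] using habove (j - i) (by omega)
  · simpa [Nat.sub_sub_self h.le] using hbelow (i - j) (by omega)

lemma eq_of_forall_neighbour_mem {m : ℕ} {A : Finset ℕ} (hm : 2 ≤ m) (hA : A ⊆ range m)
    (hne : A.Nonempty) (hAm : A ≠ range m)
    (hup : ∀ i ∈ A, i ≠ 1 → i + 1 < m → i + 1 ∈ A)
    (hdown : ∀ i ∈ A, i ≠ 1 → 0 < i → i - 1 ∈ A) :
    A = {1} ∨ A = {0, 1} ∨ A = (range m).erase 0 := by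
  by_cases hbig : ∃ i ∈ A, 2 ≤ i
  · obtain ⟨i, hi, hi2⟩ := hbig
    have hall := mem_of_forall_neighbour_mem hi hi2 hup hdown
    have h0 : 0 ∉ A := fun h0 => hAm (Subset.antisymm hA fun j hj => by
      rcases Nat.eq_zero_or_pos j with rfl | hj0
      · exact h0
      · exact hall j hj0 (mem_range.1 hj))
    refine .inr (.inr (ext fun j => ⟨fun hj => ?_, fun hj => ?_⟩))
    · exact mem_erase.2 ⟨fun h => h0 (h ▸ hj), hA hj⟩
    · obtain ⟨hj0, hjm⟩ := mem_erase.1 hj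
      exact hall j (Nat.pos_of_ne_zero hj0) (mem_range.1 hjm)
  · push Not at hbig
    have h1 : 1 ∈ A := by
      obtain ⟨a, ha⟩ := hne
      rcases (show a = 0 ∨ a = 1 by have := hbig a ha; omega) with rfl | rfl
      · exact hup 0 ha (by omega) (by omega)
      · exact ha
    by_cases h0 : 0 ∈ A
    · refine .inr (.inl (ext fun j => ⟨fun hj => ?_, fun hj => ?_⟩))
      · have := hbig j hj
        simp only [mem_insert, mem_singleton]
        omega
      · simp only [mem_insert, mem_singleton] at hj
        rcases hj with rfl | rfl <;> assumption
    · refine .inl (ext fun j => ⟨fun hj => ?_, fun hj => ?_⟩)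
      · have := hbig j hj
        rw [mem_singleton]
        rcases (show j = 0 ∨ j = 1 by omega) with rfl | rfl
        · exact (h0 hj).elim
        · rfl
      · exact (mem_singleton.1 hj) ▸ h1

/-- The reflection `x ↦ -x mod m` would send the members `{m - 1}` and `{0, 1}` to the
non-members `{1}` and `{0, m - 1}`; instead these two members, whose traces on `[1, m)` are
reflections of each other, are exchanged. -/
def reflectMember (m : ℕ) (L : Finset ℕ) : Finset ℕ :=
  if L = {m - 1} then {0, 1} else if L = {0, 1} then {m - 1} else L.image (reflect m)

section Reflection

variable {m B : ℕ} {S : Finset ℕ}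

lemma reflectMember_of_ne {L : Finset ℕ} (h₁ : L ≠ {m - 1}) (h₂ : L ≠ {0, 1}) :
    reflectMember m L = L.image (reflect m) := by
  rw [reflectMember, if_neg h₁, if_neg h₂]

lemma image_reflect_mem_pointSystem (hm3 : 3 ∣ m) (hm : 6 * (4 + 3 * B) < m)
    (hS : ∀ t ∈ S, (4 - t) % 3 ∈ S) {L : Finset ℕ} (hL : L ∈ pointSystem m B S)
    (h₁ : L ≠ {m - 1}) (h₂ : L ≠ {0, 1}) : L.image (reflect m) ∈ pointSystem m B S := by
  rcases mem_union.1 hL with hL | hL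
  · rcases mem_baseSystem.1 hL with ⟨x, hx, hx1, rfl⟩ | ⟨x, hx, rfl⟩ | rfl
    · rw [image_singleton, singleton_mem_pointSystem_iff hm]
      refine ⟨reflect_lt (by omega), fun h => h₁ ?_⟩
      rw [← reflect_reflect hx, h, reflect_of_pos one_pos (by omega)]
    · have hx0 : x ≠ 0 := by rintro rfl; exact h₂ rfl
      convert pathEdge_mem_pointSystem (m := m) (B := B) (S := S) (x := m - x - 1) (by omega)
        using 1
      rw [pathEdge, pathEdge, image_insert, image_singleton, reflect_of_pos (by omega) (by omega),
        reflect_of_pos (by omega) hx]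
      ext y
      simp only [mem_insert, mem_singleton]
      omega
    · convert cornerTriple_mem_pointSystem (m := m) (B := B) (S := S) using 1
      rw [cornerTriple, image_insert, image_insert, image_singleton, reflect_zero,
        reflect_of_pos one_pos (by omega), reflect_of_pos (by omega) (by omega)]
      ext y
      simp only [mem_insert, mem_singleton]
      omega
  · exact mem_union_right _ (image_reflect_mem_tripleSystem hm3 hS hL)

lemma reflectMember_mem (hm3 : 3 ∣ m) (hm : 6 * (4 + 3 * B) < m)
    (hS : ∀ t ∈ S, (4 - t) % 3 ∈ S) {L : Finset ℕ} (hL : L ∈ pointSystem m B S) :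
    reflectMember m L ∈ pointSystem m B S := by
  unfold reflectMember
  split_ifs with h₁ h₂
  · exact pathEdge_mem_pointSystem (x := 0) (by omega)
  · exact (singleton_mem_pointSystem_iff hm).2 ⟨by omega, by omega⟩
  · exact image_reflect_mem_pointSystem hm3 hm hS hL h₁ h₂

lemma reflectMember_reflectMember (hm : 6 * (4 + 3 * B) < m) {L : Finset ℕ}
    (hL : L ∈ pointSystem m B S) : reflectMember m (reflectMember m L) = L := by
  have hne : ({0, 1} : Finset ℕ) ≠ {m - 1} := pair_ne_singleton (by omega)
  by_cases h₁ : L = {m - 1}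
  · simp [reflectMember, h₁, hne]
  by_cases h₂ : L = {0, 1}
  · simp [reflectMember, h₂, hne]
  have hsub := subset_range_of_mem_pointSystem hm hL
  have h₁' : L.image (reflect m) ≠ {m - 1} := fun h => by
    have hL1 : L = {1} := by
      rw [← image_reflect_image_reflect hsub, h, image_singleton,
        reflect_of_pos (by omega) (by omega)]
      congr 1
      omega
    exact ((singleton_mem_pointSystem_iff hm).1 (hL1 ▸ hL)).2 rfl
  have h₂' : L.image (reflect m) ≠ {0, 1} := fun h => by
    have hL0 : L = {0, m - 1} := by
      rw [← image_reflect_image_reflect hsub, h, image_insert, image_singleton, reflect_zero,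
        reflect_of_pos one_pos (by omega)]
    obtain ⟨y, -, hy⟩ :=
      exists_eq_pathEdge_of_mem_pointSystem hm hL (by rw [hL0]; exact card_pair (by omega))
    have h0 : 0 ∈ pathEdge y := hy ▸ hL0 ▸ mem_insert_self _ _
    have hm1 : m - 1 ∈ pathEdge y := hy ▸ hL0 ▸ mem_insert_of_mem (mem_singleton_self _)
    simp only [pathEdge, mem_insert, mem_singleton] at h0 hm1
    omega
  rw [reflectMember_of_ne h₁ h₂, reflectMember_of_ne h₁' h₂', image_reflect_image_reflect hsub]

lemma reflect_mem_reflectMember_iff (hm : 6 * (4 + 3 * B) < m) {L : Finset ℕ}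
    (hL : L ∈ pointSystem m B S) {a : ℕ} (ha : 0 < a) (ham : a < m) :
    reflect m a ∈ reflectMember m L ↔ a ∈ L := by
  unfold reflectMember
  split_ifs with h₁ h₂
  · subst h₁
    simp only [reflect_of_pos ha ham, mem_insert, mem_singleton]
    omega
  · subst h₂
    simp only [reflect_of_pos ha ham, mem_insert, mem_singleton]
    omega
  · have hsub := subset_range_of_mem_pointSystem hm hL
    refine ⟨fun h => ?_, mem_image_of_mem _⟩
    obtain ⟨x, hx, hxa⟩ := mem_image.1 h
    rwa [← reflect_reflect (mem_range.1 (hsub hx)), hxa, reflect_reflect ham] at hx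

lemma reflectMember_of_disjoint (hm : 6 * (4 + 3 * B) < m) {L : Finset ℕ}
    (hL : L ∈ pointSystem m B S) (hdisj : Disjoint L ((range m).erase 0)) :
    reflectMember m L = L := by
  have hL0 : L = {0} := by
    refine eq_singleton_iff_nonempty_unique_mem.2
      ⟨nonempty_of_mem_pointSystem hm hL, fun x hx => ?_⟩
    by_contra hx0
    exact disjoint_left.1 hdisj hx
      (mem_erase.2 ⟨hx0, subset_range_of_mem_pointSystem hm hL hx⟩)
  subst hL0
  rw [reflectMember_of_ne (by rw [Ne, singleton_inj]; omega)
    (pair_ne_singleton one_ne_zero.symm).symm,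
    image_singleton, reflect_zero]

lemma isTraceSymmetric_reflect (hm3 : 3 ∣ m) (hm : 6 * (4 + 3 * B) < m)
    (hS : ∀ t ∈ S, (4 - t) % 3 ∈ S) :
    IsTraceSymmetric (pointSystem m B S) ((range m).erase 0) := by
  refine ⟨reflectMember m, reflect m,
    fun L hL => ⟨reflectMember_mem hm3 hm hS hL, reflectMember_reflectMember hm hL⟩,
    ⟨{m - 1}, (singleton_mem_pointSystem_iff hm).2 ⟨by omega, by omega⟩, ?_⟩,
    fun a ha => ?_, fun L hL a ha => ?_, fun L hL => reflectMember_of_disjoint hm hL⟩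
  · rw [reflectMember, if_pos rfl]
    exact pair_ne_singleton (by omega)
  · obtain ⟨ha0, ham⟩ := mem_erase.1 ha
    have ham := mem_range.1 ham
    refine ⟨mem_erase.2 ⟨?_, mem_range.2 (reflect_lt (by omega))⟩, reflect_reflect ham⟩
    rw [reflect_of_pos (Nat.pos_of_ne_zero ha0) ham]
    omega
  · obtain ⟨ha0, ham⟩ := mem_erase.1 ha
    exact reflect_mem_reflectMember_iff hm hL (Nat.pos_of_ne_zero ha0) (mem_range.1 ham)

end Reflection

lemma isTraceSymmetric_singleton_pathEdge {m B : ℕ} {S A : Finset ℕ}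
    (hm : 6 * (4 + 3 * B) < m) {i x : ℕ} (hi : i ∈ A) (hi1 : i ≠ 1) (him : i < m)
    (hx : x + 1 < m) (hix : i ∈ pathEdge x) (htrace : ∀ a ∈ A, a ∈ pathEdge x → a = i) :
    IsTraceSymmetric (pointSystem m B S) A :=
  isTraceSymmetric_swap ((singleton_mem_pointSystem_iff hm).2 ⟨him, hi1⟩)
    (pathEdge_mem_pointSystem hx) (pair_ne_singleton (by omega)).symm
    (fun a ha => ⟨fun h => mem_singleton.1 h ▸ hix, fun h => mem_singleton.2 (htrace a ha h)⟩)
    ⟨i, hi, mem_singleton_self i⟩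

lemma isTraceSymmetric_pointSystem {m B : ℕ} {S : Finset ℕ} (hm3 : 3 ∣ m)
    (hm : 6 * (4 + 3 * B) < m) (hS : ∀ t ∈ S, (4 - t) % 3 ∈ S) :
    ∀ A ⊆ range m, A.Nonempty → A ≠ range m → IsTraceSymmetric (pointSystem m B S) A := by
  intro A hA hne hAm
  have hlt : ∀ i ∈ A, i < m := fun i hi => mem_range.1 (hA hi)
  by_cases hup : ∃ i ∈ A, i ≠ 1 ∧ i + 1 < m ∧ i + 1 ∉ A
  · obtain ⟨i, hi, hi1, him, hiA⟩ := hup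
    refine isTraceSymmetric_singleton_pathEdge hm hi hi1 (hlt i hi) him (by simp [pathEdge])
      fun a ha h => ?_
    simp only [pathEdge, mem_insert, mem_singleton] at h
    exact h.resolve_right (by rintro rfl; exact hiA ha)
  by_cases hdown : ∃ i ∈ A, i ≠ 1 ∧ 0 < i ∧ i - 1 ∉ A
  · obtain ⟨i, hi, hi1, hi0, hiA⟩ := hdown
    have him := hlt i hi
    refine isTraceSymmetric_singleton_pathEdge (x := i - 1) hm hi hi1 him (by omega)
      (by simp only [pathEdge, mem_insert, mem_singleton]; omega) fun a ha h => ?_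
    simp only [pathEdge, mem_insert, mem_singleton] at h
    rcases h with rfl | h
    · exact (hiA ha).elim
    · omega
  push Not at hup hdown
  rcases eq_of_forall_neighbour_mem (by omega) hA hne hAm hup hdown with rfl | rfl | rfl
  · refine isTraceSymmetric_swap (pathEdge_mem_pointSystem (x := 0) (by omega))
      (pathEdge_mem_pointSystem (x := 1) (by omega)) (pathEdge_injective.ne one_ne_zero.symm)
      (fun a ha => ?_) ⟨1, mem_singleton_self 1, by simp [pathEdge]⟩
    rw [mem_singleton.1 ha]
    simp [pathEdge]
  · refine isTraceSymmetric_swap (pathEdge_mem_pointSystem (x := 0) (by omega))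
      cornerTriple_mem_pointSystem (fun h => ?_) (fun a ha => ?_)
      ⟨1, by simp, by simp [pathEdge]⟩
    · have := congrArg card h
      rw [card_pathEdge, card_cornerTriple (by omega)] at this
      omega
    · simp only [mem_insert, mem_singleton] at ha
      simp only [pathEdge, cornerTriple, mem_insert, mem_singleton]
      omega
  · exact isTraceSymmetric_reflect hm3 hm hS

end StronglyMinimalAsymmetric

open StronglyMinimalAsymmetric

/-- For every k ≥ 3 there are arbitrarily large strongly minimal asymmetric
k-uniform hypergraphs in which every vertex has degree at most 3. -/
theorem stmt_9 (k : ℕ) (hk : 3 ≤ k) (N : ℕ) :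
    ∃ (n : ℕ) (M : Finset (Finset (Fin n))),
      N < n ∧ (∀ E ∈ M, E.card = k) ∧
      (∀ v : Fin n, (M.filter (fun E => v ∈ E)).card ≤ 3) ∧
      (∀ σ : Equiv.Perm (Fin n), IsAuto Finset.univ M σ → σ = 1) ∧
      (∀ (X' : Finset (Fin n)) (M' : Finset (Finset (Fin n))),
        (∀ E ∈ M', E ∈ M ∧ E ⊆ X') → 2 ≤ X'.card →
        ¬(X' = Finset.univ ∧ M' = M) →
        ∃ σ : Equiv.Perm (Fin n), IsAuto X' M' σ ∧ σ ≠ 1) := by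
  set m := 3 * (N + 2 * k + 30)
  set B := (k - 3) / 3
  set S := residueClasses ((k - 3) % 3)
  have hm3 : 3 ∣ m := dvd_mul_right 3 _
  have hm : 6 * (4 + 3 * B) < m := by omega
  have hN : N < (pointSystem m B S).card := by
    have := le_card_pointSystem (B := B) (S := S) (m := m) (by omega)
    omega
  let e := (pointSystem m B S).equivFin.symm
  refine ⟨_, dualEdges e m, hN, ?_, ?_, ?_, ?_⟩
  · intro E hE
    obtain ⟨i, hi, rfl⟩ := mem_image.1 hE
    rw [card_dualEdge, card_filter_mem_pointSystem hm3 hm (residueClasses_subset _)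
      (mem_range.1 hi), card_residueClasses (Nat.mod_lt _ (by norm_num))]
    omega
  · exact fun v => (card_filter_mem_dualEdges_le e m v).trans
      (card_le_three_of_mem_pointSystem hm (e v).2)
  · exact fun σ => eq_one_of_isAuto_dualEdges e (fun L => subset_range_of_mem_pointSystem hm)
      (pointSystem_separates hm) (isRigid_pointSystem hm)
  · exact fun X M hM hX hproper => exists_isAuto_of_subgraph_dualEdges e
      (fun L => subset_range_of_mem_pointSystem hm) (fun L => nonempty_of_mem_pointSystem hm)
      (isTraceSymmetric_pointSystem hm3 hm (residueClasses_reflect _)) hM hX hproper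
end

section
/- For every integer k ≥ 6 and every natural number N, there exists a k-uniform hypergraph (X, M) with more than N vertices such that (1) (X, M) is asymmetric, and (2) every k-subgraph (X', M') of (X, M) with at least two vertices and (X', M') ≠ (X, M) has an involution. -/
namespace Asym10

open Finset

variable (m d : ℕ)

def pat (x : ℕ) : Finset ℕ :=
  if x < m then {x}
  else if x < 2*m - 1 then {x - m, x - m + 1}
  else if x < 2*m - 1 + d then Finset.range (x - (2*m - 1) + 3)
  else if x = 2*m - 1 + d then insert 3 (Finset.Ico (d+9) m)
  else if x < 2*m - 1 + 2*d then Finset.Ico (x - (2*m - 1 + d) + 3) m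
  else insert 0 (insert (m-1) (Finset.Icc 4 (d+8)))

def Edge (i : ℕ) : Finset (Fin (2*m+2*d)) :=
  Finset.univ.filter fun v => i ∈ pat m d v.val

def EM : Finset (Finset (Fin (2*m+2*d))) := (Finset.range m).image (Edge m d)

lemma mem_Edge {i : ℕ} {v : Fin (2*m+2*d)} : v ∈ Edge m d i ↔ i ∈ pat m d v.val := by
  simp [Edge]

lemma pat_b1 {x : ℕ} (hx : x < m) : pat m d x = {x} := by
  unfold pat; rw [if_pos hx]

lemma pat_b2 (j : ℕ) (hj : j + 1 < m) : pat m d (m + j) = {j, j+1} := by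
  unfold pat
  rw [if_neg (by omega), if_pos (by omega), show m + j - m = j by omega]

lemma pat_b3 (hm1 : 1 ≤ m) {r : ℕ} (hr : r < d) :
    pat m d (2*m-1+r) = Finset.range (r+3) := by
  unfold pat
  rw [if_neg (by omega), if_neg (by omega), if_pos (by omega)]
  congr 1; omega

lemma pat_b4 (hm1 : 1 ≤ m) (hd1 : 1 ≤ d) :
    pat m d (2*m-1+d) = insert 3 (Finset.Ico (d+9) m) := by
  unfold pat
  rw [if_neg (by omega), if_neg (by omega), if_neg (by omega), if_pos rfl]

lemma pat_b5 (hm1 : 1 ≤ m) {r : ℕ} (h1 : 1 ≤ r) (hr : r < d) :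
    pat m d (2*m-1+d+r) = Finset.Ico (r+3) m := by
  unfold pat
  rw [if_neg (by omega), if_neg (by omega), if_neg (by omega), if_neg (by omega),
    if_pos (by omega)]
  congr 1; omega

lemma pat_b6 (hm1 : 1 ≤ m) (hd1 : 1 ≤ d) :
    pat m d (2*m-1+2*d) = insert 0 (insert (m-1) (Finset.Icc 4 (d+8))) := by
  unfold pat
  rw [if_neg (by omega), if_neg (by omega), if_neg (by omega), if_neg (by omega),
    if_neg (by omega)]

lemma pat_spec (hd : 3 ≤ d) (hm : 3*d+20 ≤ m) (x : ℕ) (hx : x < 2*m+2*d) :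
    (x < m ∧ pat m d x = {x}) ∨
    (∃ j, j+1 < m ∧ x = m + j ∧ pat m d x = {j, j+1}) ∨
    (∃ r, r < d ∧ x = 2*m-1+r ∧ pat m d x = Finset.range (r+3)) ∨
    (x = 2*m-1+d ∧ pat m d x = insert 3 (Finset.Ico (d+9) m)) ∨
    (∃ r, 1 ≤ r ∧ r < d ∧ x = 2*m-1+d+r ∧ pat m d x = Finset.Ico (r+3) m) ∨
    (x = 2*m-1+2*d ∧ pat m d x = insert 0 (insert (m-1) (Finset.Icc 4 (d+8)))) := by
  by_cases h1 : x < m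
  · exact Or.inl ⟨h1, pat_b1 m d h1⟩
  by_cases h2 : x < 2*m-1
  · refine Or.inr (Or.inl ⟨x - m, by omega, by omega, ?_⟩)
    have := pat_b2 m d (x-m) (by omega)
    rwa [show m + (x-m) = x by omega] at this
  by_cases h3 : x < 2*m-1+d
  · refine Or.inr (Or.inr (Or.inl ⟨x - (2*m-1), by omega, by omega, ?_⟩))
    have := pat_b3 m d (by omega) (r := x - (2*m-1)) (by omega)
    rwa [show 2*m-1 + (x - (2*m-1)) = x by omega] at this
  by_cases h4 : x = 2*m-1+d
  · exact Or.inr (Or.inr (Or.inr (Or.inl ⟨h4, by rw [h4]; exact pat_b4 m d (by omega) (by omega)⟩)))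
  by_cases h5 : x < 2*m-1+2*d
  · refine Or.inr (Or.inr (Or.inr (Or.inr (Or.inl ⟨x - (2*m-1+d), by omega, by omega, by omega, ?_⟩))))
    have := pat_b5 m d (by omega) (r := x - (2*m-1+d)) (by omega) (by omega)
    rwa [show 2*m-1+d + (x - (2*m-1+d)) = x by omega] at this
  · have h6 : x = 2*m-1+2*d := by omega
    exact Or.inr (Or.inr (Or.inr (Or.inr (Or.inr ⟨h6, by rw [h6]; exact pat_b6 m d (by omega) (by omega)⟩))))


-- membership characterizations
lemma mem1 {x i : ℕ} (hx : x < m) : i ∈ pat m d x ↔ i = x := by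
  rw [pat_b1 m d hx]; simp

lemma mem2 {x i : ℕ} (h1 : m ≤ x) (h2 : x < 2*m-1) :
    i ∈ pat m d x ↔ (i = x - m ∨ i = x - m + 1) := by
  have := pat_b2 m d (x - m) (by omega)
  rw [show m + (x-m) = x by omega] at this
  rw [this]; simp

lemma mem3 {x i : ℕ} (hm1 : 1 ≤ m) (h1 : 2*m-1 ≤ x) (h2 : x < 2*m-1+d) :
    i ∈ pat m d x ↔ i < x - (2*m-1) + 3 := by
  have := pat_b3 m d hm1 (r := x - (2*m-1)) (by omega)
  rw [show 2*m-1 + (x - (2*m-1)) = x by omega] at this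
  rw [this]; simp

lemma mem4 {i : ℕ} (hm1 : 1 ≤ m) (hd1 : 1 ≤ d) :
    i ∈ pat m d (2*m-1+d) ↔ (i = 3 ∨ (d+9 ≤ i ∧ i < m)) := by
  rw [pat_b4 m d hm1 hd1]; simp [Finset.mem_Ico]

lemma mem5 {x i : ℕ} (hm1 : 1 ≤ m) (h1 : 2*m-1+d < x) (h2 : x < 2*m-1+2*d) :
    i ∈ pat m d x ↔ (x - (2*m-1+d) + 3 ≤ i ∧ i < m) := by
  have := pat_b5 m d hm1 (r := x - (2*m-1+d)) (by omega) (by omega)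
  rw [show 2*m-1+d + (x - (2*m-1+d)) = x by omega] at this
  rw [this]; simp [Finset.mem_Ico]

lemma mem6 {i : ℕ} (hm1 : 1 ≤ m) (hd1 : 1 ≤ d) :
    i ∈ pat m d (2*m-1+2*d) ↔ (i = 0 ∨ i = m-1 ∨ (4 ≤ i ∧ i ≤ d+8)) := by
  rw [pat_b6 m d hm1 hd1]; simp [Finset.mem_Icc]

-- card of shapes
lemma card_shape4 (hm : 3*d+20 ≤ m) :
    (insert 3 (Finset.Ico (d+9) m)).card = m - (d+9) + 1 := by
  rw [Finset.card_insert_of_notMem (by simp [Finset.mem_Ico]), Nat.card_Ico]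

lemma card_shape6 (hd : 3 ≤ d) (hm : 3*d+20 ≤ m) :
    (insert 0 (insert (m-1) (Finset.Icc 4 (d+8)))).card = d + 7 := by
  rw [Finset.card_insert_of_notMem (by simp [Finset.mem_Icc]; omega),
    Finset.card_insert_of_notMem (by simp [Finset.mem_Icc]; omega), Nat.card_Icc]
  omega

-- classification lemmas: card determines the vertex (within range)
lemma L1' (hd : 3 ≤ d) (hm : 3*d+20 ≤ m) {x : ℕ} (hx : x < 2*m+2*d)
    (hc : (pat m d x).card = 1) : x < m ∧ pat m d x = {x} := by
  rcases pat_spec m d hd hm x hx with ⟨h1,e⟩|⟨j,hj,he,e⟩|⟨r,hr,he,e⟩|⟨he,e⟩|⟨r,h1,hr,he,e⟩|⟨he,e⟩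
  · exact ⟨h1, e⟩
  · rw [e, Finset.card_pair (by omega)] at hc; omega
  · rw [e, Finset.card_range] at hc; omega
  · rw [e, card_shape4 m d hm] at hc; omega
  · rw [e, Nat.card_Ico] at hc; omega
  · rw [e, card_shape6 m d hd hm] at hc; omega

lemma L2' (hd : 3 ≤ d) (hm : 3*d+20 ≤ m) {x : ℕ} (hx : x < 2*m+2*d)
    (hc : (pat m d x).card = 2) : ∃ j, j+1 < m ∧ x = m + j ∧ pat m d x = {j, j+1} := by
  rcases pat_spec m d hd hm x hx with ⟨h1,e⟩|⟨j,hj,he,e⟩|⟨r,hr,he,e⟩|⟨he,e⟩|⟨r,h1,hr,he,e⟩|⟨he,e⟩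
  · rw [e, Finset.card_singleton] at hc; omega
  · exact ⟨j, hj, he, e⟩
  · rw [e, Finset.card_range] at hc; omega
  · rw [e, card_shape4 m d hm] at hc; omega
  · rw [e, Nat.card_Ico] at hc; omega
  · rw [e, card_shape6 m d hd hm] at hc; omega

lemma L3' (hd : 3 ≤ d) (hm : 3*d+20 ≤ m) {x r : ℕ} (hx : x < 2*m+2*d) (hr : r < d)
    (hc : (pat m d x).card = r + 3) : x = 2*m-1+r ∧ pat m d x = Finset.range (r+3) := by
  rcases pat_spec m d hd hm x hx with ⟨h1,e⟩|⟨j,hj,he,e⟩|⟨r',hr',he,e⟩|⟨he,e⟩|⟨r',h1,hr',he,e⟩|⟨he,e⟩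
  · rw [e, Finset.card_singleton] at hc; omega
  · rw [e, Finset.card_pair (by omega)] at hc; omega
  · rw [e, Finset.card_range] at hc
    have : r' = r := by omega
    subst this; exact ⟨he, e⟩
  · rw [e, card_shape4 m d hm] at hc; omega
  · rw [e, Nat.card_Ico] at hc; omega
  · rw [e, card_shape6 m d hd hm] at hc; omega

lemma L4' (hd : 3 ≤ d) (hm : 3*d+20 ≤ m) {x : ℕ} (hx : x < 2*m+2*d)
    (hc : (pat m d x).card = m - (d+9) + 1) : x = 2*m-1+d := by
  rcases pat_spec m d hd hm x hx with ⟨h1,e⟩|⟨j,hj,he,e⟩|⟨r',hr',he,e⟩|⟨he,e⟩|⟨r',h1,hr',he,e⟩|⟨he,e⟩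
  · rw [e, Finset.card_singleton] at hc; omega
  · rw [e, Finset.card_pair (by omega)] at hc; omega
  · rw [e, Finset.card_range] at hc; omega
  · exact he
  · rw [e, Nat.card_Ico] at hc; omega
  · rw [e, card_shape6 m d hd hm] at hc; omega

lemma L5' (hd : 3 ≤ d) (hm : 3*d+20 ≤ m) {x r : ℕ} (hx : x < 2*m+2*d)
    (h1 : 1 ≤ r) (hr : r < d)
    (hc : (pat m d x).card = m - (r+3)) : x = 2*m-1+d+r := by
  rcases pat_spec m d hd hm x hx with ⟨g1,e⟩|⟨j,hj,he,e⟩|⟨r',hr',he,e⟩|⟨he,e⟩|⟨r',g1,hr',he,e⟩|⟨he,e⟩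
  · rw [e, Finset.card_singleton] at hc; omega
  · rw [e, Finset.card_pair (by omega)] at hc; omega
  · rw [e, Finset.card_range] at hc; omega
  · rw [e, card_shape4 m d hm] at hc; omega
  · rw [e, Nat.card_Ico] at hc
    have : r' = r := by omega
    subst this; exact he
  · rw [e, card_shape6 m d hd hm] at hc; omega

lemma L6' (hd : 3 ≤ d) (hm : 3*d+20 ≤ m) {x : ℕ} (hx : x < 2*m+2*d)
    (hc : (pat m d x).card = d + 7) : x = 2*m-1+2*d := by
  rcases pat_spec m d hd hm x hx with ⟨h1,e⟩|⟨j,hj,he,e⟩|⟨r',hr',he,e⟩|⟨he,e⟩|⟨r',h1,hr',he,e⟩|⟨he,e⟩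
  · rw [e, Finset.card_singleton] at hc; omega
  · rw [e, Finset.card_pair (by omega)] at hc; omega
  · rw [e, Finset.card_range] at hc; omega
  · rw [e, card_shape4 m d hm] at hc; omega
  · rw [e, Nat.card_Ico] at hc; omega
  · exact he

lemma pat_inj (hd : 3 ≤ d) (hm : 3*d+20 ≤ m) {x y : ℕ} (hx : x < 2*m+2*d)
    (hy : y < 2*m+2*d) (h : pat m d x = pat m d y) : x = y := by
  have hcy : (pat m d y).card = (pat m d x).card := by rw [h]
  rcases pat_spec m d hd hm x hx with ⟨h1,e⟩|⟨j,hj,he,e⟩|⟨r,hr,he,e⟩|⟨he,e⟩|⟨r,h1,hr,he,e⟩|⟨he,e⟩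
  · rw [e, Finset.card_singleton] at hcy
    obtain ⟨hy1, ey⟩ := L1' m d hd hm hy hcy
    rw [e, ey] at h
    simpa using h
  · rw [e, Finset.card_pair (by omega)] at hcy
    obtain ⟨j', hj', hey, ey⟩ := L2' m d hd hm hy hcy
    rw [e, ey] at h
    have m1 : j ∈ ({j', j'+1} : Finset ℕ) := by rw [← h]; simp
    have m2 : j' ∈ ({j, j+1} : Finset ℕ) := by rw [h]; simp
    simp at m1 m2
    omega
  · rw [e, Finset.card_range] at hcy
    have := (L3' m d hd hm hy hr hcy).1
    omega
  · rw [e, card_shape4 m d hm] at hcy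
    have := L4' m d hd hm hy hcy
    omega
  · rw [e, Nat.card_Ico] at hcy
    have := L5' m d hd hm hy h1 hr hcy
    omega
  · rw [e, card_shape6 m d hd hm] at hcy
    have := L6' m d hd hm hy hcy
    omega

lemma pat_sub (hd : 3 ≤ d) (hm : 3*d+20 ≤ m) {x : ℕ} (hx : x < 2*m+2*d) :
    ∀ i ∈ pat m d x, i < m := by
  rcases pat_spec m d hd hm x hx with ⟨h1,e⟩|⟨j,hj,he,e⟩|⟨r,hr,he,e⟩|⟨he,e⟩|⟨r,h1,hr,he,e⟩|⟨he,e⟩ <;>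
    rw [e] <;> intro i hi <;> simp [Finset.mem_Ico, Finset.mem_Icc, Finset.mem_range] at hi <;> omega

lemma pat_nonempty (hd : 3 ≤ d) (hm : 3*d+20 ≤ m) {x : ℕ} (hx : x < 2*m+2*d) :
    ∃ i, i < m ∧ i ∈ pat m d x := by
  rcases pat_spec m d hd hm x hx with ⟨h1,e⟩|⟨j,hj,he,e⟩|⟨r,hr,he,e⟩|⟨he,e⟩|⟨r,h1,hr,he,e⟩|⟨he,e⟩
  · exact ⟨x, h1, by rw [e]; simp⟩
  · exact ⟨j, by omega, by rw [e]; simp⟩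
  · exact ⟨0, by omega, by rw [e]; simp⟩
  · exact ⟨3, by omega, by rw [e]; simp⟩
  · exact ⟨r+3, by omega, by rw [e]; simp [Finset.mem_Ico]; omega⟩
  · exact ⟨0, by omega, by rw [e]; simp⟩


lemma card_filter_split (p : ℕ → Prop) [DecidablePred p] (a b c : ℕ) (hab : a ≤ b) (hbc : b ≤ c) :
    ((Finset.Ico a c).filter p).card
      = ((Finset.Ico a b).filter p).card + ((Finset.Ico b c).filter p).card := by
  rw [← Finset.Ico_union_Ico_eq_Ico hab hbc, Finset.filter_union,
    Finset.card_union_of_disjoint]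
  exact Finset.disjoint_filter_filter (Finset.Ico_disjoint_Ico_consecutive a b c)

lemma card_Edge (hd : 3 ≤ d) (hm : 3*d+20 ≤ m) {i : ℕ} (hi : i < m) :
    (Edge m d i).card = d + 3 := by
  have him : ((Finset.range (2*m+2*d)).filter (fun x => i ∈ pat m d x))
      = (Edge m d i).image Fin.val := by
    ext x
    simp only [Finset.mem_filter, Finset.mem_range, Finset.mem_image, Edge,
      Finset.mem_univ, true_and]
    constructor
    · rintro ⟨hx, hp⟩; exact ⟨⟨x, hx⟩, hp, rfl⟩
    · rintro ⟨⟨y, hy⟩, hp, rfl⟩; exact ⟨hy, hp⟩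
  have hcard : (Edge m d i).card
      = ((Finset.range (2*m+2*d)).filter (fun x => i ∈ pat m d x)).card := by
    rw [him, Finset.card_image_of_injective _ Fin.val_injective]
  -- piece 1
  have c1 : ((Finset.Ico 0 m).filter (fun x => i ∈ pat m d x)).card = 1 := by
    have e : ((Finset.Ico 0 m).filter (fun x => i ∈ pat m d x)) = {i} := by
      ext x
      simp only [Finset.mem_filter, Finset.mem_Ico, Finset.mem_singleton]
      constructor
      · rintro ⟨⟨_, hx⟩, hp⟩
        rw [mem1 m d hx] at hp; omega
      · rintro rfl
        exact ⟨⟨Nat.zero_le _, hi⟩, by rw [mem1 m d hi]⟩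
    rw [e, Finset.card_singleton]
  -- piece 2
  have c2 : ((Finset.Ico m (2*m-1)).filter (fun x => i ∈ pat m d x)).card
      = 2 - (if i = 0 then 1 else 0) - (if i + 1 = m then 1 else 0) := by
    by_cases hi0 : i = 0
    · subst hi0
      have e : ((Finset.Ico m (2*m-1)).filter (fun x => 0 ∈ pat m d x)) = {m} := by
        ext x
        simp only [Finset.mem_filter, Finset.mem_Ico, Finset.mem_singleton]
        constructor
        · rintro ⟨⟨h1, h2⟩, hp⟩
          rw [mem2 m d h1 h2] at hp; omega
        · intro hx
          refine ⟨⟨by omega, by omega⟩, ?_⟩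
          rw [mem2 m d (by omega) (by omega)]; omega
      rw [e, Finset.card_singleton, if_pos rfl, if_neg (by omega)]
    by_cases him1 : i + 1 = m
    · have e : ((Finset.Ico m (2*m-1)).filter (fun x => i ∈ pat m d x)) = {2*m-2} := by
        ext x
        simp only [Finset.mem_filter, Finset.mem_Ico, Finset.mem_singleton]
        constructor
        · rintro ⟨⟨h1, h2⟩, hp⟩
          rw [mem2 m d h1 h2] at hp; omega
        · rintro rfl
          refine ⟨⟨by omega, by omega⟩, ?_⟩
          rw [mem2 m d (by omega) (by omega)]; omega
      rw [e, Finset.card_singleton, if_neg hi0, if_pos him1]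
    · have e : ((Finset.Ico m (2*m-1)).filter (fun x => i ∈ pat m d x))
          = {m+i-1, m+i} := by
        ext x
        simp only [Finset.mem_filter, Finset.mem_Ico, Finset.mem_insert,
          Finset.mem_singleton]
        constructor
        · rintro ⟨⟨h1, h2⟩, hp⟩
          rw [mem2 m d h1 h2] at hp; omega
        · rintro (rfl | rfl)
          · refine ⟨⟨by omega, by omega⟩, ?_⟩
            rw [mem2 m d (by omega) (by omega)]; omega
          · refine ⟨⟨by omega, by omega⟩, ?_⟩
            rw [mem2 m d (by omega) (by omega)]; omega
      rw [e, Finset.card_insert_of_notMem (by simp; omega), Finset.card_singleton,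
        if_neg hi0, if_neg him1]
  -- piece 3
  have c3 : ((Finset.Ico (2*m-1) (2*m-1+d)).filter (fun x => i ∈ pat m d x)).card
      = d - (i-2) := by
    have e : ((Finset.Ico (2*m-1) (2*m-1+d)).filter (fun x => i ∈ pat m d x))
        = Finset.Ico (2*m-1 + (i-2)) (2*m-1+d) := by
      ext x
      simp only [Finset.mem_filter, Finset.mem_Ico]
      constructor
      · rintro ⟨⟨h1, h2⟩, hp⟩
        rw [mem3 m d (by omega) h1 h2] at hp; omega
      · intro hx
        refine ⟨⟨by omega, by omega⟩, ?_⟩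
        rw [mem3 m d (by omega) (by omega) (by omega)]; omega
    rw [e, Nat.card_Ico]; omega
  -- piece 4
  have c4 : ((Finset.Ico (2*m-1+d) (2*m+d)).filter (fun x => i ∈ pat m d x)).card
      = (if i = 3 ∨ d+9 ≤ i then 1 else 0) := by
    rw [show (2*m+d) = (2*m-1+d)+1 by omega, Nat.Ico_succ_singleton,
      Finset.filter_singleton]
    by_cases hc : i ∈ pat m d (2*m-1+d)
    · rw [if_pos hc, Finset.card_singleton]
      rw [mem4 m d (by omega) (by omega)] at hc
      rw [if_pos (by omega)]
    · rw [if_neg hc, Finset.card_empty]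
      rw [mem4 m d (by omega) (by omega)] at hc
      rw [if_neg (by omega)]
  -- piece 5
  have c5 : ((Finset.Ico (2*m+d) (2*m-1+2*d)).filter (fun x => i ∈ pat m d x)).card
      = min d (i-2) - 1 := by
    have e : ((Finset.Ico (2*m+d) (2*m-1+2*d)).filter (fun x => i ∈ pat m d x))
        = Finset.Ico (2*m+d) (2*m-1+d + min d (i-2)) := by
      ext x
      simp only [Finset.mem_filter, Finset.mem_Ico]
      constructor
      · rintro ⟨⟨h1, h2⟩, hp⟩
        rw [mem5 m d (by omega) (by omega) h2] at hp; omega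
      · intro hx
        refine ⟨⟨by omega, by omega⟩, ?_⟩
        rw [mem5 m d (by omega) (by omega) (by omega)]; omega
    rw [e, Nat.card_Ico]; omega
  -- piece 6
  have c6 : ((Finset.Ico (2*m-1+2*d) (2*m+2*d)).filter (fun x => i ∈ pat m d x)).card
      = (if i = 0 ∨ i = m-1 ∨ (4 ≤ i ∧ i ≤ d+8) then 1 else 0) := by
    rw [show (2*m+2*d) = (2*m-1+2*d)+1 by omega, Nat.Ico_succ_singleton,
      Finset.filter_singleton]
    by_cases hc : i ∈ pat m d (2*m-1+2*d)
    · rw [if_pos hc, Finset.card_singleton]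
      rw [mem6 m d (by omega) (by omega)] at hc
      rw [if_pos hc]
    · rw [if_neg hc, Finset.card_empty]
      rw [mem6 m d (by omega) (by omega)] at hc
      rw [if_neg hc]
  rw [hcard, Finset.range_eq_Ico,
    card_filter_split _ 0 m (2*m+2*d) (by omega) (by omega),
    card_filter_split _ m (2*m-1) (2*m+2*d) (by omega) (by omega),
    card_filter_split _ (2*m-1) (2*m-1+d) (2*m+2*d) (by omega) (by omega),
    card_filter_split _ (2*m-1+d) (2*m+d) (2*m+2*d) (by omega) (by omega),
    card_filter_split _ (2*m+d) (2*m-1+2*d) (2*m+2*d) (by omega) (by omega),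
    c1, c2, c3, c4, c5, c6]
  split_ifs <;> omega


lemma asym (hd : 3 ≤ d) (hm : 3*d+20 ≤ m) (σ : Equiv.Perm (Fin (2*m+2*d)))
    (h : ∀ E, E ∈ EM m d ↔ E.image σ ∈ EM m d) : σ = 1 := by
  classical
  have hn : ∀ i, i < m → i < 2*m+2*d := by omega
  have hEdge_mem : ∀ i, i < m → Edge m d i ∈ EM m d := fun i hi =>
    Finset.mem_image_of_mem _ (Finset.mem_range.mpr hi)
  have hex : ∀ i, i < m → ∃ j, j < m ∧ (Edge m d i).image σ = Edge m d j := by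
    intro i hi
    have := (h _).mp (hEdge_mem i hi)
    obtain ⟨j, hj, hje⟩ := Finset.mem_image.mp this
    exact ⟨j, Finset.mem_range.mp hj, hje.symm⟩
  set π : ℕ → ℕ := fun i => if hi : i < m then (hex i hi).choose else i with hπdef
  have hπ : ∀ i, i < m → π i < m ∧ (Edge m d i).image σ = Edge m d (π i) := by
    intro i hi
    simp only [hπdef, dif_pos hi]
    exact ⟨(hex i hi).choose_spec.1, (hex i hi).choose_spec.2⟩
  have hEdge_inj : ∀ i j, i < m → j < m → Edge m d i = Edge m d j → i = j := by
    intro i j hi hj he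
    have hv : (⟨i, hn i hi⟩ : Fin (2*m+2*d)) ∈ Edge m d i := by
      rw [mem_Edge]; exact (mem1 m d hi).mpr rfl
    rw [he, mem_Edge] at hv
    exact ((mem1 m d hi).mp hv).symm
  have hmemiff : ∀ (v : Fin (2*m+2*d)) i, i < m →
      (i ∈ pat m d v.val ↔ π i ∈ pat m d (σ v).val) := by
    intro v i hi
    rw [← mem_Edge, ← mem_Edge, ← (hπ i hi).2]
    constructor
    · exact fun hv => Finset.mem_image_of_mem _ hv
    · intro hv
      obtain ⟨u, hu, he⟩ := Finset.mem_image.mp hv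
      rwa [← σ.injective he]
  have hπinj : ∀ i j, i < m → j < m → π i = π j → i = j := by
    intro i j hi hj he
    apply hEdge_inj i j hi hj
    apply Finset.image_injective σ.injective
    rw [(hπ i hi).2, (hπ j hj).2, he]
  have hπsurj : ∀ j, j < m → ∃ i, i < m ∧ π i = j := by
    have himg : (Finset.range m).image π = Finset.range m := by
      apply Finset.eq_of_subset_of_card_le
      · intro x hx
        obtain ⟨i, hi, rfl⟩ := Finset.mem_image.mp hx
        exact Finset.mem_range.mpr (hπ i (Finset.mem_range.mp hi)).1
      · rw [Finset.card_image_of_injOn (fun a ha b hb hab =>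
          hπinj a b (Finset.mem_range.mp ha) (Finset.mem_range.mp hb) hab)]
    intro j hj
    have : j ∈ (Finset.range m).image π := by
      rw [himg]; exact Finset.mem_range.mpr hj
    obtain ⟨i, hi, he⟩ := Finset.mem_image.mp this
    exact ⟨i, Finset.mem_range.mp hi, he⟩
  have hpat_img : ∀ v : Fin (2*m+2*d), pat m d (σ v).val = (pat m d v.val).image π := by
    intro v
    apply subset_antisymm
    · intro jj hjj
      have hjm : jj < m := pat_sub m d hd hm (σ v).isLt jj hjj
      obtain ⟨i, hi, rfl⟩ := hπsurj jj hjm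
      exact Finset.mem_image_of_mem _ ((hmemiff v i hi).mpr hjj)
    · intro jj hjj
      obtain ⟨i, hi, rfl⟩ := Finset.mem_image.mp hjj
      exact (hmemiff v i (pat_sub m d hd hm v.isLt i hi)).mp hi
  have hπinjOn : ∀ (s : Finset ℕ), (∀ x ∈ s, x < m) → (s.image π).card = s.card := by
    intro s hs
    exact Finset.card_image_of_injOn (fun a ha b hb hab => hπinj a b (hs a ha) (hs b hb) hab)
  have hpre : ∀ r, r < d → (Finset.range (r+3)).image π = Finset.range (r+3) := by
    intro r hr
    have hv : (2*m-1+r) < 2*m+2*d := by omega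
    have h1 : pat m d ((⟨2*m-1+r, hv⟩ : Fin (2*m+2*d)) : Fin (2*m+2*d)).val
        = Finset.range (r+3) := pat_b3 m d (by omega) hr
    have h2 : pat m d ((σ ⟨2*m-1+r, hv⟩).val) = (Finset.range (r+3)).image π := by
      rw [hpat_img ⟨2*m-1+r, hv⟩, h1]
    have h3 : (pat m d ((σ ⟨2*m-1+r, hv⟩).val)).card = r + 3 := by
      rw [h2, hπinjOn _ (fun x hx => by simp at hx; omega), Finset.card_range]
    have h4 := (L3' m d hd hm (σ ⟨2*m-1+r, hv⟩).isLt hr h3).2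
    rw [h2] at h4
    exact h4
  have hfix_mid : ∀ j, 3 ≤ j → j ≤ d+1 → π j = j := by
    intro j h3 hj
    have h1 : π j ∈ Finset.range (j+1) := by
      have hjmem : j ∈ Finset.range ((j-2)+3) := by simp; omega
      have := Finset.mem_image_of_mem π hjmem
      rw [hpre (j-2) (by omega)] at this
      simp at this ⊢
      omega
    by_contra hne
    have h2 : π j ∈ Finset.range j := by simp at h1 ⊢; omega
    rw [show Finset.range j = Finset.range ((j-3)+3) by congr 1; omega,
      ← hpre (j-3) (by omega)] at h2
    obtain ⟨i, hi, he⟩ := Finset.mem_image.mp h2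
    simp at hi
    have := hπinj i j (by omega) (by omega) he
    omega
  have hpair : ∀ j, j + 1 < m → (π (j+1) = π j + 1 ∨ π j = π (j+1) + 1) := by
    intro j hj
    have hv : m + j < 2*m+2*d := by omega
    have h1 : pat m d ((⟨m+j, hv⟩ : Fin (2*m+2*d)) : Fin (2*m+2*d)).val = {j, j+1} :=
      pat_b2 m d j hj
    have hne : π j ≠ π (j+1) := fun he => by
      have := hπinj _ _ (by omega) (by omega) he; omega
    have h2 : pat m d ((σ ⟨m+j, hv⟩).val) = {π j, π (j+1)} := by
      rw [hpat_img ⟨m+j, hv⟩, h1, Finset.image_insert, Finset.image_singleton]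
    have hcard : (pat m d ((σ ⟨m+j, hv⟩).val)).card = 2 := by
      rw [h2, Finset.card_pair hne]
    obtain ⟨t, ht, hte, e⟩ := L2' m d hd hm (σ ⟨m+j, hv⟩).isLt hcard
    rw [h2] at e
    have m1 : π j ∈ ({t, t+1} : Finset ℕ) := by rw [← e]; simp
    have m2 : π (j+1) ∈ ({t, t+1} : Finset ℕ) := by rw [← e]; simp
    simp at m1 m2
    omega
  have hfix : ∀ j, 3 ≤ j → j < m → π j = j := by
    intro j
    induction j using Nat.strong_induction_on with
    | _ j ih =>
      intro h3 hjm
      by_cases hj : j ≤ d + 1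
      · exact hfix_mid j h3 hj
      · have e1 : π (j-1) = j-1 := ih (j-1) (by omega) (by omega) (by omega)
        have e2 : π (j-2) = j-2 := ih (j-2) (by omega) (by omega) (by omega)
        have hp := hpair (j-1) (by omega)
        rw [e1, show j-1+1 = j by omega] at hp
        rcases hp with h1 | h1
        · omega
        · exfalso
          have he : π j = π (j-2) := by omega
          have := hπinj j (j-2) hjm (by omega) he
          omega
  have hfix2 : π 2 = 2 := by
    have hp := hpair 2 (by omega)
    rw [hfix 3 (by omega) (by omega)] at hp
    rcases hp with h1 | h1
    · omega
    · exfalso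
      have he : π 2 = π 4 := by rw [hfix 4 (by omega) (by omega)]; omega
      have := hπinj 2 4 (by omega) (by omega) he
      omega
  have hfix1 : π 1 = 1 := by
    have hp := hpair 1 (by omega)
    rw [hfix2] at hp
    rcases hp with h1 | h1
    · omega
    · exfalso
      have he : π 1 = π 3 := by rw [hfix 3 (by omega) (by omega)]; omega
      have := hπinj 1 3 (by omega) (by omega) he
      omega
  have hfix0 : π 0 = 0 := by
    have hp := hpair 0 (by omega)
    rw [hfix1] at hp
    rcases hp with h1 | h1
    · omega
    · exfalso
      have he : π 0 = π 2 := by rw [hfix2]; omega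
      have := hπinj 0 2 (by omega) (by omega) he
      omega
  have hfixall : ∀ i, i < m → π i = i := by
    intro i hi
    by_cases h3 : 3 ≤ i
    · exact hfix i h3 hi
    · interval_cases i
      · exact hfix0
      · exact hfix1
      · exact hfix2
  apply Equiv.ext
  intro v
  have hp : pat m d (σ v).val = pat m d v.val := by
    rw [hpat_img v]
    have e : Finset.image π (pat m d v.val) = Finset.image id (pat m d v.val) :=
      Finset.image_congr (fun x hx => hfixall x (pat_sub m d hd hm v.isLt x hx))
    rw [e, Finset.image_id]
  have := pat_inj m d hd hm (σ v).isLt v.isLt hp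
  exact Fin.ext this


lemma image_swap_eq {α : Type*} [DecidableEq α] {u w : α} {E : Finset α}
    (h : u ∈ E ↔ w ∈ E) : E.image (Equiv.swap u w) = E := by
  refine Finset.eq_of_subset_of_card_le (Finset.image_subset_iff.mpr ?_)
    (le_of_eq (Finset.card_image_of_injective _ (Equiv.injective _)).symm)
  intro x hx
  rcases eq_or_ne x u with rfl | hxu
  · rw [Equiv.swap_apply_left]; exact h.mp hx
  rcases eq_or_ne x w with rfl | hxw
  · rw [Equiv.swap_apply_right]; exact h.mpr hx
  · rwa [Equiv.swap_apply_of_ne_of_ne hxu hxw]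

lemma image_swap_swap {α : Type*} [DecidableEq α] (u w : α) (E : Finset α) :
    (E.image (Equiv.swap u w)).image (Equiv.swap u w) = E := by
  rw [Finset.image_image]
  have e : Finset.image (Equiv.swap u w ∘ Equiv.swap u w) E = Finset.image id E :=
    Finset.image_congr (fun x _ => by simp)
  rw [e, Finset.image_id]

lemma swap_ne_one {α : Type*} [DecidableEq α] {u w : α} (h : u ≠ w) :
    Equiv.swap u w ≠ 1 := by
  intro he
  have : Equiv.swap u w u = u := by rw [he]; rfl
  rw [Equiv.swap_apply_left] at this
  exact h this.symm

lemma crossing (P : ℕ → Prop) {a b : ℕ} (ham : a < m) (ha : P a) (hbm : b < m)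
    (hb : ¬ P b) : ∃ j, j + 1 < m ∧ ¬(P j ↔ P (j+1)) := by
  by_contra hno
  push_neg at hno
  have key : ∀ x, x < m → (P x ↔ P 0) := by
    intro x
    induction x with
    | zero => exact fun _ => Iff.rfl
    | succ t ih =>
      intro hx
      rw [← hno t hx]
      exact ih (by omega)
  rw [key a ham] at ha
  rw [key b hbm] at hb
  exact hb ha

lemma swap_works (X' : Finset (Fin (2*m+2*d))) (M' : Finset (Finset (Fin (2*m+2*d))))
    (hM' : ∀ E ∈ M', E ∈ EM m d ∧ E ⊆ X')
    (u w : Fin (2*m+2*d)) (huw : u ≠ w)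
    (hmem : ∀ i, i < m → Edge m d i ∈ M' → (u ∈ Edge m d i ↔ w ∈ Edge m d i))
    (hc : ∃ i, i < m ∧ Edge m d i ∈ M' ∧ u ∈ Edge m d i) :
    ∃ σ : Equiv.Perm (Fin (2*m+2*d)), IsAuto X' M' σ ∧ σ ≠ 1 ∧ σ * σ = 1 := by
  obtain ⟨c, hcm, hcM, hu⟩ := hc
  have huX : u ∈ X' := (hM' _ hcM).2 hu
  have hwX : w ∈ X' := (hM' _ hcM).2 ((hmem c hcm hcM).mp hu)
  have hkey : ∀ E ∈ M', E.image (Equiv.swap u w) = E := by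
    intro E hE
    obtain ⟨i, hi, rfl⟩ := Finset.mem_image.mp (hM' E hE).1
    exact image_swap_eq (hmem i (Finset.mem_range.mp hi) hE)
  refine ⟨Equiv.swap u w, ⟨?_, ?_⟩, swap_ne_one huw, Equiv.swap_mul_self u w⟩
  · intro v hv
    exact Equiv.swap_apply_of_ne_of_ne (fun he => hv (he ▸ huX)) (fun he => hv (he ▸ hwX))
  · intro E
    constructor
    · intro hE
      rw [hkey E hE]; exact hE
    · intro hE
      have := hkey _ hE
      rw [image_swap_swap] at this
      rw [this]; exact hE

lemma subgraph_inv (hd : 3 ≤ d) (hm : 3*d+20 ≤ m)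
    (X' : Finset (Fin (2*m+2*d))) (M' : Finset (Finset (Fin (2*m+2*d))))
    (hM' : ∀ E ∈ M', E ∈ EM m d ∧ E ⊆ X') (hX2 : 2 ≤ X'.card)
    (hne : ¬(X' = Finset.univ ∧ M' = EM m d)) :
    ∃ σ : Equiv.Perm (Fin (2*m+2*d)), IsAuto X' M' σ ∧ σ ≠ 1 ∧ σ * σ = 1 := by
  classical
  by_cases hE : M' = ∅
  · obtain ⟨a, ha, b, hb, hab⟩ := Finset.one_lt_card.mp (by omega : 1 < X'.card)
    refine ⟨Equiv.swap a b, ⟨?_, ?_⟩, swap_ne_one hab, Equiv.swap_mul_self a b⟩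
    · intro v hv
      exact Equiv.swap_apply_of_ne_of_ne (fun he => hv (he ▸ ha)) (fun he => hv (he ▸ hb))
    · intro E; simp [hE]
  · obtain ⟨E0, hE0⟩ := Finset.nonempty_iff_ne_empty.mpr hE
    obtain ⟨a, ham, haM⟩ : ∃ i, i < m ∧ Edge m d i ∈ M' := by
      obtain ⟨i, hi, rfl⟩ := Finset.mem_image.mp (hM' E0 hE0).1
      exact ⟨i, Finset.mem_range.mp hi, hE0⟩
    obtain ⟨b, hbm, hbM⟩ : ∃ i, i < m ∧ Edge m d i ∉ M' := by
      by_contra hall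
      push_neg at hall
      apply hne
      constructor
      · apply Finset.eq_univ_of_forall
        intro v
        obtain ⟨i, him, hiv⟩ := pat_nonempty m d hd hm v.isLt
        exact (hM' _ (hall i him)).2 ((mem_Edge m d).mpr hiv)
      · apply subset_antisymm (fun E hE => (hM' E hE).1)
        intro E hEM
        obtain ⟨i, hi, rfl⟩ := Finset.mem_image.mp hEM
        exact hall i (Finset.mem_range.mp hi)
    obtain ⟨j, hj1, hcr⟩ := crossing m (fun i => Edge m d i ∈ M') ham haM hbm hbM
    have hmj : m + j < 2*m+2*d := by omega
    have hup : (⟨m+j, hmj⟩ : Fin (2*m+2*d)) ∈ Edge m d j ∧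
        (⟨m+j, hmj⟩ : Fin (2*m+2*d)) ∈ Edge m d (j+1) := by
      constructor <;> (rw [mem_Edge]; rw [pat_b2 m d j hj1]; simp)
    by_cases hcase : Edge m d (j+1) ∈ M'
    · -- Edge j ∉ M'
      have hjout : Edge m d j ∉ M' := fun hin => hcr ⟨fun _ => hcase, fun _ => hin⟩
      have hj1n : j + 1 < 2*m+2*d := by omega
      refine swap_works m d X' M' hM' ⟨m+j, hmj⟩ ⟨j+1, hj1n⟩ (by
        intro he
        have := congrArg Fin.val he
        simp at this
        omega) ?_ ⟨j+1, hj1, hcase, hup.2⟩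
      intro i hi hiM
      have hij : i ≠ j := fun he => hjout (he ▸ hiM)
      rw [mem_Edge, mem_Edge, pat_b2 m d j hj1, pat_b1 m d (by omega : (j+1:ℕ) < m)]
      simp
      omega
    · -- Edge j ∈ M'
      have hjin : Edge m d j ∈ M' := by
        by_contra hout
        exact hcr ⟨fun hin => absurd hin hout, fun hin => absurd hin hcase⟩
      have hjn : j < 2*m+2*d := by omega
      refine swap_works m d X' M' hM' ⟨m+j, hmj⟩ ⟨j, hjn⟩ (by
        intro he
        have := congrArg Fin.val he
        simp at this
        omega) ?_ ⟨j, by omega, hjin, hup.1⟩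
      intro i hi hiM
      have hij : i ≠ j + 1 := fun he => hcase (he ▸ hiM)
      rw [mem_Edge, mem_Edge, pat_b2 m d j hj1, pat_b1 m d (by omega : j < m)]
      simp
      omega

end Asym10

/-- For every k ≥ 6 there are arbitrarily large asymmetric k-uniform hypergraphs
all of whose proper k-subgraphs with at least two vertices have an involution. -/
theorem stmt_10 (k : ℕ) (hk : 6 ≤ k) (N : ℕ) :
    ∃ (n : ℕ) (M : Finset (Finset (Fin n))),
      N < n ∧ (∀ E ∈ M, E.card = k) ∧
      (∀ σ : Equiv.Perm (Fin n), IsAuto Finset.univ M σ → σ = 1) ∧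
      (∀ (X' : Finset (Fin n)) (M' : Finset (Finset (Fin n))),
        (∀ E ∈ M', E ∈ M ∧ E ⊆ X') → 2 ≤ X'.card →
        ¬(X' = Finset.univ ∧ M' = M) →
        ∃ σ : Equiv.Perm (Fin n), IsAuto X' M' σ ∧ σ ≠ 1 ∧ σ * σ = 1) := by
  set d := k - 3 with hdd
  set m := N + 3*d + 20 with hmd
  have hd : 3 ≤ d := by omega
  have hm : 3*d + 20 ≤ m := by omega
  refine ⟨2*m+2*d, Asym10.EM m d, by omega, ?_, ?_, ?_⟩
  · intro E hE
    obtain ⟨i, hi, rfl⟩ := Finset.mem_image.mp hE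
    rw [Asym10.card_Edge m d hd hm (Finset.mem_range.mp hi)]
    omega
  · intro σ hσ
    exact Asym10.asym m d hd hm σ hσ.2
  · intro X' M' hM' hX2 hne
    exact Asym10.subgraph_inv m d hd hm X' M' hM' hX2 hne
end

section
/- For every integer k ≥ 3, the k-graph G_k is symmetric, and its unique non-identical automorphism φ is the reflection given by φ(v_i) = v_{2k−i} for every i ∈ {1, ..., 2k−1}. -/
/-- The vertex set of the k-graph `G_k`: vertices `v_1, …, v_{2k-1}` modeled as the
naturals `1, …, 2k-1`. -/
def GkVerts (k : ℕ) : Finset ℕ := Finset.Icc 1 (2 * k - 1)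

/-- The edge set of the k-graph `G_k`: edges `M_i = {v_i, …, v_{i+k-1}}` for
`i ∈ {1, …, k}`. -/
def GkEdges (k : ℕ) : Finset (Finset ℕ) :=
  (Finset.Icc 1 k).image (fun i => Finset.Icc i (i + k - 1))

/-- The vertex set of `G*_k`: that of `G_k` together with the new vertex `x = 2k`. -/
def GstarVerts (k : ℕ) : Finset ℕ := insert (2 * k) (GkVerts k)

/-- The edge set of `G*_k`: that of `G_k` together with the new edge
`{x, v_1, …, v_{k-2}, v_{k+2}}`. -/
def GstarEdges (k : ℕ) : Finset (Finset ℕ) :=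
  insert (insert (2 * k) (insert (k + 2) (Finset.Icc 1 (k - 2)))) (GkEdges k)

/-- The reflection map. -/
def gr (k : ℕ) : ℕ → ℕ := fun n => if 1 ≤ n ∧ n ≤ 2 * k - 1 then 2 * k - n else n

lemma gr_invol (k : ℕ) (hk : 3 ≤ k) : Function.Involutive (gr k) := by
  intro n
  unfold gr
  split_ifs <;> omega

lemma mem_GkEdges (k : ℕ) {E : Finset ℕ} :
    E ∈ GkEdges k ↔ ∃ i, 1 ≤ i ∧ i ≤ k ∧ E = Finset.Icc i (i + k - 1) := by
  simp only [GkEdges, Finset.mem_image, Finset.mem_Icc]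
  constructor
  · rintro ⟨i, ⟨h1, h2⟩, rfl⟩; exact ⟨i, h1, h2, rfl⟩
  · rintro ⟨i, h1, h2, rfl⟩; exact ⟨i, ⟨h1, h2⟩, rfl⟩

lemma image_gr_Icc (k : ℕ) (hk : 3 ≤ k) (i : ℕ) (hi : 1 ≤ i) (hik : i ≤ k) :
    (Finset.Icc i (i + k - 1)).image (gr k) = Finset.Icc (k + 1 - i) (2 * k - i) := by
  ext n
  simp only [Finset.mem_image, Finset.mem_Icc, gr]
  constructor
  · rintro ⟨m, ⟨hm1, hm2⟩, rfl⟩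
    rw [if_pos (by omega)]
    omega
  · intro hn
    refine ⟨2 * k - n, by omega, ?_⟩
    rw [if_pos (by omega)]
    omega

/-- For k ≥ 3, the k-graph G_k is symmetric, and its unique non-identical
automorphism is the reflection v_i ↦ v_{2k−i}. -/
theorem stmt_11 (k : ℕ) (hk : 3 ≤ k) :
    (∃ σ : Equiv.Perm ℕ, IsAuto (GkVerts k) (GkEdges k) σ ∧ σ ≠ 1) ∧
    (∀ σ : Equiv.Perm ℕ, IsAuto (GkVerts k) (GkEdges k) σ → σ ≠ 1 →
      ∀ i ∈ GkVerts k, σ i = 2 * k - i) := by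
  constructor
  · -- existence
    refine ⟨Function.Involutive.toPerm (gr k) (gr_invol k hk), ⟨?_, ?_⟩, ?_⟩
    · intro v hv
      simp only [GkVerts, Finset.mem_Icc, not_and, not_le] at hv
      show gr k v = v
      unfold gr
      rw [if_neg (by omega)]
    · -- edges preserved
      have fwd : ∀ E : Finset ℕ, E ∈ GkEdges k →
          E.image (Function.Involutive.toPerm (gr k) (gr_invol k hk)) ∈ GkEdges k := by
        intro E hE
        rw [mem_GkEdges] at hE
        obtain ⟨i, h1, h2, rfl⟩ := hE
        have : (Finset.Icc i (i + k - 1)).image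
            (Function.Involutive.toPerm (gr k) (gr_invol k hk))
            = (Finset.Icc i (i + k - 1)).image (gr k) := rfl
        rw [this, image_gr_Icc k hk i h1 h2, mem_GkEdges]
        refine ⟨k + 1 - i, by omega, by omega, ?_⟩
        congr 1
        omega
      intro E
      constructor
      · exact fwd E
      · intro h
        have h2 := fwd _ h
        rwa [Finset.image_image, show ((Function.Involutive.toPerm (gr k) (gr_invol k hk)) ∘
            (Function.Involutive.toPerm (gr k) (gr_invol k hk)) : ℕ → ℕ) = id from
            funext (gr_invol k hk), Finset.image_id] at h2
    · intro h
      have h1 : (Function.Involutive.toPerm (gr k) (gr_invol k hk)) 1 = 1 := by rw [h]; rfl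
      have : gr k 1 = 1 := h1
      unfold gr at this
      rw [if_pos (by omega)] at this
      omega
  · -- uniqueness
    intro σ hauto hne i hi
    -- σ maps verts to verts
    have hX : ∀ v ∈ GkVerts k, σ v ∈ GkVerts k := by
      intro v hv
      by_contra hc
      have h1 := hauto.1 _ hc
      have h2 := σ.injective h1
      exact hc (by rw [h2]; exact hv)
    -- edge image is a bijection on edges
    have himg : (GkEdges k).image (fun E => E.image σ) = GkEdges k := by
      apply Finset.eq_of_subset_of_card_le
      · intro E hE
        rw [Finset.mem_image] at hE
        obtain ⟨E', hE', rfl⟩ := hE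
        exact (hauto.2 E').mp hE'
      · rw [Finset.card_image_of_injective _ (Finset.image_injective σ.injective)]
    -- degree function
    set d : ℕ → ℕ := fun w => ((GkEdges k).filter (fun E => w ∈ E)).card with hd
    have hdeg_inv : ∀ v, d (σ v) = d v := by
      intro v
      simp only [hd]
      conv_lhs => rw [← himg]
      rw [Finset.filter_image]
      rw [Finset.card_image_of_injOn ((Finset.image_injective σ.injective).injOn)]
      congr 1
      apply Finset.filter_congr
      intro E _
      simp only [Finset.mem_image]
      constructor
      · rintro ⟨a, ha, hav⟩
        rwa [← σ.injective hav]
      · intro hv; exact ⟨v, hv, rfl⟩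
    have hdeg : ∀ v ∈ GkVerts k, d v = min v (2 * k - v) := by
      intro v hv
      simp only [GkVerts, Finset.mem_Icc] at hv
      simp only [hd, GkEdges, Finset.filter_image]
      rw [Finset.card_image_of_injOn]
      · have : (Finset.Icc 1 k).filter (fun i => v ∈ Finset.Icc i (i + k - 1))
            = Finset.Icc (max 1 (v + 1 - k)) (min k v) := by
          ext j
          simp only [Finset.mem_filter, Finset.mem_Icc]
          omega
        rw [this, Nat.card_Icc]
        omega
      · intro a ha b hb hab
        simp only [Finset.coe_Icc, Set.mem_Icc, Finset.mem_coe, Finset.mem_Icc] at ha hb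
        simp only at hab
        have h1 : a ∈ Finset.Icc b (b + k - 1) := by
          rw [← hab]; exact Finset.mem_Icc.mpr (by omega)
        have h2 : b ∈ Finset.Icc a (a + k - 1) := by
          rw [hab]; exact Finset.mem_Icc.mpr (by omega)
        simp only [Finset.mem_Icc] at h1 h2
        omega
    have hopt : ∀ v ∈ GkVerts k, σ v = v ∨ σ v = 2 * k - v := by
      intro v hv
      have h1 := hdeg_inv v
      rw [hdeg v hv, hdeg _ (hX v hv)] at h1
      have h2 : σ v ∈ GkVerts k := hX v hv
      simp only [GkVerts, Finset.mem_Icc] at h2 hv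
      omega
    -- the only edge containing 1 is Icc 1 k; only edge containing 2k-1 is Icc k (2k-1)
    have hone : ∀ E ∈ GkEdges k, (1 : ℕ) ∈ E → E = Finset.Icc 1 k := by
      intro E hE h1
      rw [mem_GkEdges] at hE
      obtain ⟨j, hj1, hj2, rfl⟩ := hE
      rw [Finset.mem_Icc] at h1
      have : j = 1 := by omega
      subst this
      congr 1
      omega
    have htop : ∀ E ∈ GkEdges k, (2 * k - 1 : ℕ) ∈ E → E = Finset.Icc k (2 * k - 1) := by
      intro E hE h1
      rw [mem_GkEdges] at hE
      obtain ⟨j, hj1, hj2, rfl⟩ := hE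
      rw [Finset.mem_Icc] at h1
      have : j = k := by omega
      subst this
      congr 1
      omega
    have hM1 : Finset.Icc 1 k ∈ GkEdges k := by
      rw [mem_GkEdges]
      exact ⟨1, le_refl 1, hk.trans' (by omega), by congr 1; omega⟩
    have hM1img : (Finset.Icc 1 k).image σ ∈ GkEdges k := (hauto.2 _).mp hM1
    have hσ1mem : σ 1 ∈ (Finset.Icc 1 k).image σ :=
      Finset.mem_image_of_mem σ (Finset.mem_Icc.mpr (by omega))
    have h1opt : σ 1 = 1 ∨ σ 1 = 2 * k - 1 := by
      have := hopt 1 (by simp [GkVerts, Finset.mem_Icc]; omega)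
      omega
    rcases h1opt with h1 | h1
    · -- σ 1 = 1 : σ is the identity, contradiction
      exfalso
      have himgM1 : (Finset.Icc 1 k).image σ = Finset.Icc 1 k := by
        apply hone _ hM1img
        rwa [h1] at hσ1mem
      have hlow : ∀ v ∈ Finset.Icc 1 k, σ v = v := by
        intro v hv
        have h2 : σ v ∈ Finset.Icc 1 k := himgM1 ▸ Finset.mem_image_of_mem σ hv
        rw [Finset.mem_Icc] at hv h2
        have h3 := hopt v (by rw [GkVerts, Finset.mem_Icc]; omega)
        omega
      have hall : ∀ n, σ n = n := by
        intro n
        by_cases hn : n ∈ GkVerts k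
        · rcases hopt n hn with h | h
          · exact h
          · by_cases hnk : n ≤ k
            · exact hlow n (by rw [Finset.mem_Icc]; rw [GkVerts, Finset.mem_Icc] at hn; omega)
            · rw [GkVerts, Finset.mem_Icc] at hn
              have h4 : σ (2 * k - n) = 2 * k - n := hlow _ (Finset.mem_Icc.mpr (by omega))
              rw [← h] at h4
              have := σ.injective h4
              omega
        · exact hauto.1 _ hn
      exact hne (Equiv.ext hall)
    · -- σ 1 = 2k - 1 : σ is the reflection
      have himgM1 : (Finset.Icc 1 k).image σ = Finset.Icc k (2 * k - 1) := by
        apply htop _ hM1img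
        rwa [h1] at hσ1mem
      have hlow : ∀ v ∈ Finset.Icc 1 k, σ v = 2 * k - v := by
        intro v hv
        have h2 : σ v ∈ Finset.Icc k (2 * k - 1) := himgM1 ▸ Finset.mem_image_of_mem σ hv
        rw [Finset.mem_Icc] at hv h2
        have h3 := hopt v (by rw [GkVerts, Finset.mem_Icc]; omega)
        omega
      rw [GkVerts, Finset.mem_Icc] at hi
      by_cases hik : i ≤ k
      · exact hlow i (Finset.mem_Icc.mpr ⟨hi.1, hik⟩)
      · rcases hopt i (by rw [GkVerts, Finset.mem_Icc]; omega) with h | h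
        · exfalso
          have h4 : σ (2 * k - i) = 2 * k - (2 * k - i) := hlow _ (Finset.mem_Icc.mpr (by omega))
          have h5 : σ (2 * k - i) = i := by omega
          rw [← h] at h5
          have := σ.injective h5
          omega
        · exact h
end

section
/- For every integer k ≥ 3, the only automorphism φ of the k-graph G_k satisfying {φ(v_{2k−2}), φ(v_{2k−1})} = {v_{2k−2}, v_{2k−1}} is the identity. -/
/-- For k ≥ 3, the only automorphism of G_k leaving the set {v_{2k−2}, v_{2k−1}}
invariant is the identity. -/
theorem stmt_12 (k : ℕ) (hk : 3 ≤ k) (σ : Equiv.Perm ℕ)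
    (hauto : IsAuto (GkVerts k) (GkEdges k) σ)
    (hfix : ({2 * k - 2, 2 * k - 1} : Finset ℕ).image σ = {2 * k - 2, 2 * k - 1}) :
    σ = 1 := by
  obtain ⟨hout, hpres⟩ := hauto
  set M : ℕ → Finset ℕ := fun i => Finset.Icc i (i + k - 1) with hM
  have hmem : ∀ i, 1 ≤ i → i ≤ k → M i ∈ GkEdges k := by
    intro i h1 h2
    simp only [GkEdges, Finset.mem_image, Finset.mem_Icc]
    exact ⟨i, ⟨h1, h2⟩, rfl⟩
  have hform : ∀ E ∈ GkEdges k, ∃ j, 1 ≤ j ∧ j ≤ k ∧ E = M j := by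
    intro E hE
    simp only [GkEdges, Finset.mem_image, Finset.mem_Icc] at hE
    obtain ⟨j, ⟨h1, h2⟩, he⟩ := hE
    exact ⟨j, h1, h2, he.symm⟩
  -- σ maps M k to M k
  have hMk : (M k).image σ = M k := by
    obtain ⟨j, hj1, hj2, hje⟩ := hform _ ((hpres (M k)).mp (hmem k (by omega) le_rfl))
    have h1 : (2 * k - 1) ∈ ({2 * k - 2, 2 * k - 1} : Finset ℕ) := by simp
    rw [← hfix] at h1
    obtain ⟨a, ha, hae⟩ := Finset.mem_image.mp h1
    simp only [Finset.mem_insert, Finset.mem_singleton] at ha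
    have haM : a ∈ M k := by
      simp only [hM, Finset.mem_Icc]; omega
    have h2 : (2 * k - 1) ∈ (M k).image σ := hae ▸ Finset.mem_image_of_mem σ haM
    rw [hje] at h2
    simp only [hM, Finset.mem_Icc] at h2
    have : j = k := by omega
    rw [hje, this]
  -- σ maps every edge M i to itself
  have himg : ∀ i, 1 ≤ i → i ≤ k → (M i).image σ = M i := by
    intro i h1 h2
    obtain ⟨j, hj1, hj2, hje⟩ := hform _ ((hpres (M i)).mp (hmem i h1 h2))
    suffices hij : j = i by rw [hje, hij]
    have hint : ((M i ∩ M k).image σ) = M j ∩ M k := by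
      rw [Finset.image_inter _ _ σ.injective, hje, hMk]
    have hcard : (M i ∩ M k).card = (M j ∩ M k).card := by
      rw [← hint, Finset.card_image_of_injective _ σ.injective]
    have hIcc : ∀ a, 1 ≤ a → a ≤ k →
        M a ∩ M k = Finset.Icc (max a k) (min (a + k - 1) (k + k - 1)) := by
      intro a _ _
      ext x
      simp only [hM, Finset.mem_inter, Finset.mem_Icc]
      omega
    rw [hIcc i h1 h2, hIcc j hj1 hj2, Nat.card_Icc, Nat.card_Icc] at hcard
    omega
  -- every vertex in range is fixed
  have hfixv : ∀ v, 1 ≤ v → v ≤ 2 * k - 1 → σ v = v := by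
    intro v hv1 hv2
    set w := σ v with hw
    have hmemiff : ∀ i, 1 ≤ i → i ≤ k →
        ((i ≤ v ∧ v ≤ i + k - 1) ↔ (i ≤ w ∧ w ≤ i + k - 1)) := by
      intro i h1 h2
      constructor
      · intro hvi
        have hvm : v ∈ M i := by simp only [hM, Finset.mem_Icc]; exact hvi
        have : w ∈ (M i).image σ := Finset.mem_image_of_mem σ hvm
        rw [himg i h1 h2] at this
        simpa only [hM, Finset.mem_Icc] using this
      · intro hwi
        have : w ∈ (M i).image σ := by
          rw [himg i h1 h2]; simp only [hM, Finset.mem_Icc]; exact hwi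
        obtain ⟨a, ha, hae⟩ := Finset.mem_image.mp this
        have : a = v := σ.injective hae
        rw [this] at ha
        simpa only [hM, Finset.mem_Icc] using ha
    have hwb : 1 ≤ w ∧ w ≤ 2 * k - 1 := by
      rcases le_or_gt v k with h | h
      · have := (hmemiff 1 le_rfl (by omega)).mp (by omega); omega
      · have := (hmemiff k (by omega) le_rfl).mp (by omega); omega
    have A := hmemiff (min v k) (by omega) (by omega)
    have B := hmemiff (min w k) (by omega) (by omega)
    have C := hmemiff (max 1 (v - k)) (le_max_left _ _) (by omega)
    have D := hmemiff (max 1 (w - k)) (le_max_left _ _) (by omega)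
    omega
  apply Equiv.ext
  intro v
  simp only [Equiv.Perm.one_apply]
  by_cases hv : v ∈ GkVerts k
  · simp only [GkVerts, Finset.mem_Icc] at hv
    exact hfixv v hv.1 hv.2
  · exact hout v hv
end

section
/- For every integer k ≥ 4, the k-graph G*_k is asymmetric, i.e., its only automorphism is the identity. -/
/-- The edge `M_i` of `G_k`. -/
def myMi (k i : ℕ) : Finset ℕ := Finset.Icc i (i + k - 1)

/-- The extra edge of `G*_k`. -/
def myEs (k : ℕ) : Finset ℕ := insert (2*k) (insert (k+2) (Finset.Icc 1 (k-2)))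

lemma mem_myMi {k i v : ℕ} : v ∈ myMi k i ↔ i ≤ v ∧ v ≤ i + k - 1 := Finset.mem_Icc

lemma mem_myEs {k v : ℕ} : v ∈ myEs k ↔ v = 2*k ∨ v = k+2 ∨ (1 ≤ v ∧ v ≤ k-2) := by
  simp [myEs, Finset.mem_insert, Finset.mem_Icc]

lemma myMi_card {k i : ℕ} (hk : 1 ≤ k) : (myMi k i).card = k := by
  simp only [myMi, Nat.card_Icc]
  omega

lemma mem_edges {k : ℕ} (E : Finset ℕ) :
    E ∈ GstarEdges k ↔ E = myEs k ∨ ∃ i, (1 ≤ i ∧ i ≤ k) ∧ E = myMi k i := by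
  unfold GstarEdges GkEdges myEs myMi
  simp only [Finset.mem_insert, Finset.mem_image, Finset.mem_Icc]
  constructor
  · rintro (h | ⟨i, hi, h⟩)
    · exact Or.inl h
    · exact Or.inr ⟨i, hi, h.symm⟩
  · rintro (h | ⟨i, hi, h⟩)
    · exact Or.inl h
    · exact Or.inr ⟨i, hi, h.symm⟩

lemma myInterCard {k a b : ℕ} (h1 : 1 ≤ a) (hab : a ≤ b) (hbk : b ≤ k) :
    ((myMi k a) ∩ (myMi k b)).card + b = k + a := by
  unfold myMi
  have h2 : Finset.Icc a (a + k - 1) ∩ Finset.Icc b (b + k - 1) = Finset.Icc b (a + k - 1) := by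
    ext x
    simp only [Finset.mem_inter, Finset.mem_Icc]
    omega
  rw [h2, Nat.card_Icc]
  omega

lemma myEsInter {k i : ℕ} (hk : 4 ≤ k) (hi : 1 ≤ i) (hik : i ≤ k) :
    ((myEs k) ∩ (myMi k i)).card ≤ k - 2 := by
  by_cases h : i ≤ 2
  · have hsub : myEs k ∩ myMi k i ⊆ Finset.Icc 1 (k-2) := by
      intro v hv
      rw [Finset.mem_inter, mem_myEs, mem_myMi] at hv
      rw [Finset.mem_Icc]
      omega
    have h1 := Finset.card_le_card hsub
    rw [Nat.card_Icc] at h1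
    omega
  · have hsub : myEs k ∩ myMi k i ⊆ insert (k+2) (Finset.Icc 3 (k-2)) := by
      intro v hv
      rw [Finset.mem_inter, mem_myEs, mem_myMi] at hv
      rw [Finset.mem_insert, Finset.mem_Icc]
      omega
    have h1 := Finset.card_le_card hsub
    have h2 := Finset.card_insert_le (k+2) (Finset.Icc 3 (k-2))
    rw [Nat.card_Icc] at h2
    omega

/-- For every k ≥ 4, the k-graph G*_k is asymmetric. -/
theorem stmt_14 (k : ℕ) (hk : 4 ≤ k) :
    ∀ σ : Equiv.Perm ℕ, IsAuto (GstarVerts k) (GstarEdges k) σ → σ = 1 := by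
  intro σ hσ
  obtain ⟨hout, hedge⟩ := hσ
  have hinj : Function.Injective (σ : ℕ → ℕ) := σ.injective
  have hcard_inter : ∀ E F : Finset ℕ,
      ((E.image σ) ∩ (F.image σ)).card = (E ∩ F).card := by
    intro E F
    rw [← Finset.image_inter _ _ hinj, Finset.card_image_of_injective _ hinj]
  have hpre : ∀ F ∈ GstarEdges k, ∃ E ∈ GstarEdges k, E.image σ = F := by
    intro F hF
    have himg2 : (F.image (σ⁻¹ : Equiv.Perm ℕ)).image σ = F := by
      rw [Finset.image_image]
      have h : (σ : ℕ → ℕ) ∘ ((σ⁻¹ : Equiv.Perm ℕ) : ℕ → ℕ) = id := by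
        funext x; simp
      rw [h, Finset.image_id]
    refine ⟨F.image (σ⁻¹ : Equiv.Perm ℕ), ?_, himg2⟩
    rw [hedge, himg2]
    exact hF
  have hEsM : myEs k ∈ GstarEdges k := (mem_edges _).2 (Or.inl rfl)
  have hMiM : ∀ i, 1 ≤ i → i ≤ k → myMi k i ∈ GstarEdges k := fun i h1 h2 =>
    (mem_edges _).2 (Or.inr ⟨i, ⟨h1, h2⟩, rfl⟩)
  -- Step A : the special edge is fixed setwise
  have hEsfix : (myEs k).image σ = myEs k := by
    rcases (mem_edges _).1 ((hedge _).1 hEsM) with h | ⟨j, ⟨hj1, hjk⟩, hA⟩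
    · exact h
    · exfalso
      obtain ⟨j', hj'1, hj'k, hcjj'⟩ :
          ∃ j', 1 ≤ j' ∧ j' ≤ k ∧ ((myMi k j) ∩ (myMi k j')).card = k - 1 := by
        by_cases hlt : j < k
        · refine ⟨j+1, by omega, by omega, ?_⟩
          have := myInterCard (k := k) (a := j) (b := j+1) hj1 (by omega) (by omega)
          omega
        · refine ⟨j-1, by omega, by omega, ?_⟩
          rw [Finset.inter_comm]
          have := myInterCard (k := k) (a := j-1) (b := j) (by omega) (by omega) hjk
          omega
      obtain ⟨F, hF, hFimg⟩ := hpre (myMi k j') (hMiM j' hj'1 hj'k)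
      have hc : ((myEs k) ∩ F).card = k - 1 := by
        rw [← hcard_inter, hA, hFimg]
        exact hcjj'
      rcases (mem_edges _).1 hF with rfl | ⟨i, ⟨hi1, hik⟩, rfl⟩
      · have heq : myMi k j = myMi k j' := hA.symm.trans hFimg
        rw [heq, Finset.inter_self] at hcjj'
        have := myMi_card (k := k) (i := j') (by omega)
        omega
      · have := myEsInter hk hi1 hik
        omega
  -- Step B : each M_i maps to some M_j
  have hB : ∀ i, 1 ≤ i → i ≤ k →
      ∃ j, (1 ≤ j ∧ j ≤ k) ∧ (myMi k i).image σ = myMi k j := by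
    intro i h1 h2
    rcases (mem_edges _).1 ((hedge _).1 (hMiM i h1 h2)) with h | ⟨j, hj, h⟩
    · exfalso
      have heq : myMi k i = myEs k :=
        Finset.image_injective hinj (h.trans hEsfix.symm)
      have h2k : (2*k) ∈ myEs k := mem_myEs.2 (Or.inl rfl)
      rw [← heq, mem_myMi] at h2k
      omega
    · exact ⟨j, hj, h⟩
  -- σ maps the vertex set into itself
  have hX : ∀ v ∈ GstarVerts k, σ v ∈ GstarVerts k := by
    intro v hv
    by_contra h
    have h2 := hout (σ v) h
    have h3 := hinj h2
    rw [h3] at h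
    exact h hv
  obtain ⟨j1, ⟨hj11, hj1k⟩, hMi1⟩ := hB 1 (by omega) (by omega)
  obtain ⟨jk, ⟨hjk1, hjkk⟩, hMik⟩ := hB k (by omega) (by omega)
  have hc1k := hcard_inter (myMi k 1) (myMi k k)
  rw [hMi1, hMik] at hc1k
  have hIC1k := myInterCard (k := k) (a := 1) (b := k) (by omega) (by omega) (by omega)
  have hj1cases : j1 = 1 ∨ j1 = k := by
    rcases le_total j1 jk with hle | hle
    · have := myInterCard (k := k) (a := j1) (b := jk) hj11 hle hjkk
      omega
    · have h4 : ((myMi k j1) ∩ (myMi k jk)).card = ((myMi k jk) ∩ (myMi k j1)).card := by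
        rw [Finset.inter_comm]
      have := myInterCard (k := k) (a := jk) (b := j1) hjk1 hle hj1k
      omega
  rcases hj1cases with hcase | hcase
  · -- identity case
    subst hcase
    have hfix : ∀ i, 1 ≤ i → i ≤ k → (myMi k i).image σ = myMi k i := by
      intro i h1 h2
      obtain ⟨j, ⟨hjj1, hjjk⟩, hij⟩ := hB i h1 h2
      have e1 := hcard_inter (myMi k 1) (myMi k i)
      rw [hMi1, hij] at e1
      have c1 := myInterCard (k := k) (a := 1) (b := i) (by omega) h1 h2
      have c2 := myInterCard (k := k) (a := 1) (b := j) (by omega) hjj1 hjjk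
      have hji : j = i := by omega
      rw [hji] at hij
      exact hij
    have hmem_iff : ∀ v i, 1 ≤ i → i ≤ k → (v ∈ myMi k i ↔ σ v ∈ myMi k i) := by
      intro v i h1 h2
      constructor
      · intro hv
        rw [← hfix i h1 h2]
        exact Finset.mem_image_of_mem _ hv
      · intro hv
        rw [← hfix i h1 h2] at hv
        obtain ⟨u, hu, huv⟩ := Finset.mem_image.1 hv
        rw [← hinj huv]
        exact hu
    have h2kEs : (2*k) ∈ myEs k := mem_myEs.2 (Or.inl rfl)
    have hσ2kEs : σ (2*k) ∈ myEs k := by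
      rw [← hEsfix]
      exact Finset.mem_image_of_mem _ h2kEs
    have hσ2k : σ (2*k) = 2*k := by
      have i1 := hmem_iff (2*k) 1 (by omega) (by omega)
      have i3 := hmem_iff (2*k) 3 (by omega) (by omega)
      simp only [mem_myMi] at i1 i3
      rw [mem_myEs] at hσ2kEs
      omega
    refine Equiv.ext fun v => ?_
    rw [Equiv.Perm.one_apply]
    by_cases hv : v ∈ GstarVerts k
    · have hvX : (v = 2*k) ∨ (1 ≤ v ∧ v ≤ 2*k-1) := by
        simpa [GstarVerts, GkVerts, Finset.mem_insert, Finset.mem_Icc] using hv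
      rcases hvX with rfl | ⟨hv1, hv2⟩
      · exact hσ2k
      · have hσvX := hX v hv
        have hσvne : σ v ≠ 2*k := by
          intro h
          have h5 := hinj (h.trans hσ2k.symm)
          omega
        have hw : 1 ≤ σ v ∧ σ v ≤ 2*k - 1 := by
          have h6 : (σ v = 2*k) ∨ (1 ≤ σ v ∧ σ v ≤ 2*k-1) := by
            simpa [GstarVerts, GkVerts, Finset.mem_insert, Finset.mem_Icc] using hσvX
          rcases h6 with h6 | h6
          · exact absurd h6 hσvne
          · exact h6
        have I1 := hmem_iff v 1 (by omega) (by omega)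
        have I2 := hmem_iff v (min v k) (by omega) (by omega)
        have I3 := hmem_iff v (min (σ v) k) (by omega) (by omega)
        have I4 := hmem_iff v (max 1 (v - k + 1)) (by omega) (by omega)
        have I5 := hmem_iff v (max 1 (σ v - k + 1)) (by omega) (by omega)
        simp only [mem_myMi] at I1 I2 I3 I4 I5
        omega
    · exact hout v hv
  · -- reversal case : contradiction
    exfalso
    rw [hcase] at hMi1
    obtain ⟨j2, ⟨hj21, hj2k⟩, hMi2⟩ := hB 2 (by omega) (by omega)
    have e1 := hcard_inter (myMi k 1) (myMi k 2)
    rw [hMi1, hMi2] at e1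
    have c12 := myInterCard (k := k) (a := 1) (b := 2) (by omega) (by omega) (by omega)
    have cj2 : ((myMi k k) ∩ (myMi k j2)).card = j2 := by
      rw [Finset.inter_comm]
      have := myInterCard (k := k) (a := j2) (b := k) hj21 hj2k (le_refl k)
      omega
    have hj2 : j2 = k - 1 := by omega
    subst hj2
    have h1Es : (1:ℕ) ∈ myEs k := mem_myEs.2 (Or.inr (Or.inr ⟨by omega, by omega⟩))
    have hs1Es : σ 1 ∈ myEs k := by
      rw [← hEsfix]
      exact Finset.mem_image_of_mem _ h1Es
    have h1M1 : (1:ℕ) ∈ myMi k 1 := mem_myMi.2 ⟨le_refl 1, by omega⟩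
    have hs1Mk : σ 1 ∈ myMi k k := by
      rw [← hMi1]
      exact Finset.mem_image_of_mem _ h1M1
    have hs1nM2 : σ 1 ∉ myMi k (k-1) := by
      intro h
      rw [← hMi2] at h
      obtain ⟨u, hu, huv⟩ := Finset.mem_image.1 h
      have hu1 : u = 1 := hinj huv
      rw [hu1, mem_myMi] at hu
      omega
    rw [mem_myEs] at hs1Es
    rw [mem_myMi] at hs1Mk
    rw [mem_myMi] at hs1nM2
    omega
end

section
/- For every integer k ≥ 4, every k-subgraph (X', M') of G*_k with at least two vertices and (X', M') ≠ G*_k has an involution. -/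
/-! ### Auxiliary machinery -/

/-- The special edge of `G*_k`. -/
def Estar (k : ℕ) : Finset ℕ := insert (2 * k) (insert (k + 2) (Finset.Icc 1 (k - 2)))

lemma mem_Estar {k v : ℕ} : v ∈ Estar k ↔ v = 2 * k ∨ v = k + 2 ∨ (1 ≤ v ∧ v ≤ k - 2) := by
  simp [Estar, Finset.mem_insert, Finset.mem_Icc]

lemma mem_GstarEdges {k : ℕ} {E : Finset ℕ} (h : E ∈ GstarEdges k) :
    E = Estar k ∨ ∃ i, 1 ≤ i ∧ i ≤ k ∧ E = Finset.Icc i (i + k - 1) := by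
  simp only [GstarEdges, GkEdges, Finset.mem_insert, Finset.mem_image, Finset.mem_Icc] at h
  rcases h with h | ⟨i, ⟨hi1, hik⟩, rfl⟩
  · left; exact h
  · right; exact ⟨i, hi1, hik, rfl⟩

/-- An involution `σ` that fixes everything outside `X'` and maps edges of `M'` to
edges of `M'` yields the conclusion. -/
lemma perm_auto {X' : Finset ℕ} {M' : Finset (Finset ℕ)} (σ : Equiv.Perm ℕ)
    (hinv : σ * σ = 1) (hσne : σ ≠ 1)
    (hfix : ∀ v ∉ X', σ v = v)
    (hmap : ∀ E ∈ M', E.image σ ∈ M') :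
    ∃ τ : Equiv.Perm ℕ, IsAuto X' M' τ ∧ τ ≠ 1 ∧ τ * τ = 1 := by
  have hcomp : (σ : ℕ → ℕ) ∘ σ = id := by
    funext v
    have := congrArg (fun τ : Equiv.Perm ℕ => τ v) hinv
    simpa using this
  refine ⟨σ, ⟨hfix, fun E => ⟨fun hE => hmap E hE, fun hE => ?_⟩⟩, hσne, hinv⟩
  have h2 : (E.image σ).image σ = E := by
    rw [Finset.image_image, hcomp, Finset.image_id]
  have := hmap _ hE
  rwa [h2] at this

/-- A transposition of two vertices of `X'` lying in exactly the same edges of `M'`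
yields the conclusion. -/
lemma swap_auto {X' : Finset ℕ} {M' : Finset (Finset ℕ)} {a b : ℕ}
    (hab : a ≠ b) (ha : a ∈ X') (hb : b ∈ X')
    (h : ∀ E ∈ M', (a ∈ E ↔ b ∈ E)) :
    ∃ τ : Equiv.Perm ℕ, IsAuto X' M' τ ∧ τ ≠ 1 ∧ τ * τ = 1 := by
  apply perm_auto (Equiv.swap a b) (Equiv.swap_mul_self a b)
  · intro h1
    apply hab
    have := congrArg (fun τ : Equiv.Perm ℕ => τ a) h1
    simpa [Equiv.swap_apply_left] using this.symm
  · intro v hv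
    exact Equiv.swap_apply_of_ne_of_ne (fun h' => hv (h' ▸ ha)) (fun h' => hv (h' ▸ hb))
  · intro E hE
    have key : E.image (Equiv.swap a b) = E := by
      apply Finset.eq_of_subset_of_card_le
      · intro y hy
        rw [Finset.mem_image] at hy
        obtain ⟨x, hx, rfl⟩ := hy
        rcases eq_or_ne x a with rfl | hxa
        · rw [Equiv.swap_apply_left]; exact (h E hE).1 hx
        rcases eq_or_ne x b with rfl | hxb
        · rw [Equiv.swap_apply_right]; exact (h E hE).2 hx
        · rw [Equiv.swap_apply_of_ne_of_ne hxa hxb]; exact hx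
      · rw [Finset.card_image_of_injective _ (Equiv.injective _)]
    rw [key]; exact hE

/-! ### The reflection of `G_k` -/

def reflFun (k : ℕ) : ℕ → ℕ := fun v => if 1 ≤ v ∧ v ≤ 2 * k - 1 then 2 * k - v else v

lemma reflInv (k : ℕ) : Function.Involutive (reflFun k) := by
  intro v; unfold reflFun; split_ifs <;> omega

def reflPerm (k : ℕ) : Equiv.Perm ℕ := (reflInv k).toPerm

lemma reflPerm_apply (k v : ℕ) : reflPerm k v = reflFun k v := rfl

lemma reflPerm_sq (k : ℕ) : reflPerm k * reflPerm k = 1 := by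
  ext v
  simp only [Equiv.Perm.mul_apply, Equiv.Perm.one_apply, reflPerm_apply]
  exact reflInv k v

lemma reflPerm_image {k i : ℕ} (hk : 4 ≤ k) (h1 : 1 ≤ i) (h2 : i ≤ k) :
    (Finset.Icc i (i + k - 1)).image (reflPerm k) =
      Finset.Icc (k + 1 - i) ((k + 1 - i) + k - 1) := by
  ext y
  simp only [Finset.mem_image, Finset.mem_Icc]
  constructor
  · rintro ⟨x, ⟨hx1, hx2⟩, rfl⟩
    rw [reflPerm_apply]; unfold reflFun; split_ifs <;> omega
  · intro ⟨hy1, hy2⟩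
    refine ⟨2 * k - y, ⟨by omega, by omega⟩, ?_⟩
    rw [reflPerm_apply]; unfold reflFun; split_ifs <;> omega

/-! ### The sporadic involution for `k = 4` -/

def sigma4 : Equiv.Perm ℕ := Equiv.swap 1 5 * (Equiv.swap 2 4 * Equiv.swap 7 8)

lemma sigma4_apply (v : ℕ) : sigma4 v =
    if v = 1 then 5 else if v = 5 then 1 else if v = 2 then 4
    else if v = 4 then 2 else if v = 7 then 8 else if v = 8 then 7 else v := by
  have h : ∀ (a b x : ℕ), x ≠ a → x ≠ b → Equiv.swap a b x = x :=
    fun a b x h1 h2 => Equiv.swap_apply_of_ne_of_ne h1 h2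
  simp only [sigma4, Equiv.Perm.mul_apply]
  by_cases h1 : v = 1
  · subst h1; rw [h 7 8 1 (by omega) (by omega), h 2 4 1 (by omega) (by omega),
      Equiv.swap_apply_left]; simp
  by_cases h5 : v = 5
  · subst h5; rw [h 7 8 5 (by omega) (by omega), h 2 4 5 (by omega) (by omega),
      Equiv.swap_apply_right]; simp
  by_cases h2 : v = 2
  · subst h2; rw [h 7 8 2 (by omega) (by omega), Equiv.swap_apply_left,
      h 1 5 4 (by omega) (by omega)]; simp
  by_cases h4 : v = 4
  · subst h4; rw [h 7 8 4 (by omega) (by omega), Equiv.swap_apply_right,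
      h 1 5 2 (by omega) (by omega)]; simp
  by_cases h7 : v = 7
  · subst h7; rw [Equiv.swap_apply_left, h 2 4 8 (by omega) (by omega),
      h 1 5 8 (by omega) (by omega)]; simp
  by_cases h8 : v = 8
  · subst h8; rw [Equiv.swap_apply_right, h 2 4 7 (by omega) (by omega),
      h 1 5 7 (by omega) (by omega)]; simp
  · rw [h 7 8 v h7 h8, h 2 4 v h2 h4, h 1 5 v h1 h5]
    simp [h1, h5, h2, h4, h7, h8]

set_option maxHeartbeats 1000000 in
lemma sigma4_sq : sigma4 * sigma4 = 1 := by
  ext v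
  rw [Equiv.Perm.mul_apply, Equiv.Perm.one_apply, sigma4_apply (sigma4 v), sigma4_apply v]
  split_ifs <;> omega

lemma imghelp (s t : Finset ℕ) (h : ∀ x ∈ s, sigma4 x ∈ t)
    (hc : s.card = t.card) : s.image sigma4 = t := by
  apply Finset.eq_of_subset_of_card_le
  · intro y hy
    rw [Finset.mem_image] at hy
    obtain ⟨x, hx, rfl⟩ := hy
    exact h x hx
  · rw [Finset.card_image_of_injective _ (Equiv.injective _), hc]

lemma sigma4_img1 : (Finset.Icc 1 4).image sigma4 = Finset.Icc 2 5 := by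
  apply imghelp
  · intro x hx; fin_cases hx <;> rw [sigma4_apply] <;> decide
  · decide

lemma sigma4_img2 : (Finset.Icc 2 5).image sigma4 = Finset.Icc 1 4 := by
  apply imghelp
  · intro x hx; fin_cases hx <;> rw [sigma4_apply] <;> decide
  · decide

lemma sigma4_img4 : (Finset.Icc 4 7).image sigma4 = insert 8 (insert 6 (Finset.Icc 1 2)) := by
  apply imghelp
  · intro x hx; fin_cases hx <;> rw [sigma4_apply] <;> decide
  · decide

lemma sigma4_imgE : (insert 8 (insert 6 (Finset.Icc 1 2)) : Finset ℕ).image sigma4 =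
    Finset.Icc 4 7 := by
  apply imghelp
  · intro x hx; fin_cases hx <;> rw [sigma4_apply] <;> decide
  · decide

/-- For every k ≥ 4, every proper k-subgraph of G*_k with at least two vertices has
an involution. -/
theorem stmt_15 (k : ℕ) (hk : 4 ≤ k)
    (X' : Finset ℕ) (M' : Finset (Finset ℕ))
    (hXsub : X' ⊆ GstarVerts k)
    (hM' : ∀ E ∈ M', E ∈ GstarEdges k ∧ E ⊆ X')
    (hcard : 2 ≤ X'.card)
    (hne : ¬(X' = GstarVerts k ∧ M' = GstarEdges k)) :
    ∃ σ : Equiv.Perm ℕ, IsAuto X' M' σ ∧ σ ≠ 1 ∧ σ * σ = 1 := by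
  have hedge : ∀ E ∈ M', E = Estar k ∨ ∃ i, 1 ≤ i ∧ i ≤ k ∧ E = Finset.Icc i (i + k - 1) :=
    fun E hE => mem_GstarEdges (hM' E hE).1
  have hsub : ∀ E ∈ M', E ⊆ X' := fun E hE => (hM' E hE).2
  by_cases hM0 : M' = ∅
  · subst hM0
    have hlt : 1 < X'.card := by omega
    obtain ⟨a, ha, b, hb, hab⟩ := Finset.one_lt_card.mp hlt
    exact swap_auto hab ha hb (by simp)
  obtain ⟨F, hF⟩ := Finset.nonempty_iff_ne_empty.mpr hM0
  by_cases h1 : Finset.Icc 1 (1 + k - 1) ∈ M'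
  · -- `M₁ ∈ M'`, so the vertices `1, …, k` all lie in `X'`.
    have hX1k : ∀ v, 1 ≤ v → v ≤ k → v ∈ X' := fun v hv1 hv2 =>
      hsub _ h1 (Finset.mem_Icc.mpr ⟨hv1, by omega⟩)
    by_cases hall : ∀ j, 2 ≤ j → j ≤ k → j ≠ k - 1 → Finset.Icc j (j + k - 1) ∈ M'
    · -- all the `M_j` with `j ∉ {1, k-1}` are present
      have hIk : Finset.Icc k (k + k - 1) ∈ M' := hall k (by omega) le_rfl (by omega)
      have hXall : ∀ v, 1 ≤ v → v ≤ 2 * k - 1 → v ∈ X' := by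
        intro v hv1 hv2
        rcases le_or_gt v k with h | h
        · exact hX1k v hv1 h
        · exact hsub _ hIk (Finset.mem_Icc.mpr ⟨by omega, by omega⟩)
      by_cases hk1 : Finset.Icc (k - 1) (k - 1 + k - 1) ∈ M'
      · -- all the `M_j` are present
        have hallfull : ∀ j, 1 ≤ j → j ≤ k → Finset.Icc j (j + k - 1) ∈ M' := by
          intro j hj1 hjk
          rcases eq_or_ne j 1 with rfl | hne1
          · exact h1
          rcases eq_or_ne j (k - 1) with rfl | hnek1
          · exact hk1
          · exact hall j (by omega) hjk hnek1
        by_cases hEs : Estar k ∈ M'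
        · -- everything present: contradiction with properness
          exfalso
          apply hne
          constructor
          · apply Finset.Subset.antisymm hXsub
            intro v hv
            rcases Finset.mem_insert.mp hv with rfl | hv
            · exact hsub _ hEs (mem_Estar.mpr (Or.inl rfl))
            · rw [GkVerts, Finset.mem_Icc] at hv
              exact hXall v hv.1 hv.2
          · apply Finset.Subset.antisymm (fun E hE => (hM' E hE).1)
            intro E hE
            rcases mem_GstarEdges hE with rfl | ⟨i, hi1, hik, rfl⟩
            · exact hEs
            · exact hallfull i hi1 hik
        · -- only `E*` missing: use the reflection `v ↦ 2k - v`
          apply perm_auto (reflPerm k) (reflPerm_sq k)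
          · intro hid
            have h2 : reflFun k 1 = 1 := by rw [← reflPerm_apply, hid]; rfl
            unfold reflFun at h2
            split_ifs at h2 with h3 <;> omega
          · intro v hv
            rw [reflPerm_apply]; unfold reflFun
            split_ifs with h
            · exact absurd (hXall v h.1 h.2) hv
            · rfl
          · intro E hE
            rcases hedge E hE with rfl | ⟨i, hi1, hik, rfl⟩
            · exact absurd hE hEs
            · rw [reflPerm_image hk hi1 hik]
              exact hallfull (k + 1 - i) (by omega) (by omega)
      · -- `M_{k-1}` missing
        by_cases hk5 : 5 ≤ k
        · -- swap `2k-2` and `2k-1`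
          refine swap_auto (a := 2 * k - 2) (b := 2 * k - 1) (by omega)
            (hXall _ (by omega) (by omega)) (hXall _ (by omega) (by omega)) ?_
          intro E hE
          rcases hedge E hE with rfl | ⟨i, hi1, hik, rfl⟩
          · rw [mem_Estar, mem_Estar]; omega
          · have hne1 : i ≠ k - 1 := by rintro rfl; exact hk1 hE
            rw [Finset.mem_Icc, Finset.mem_Icc]; omega
        · -- k = 4
          have hk4 : k = 4 := by omega
          subst hk4
          norm_num at h1 hIk hk1
          by_cases hEs : Estar 4 ∈ M'
          · -- the sporadic case: `M' = {M₁, M₂, M₄, E*}`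
            have h8 : (8 : ℕ) ∈ X' := hsub _ hEs (mem_Estar.mpr (by omega))
            have hI2 : Finset.Icc 2 5 ∈ M' := by
              have := hall 2 le_rfl (by omega) (by omega)
              norm_num at this; exact this
            have hEs' : (insert 8 (insert 6 (Finset.Icc 1 2)) : Finset ℕ) ∈ M' := by
              have : Estar 4 = insert 8 (insert 6 (Finset.Icc 1 2)) := by decide
              rwa [this] at hEs
            apply perm_auto sigma4 sigma4_sq
            · intro hid
              have h7 : sigma4 7 = 7 := by rw [hid]; rfl
              rw [sigma4_apply] at h7; norm_num at h7
            · intro v hv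
              have hmem : ∀ c : ℕ, 1 ≤ c → c ≤ 8 → c ∈ X' := by
                intro c hc1 hc2
                rcases eq_or_ne c 8 with rfl | hc8
                · exact h8
                · exact hXall c hc1 (by omega)
              rw [sigma4_apply]
              split_ifs with e1 e2 e3 e4 e5 e6
              · exact absurd (hmem v (by omega) (by omega)) hv
              · exact absurd (hmem v (by omega) (by omega)) hv
              · exact absurd (hmem v (by omega) (by omega)) hv
              · exact absurd (hmem v (by omega) (by omega)) hv
              · exact absurd (hmem v (by omega) (by omega)) hv
              · exact absurd (hmem v (by omega) (by omega)) hv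
              · rfl
            · intro E hE
              rcases hedge E hE with rfl | ⟨i, hi1, hik, rfl⟩
              · have hrw : Estar 4 = insert 8 (insert 6 (Finset.Icc 1 2)) := by decide
                rw [hrw, sigma4_imgE]; exact hIk
              · interval_cases i
                · norm_num [sigma4_img1]; exact hI2
                · norm_num [sigma4_img2]; exact h1
                · norm_num at hE; exact absurd hE hk1
                · norm_num [sigma4_img4]; exact hEs'
          · -- `E*` and `M₃` missing: swap `2` and `3`
            refine swap_auto (a := 2) (b := 3) (by omega)
              (hX1k _ (by omega) (by omega)) (hX1k _ (by omega) (by omega)) ?_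
            intro E hE
            rcases hedge E hE with rfl | ⟨i, hi1, hik, rfl⟩
            · exact absurd hE hEs
            · have hne1 : i ≠ 3 := by rintro rfl; norm_num at hE; exact hk1 hE
              rw [Finset.mem_Icc, Finset.mem_Icc]; omega
    · -- some `M_j`, `j ∉ {1, k-1}`, missing: swap `j-1` and `j`
      push_neg at hall
      obtain ⟨j, hj2, hjk, hjne, hjnot⟩ := hall
      refine swap_auto (a := j - 1) (b := j) (by omega)
        (hX1k _ (by omega) (by omega)) (hX1k _ (by omega) (by omega)) ?_
      intro E hE
      rcases hedge E hE with rfl | ⟨i, hi1, hik, rfl⟩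
      · rw [mem_Estar, mem_Estar]; omega
      · have hne1 : i ≠ j := by rintro rfl; exact hjnot hE
        rw [Finset.mem_Icc, Finset.mem_Icc]; omega
  · -- `M₁` missing
    by_cases hx1 : (1 : ℕ) ∈ X' ∧ 2 * k ∈ X'
    · -- swap `1` and `2k`
      refine swap_auto (a := 1) (b := 2 * k) (by omega) hx1.1 hx1.2 ?_
      intro E hE
      rcases hedge E hE with rfl | ⟨i, hi1, hik, rfl⟩
      · rw [mem_Estar, mem_Estar]; omega
      · have hne1 : i ≠ 1 := by rintro rfl; exact h1 hE
        rw [Finset.mem_Icc, Finset.mem_Icc]; omega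
    · -- `1 ∉ X'` or `2k ∉ X'`, so `E* ∉ M'`
      have hEstar : Estar k ∉ M' := by
        intro hmem
        rcases not_and_or.mp hx1 with hx | hx
        · exact hx (hsub _ hmem (mem_Estar.mpr (by omega)))
        · exact hx (hsub _ hmem (mem_Estar.mpr (by omega)))
      by_cases hkk : (k : ℕ) ∈ X' ∧ k + 1 ∈ X'
      · -- swap `k` and `k+1`
        refine swap_auto (a := k) (b := k + 1) (by omega) hkk.1 hkk.2 ?_
        intro E hE
        rcases hedge E hE with rfl | ⟨i, hi1, hik, rfl⟩
        · exact absurd hE hEstar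
        · have hne1 : i ≠ 1 := by rintro rfl; exact h1 hE
          rw [Finset.mem_Icc, Finset.mem_Icc]; omega
      · -- impossible: `M'` would be empty
        exfalso
        rcases hedge F hF with rfl | ⟨i, hi1, hik, rfl⟩
        · exact hEstar hF
        · have hne1 : i ≠ 1 := by rintro rfl; exact h1 hF
          have hkX : k ∈ X' := hsub _ hF (Finset.mem_Icc.mpr ⟨by omega, by omega⟩)
          have hk1X : k + 1 ∈ X' := hsub _ hF (Finset.mem_Icc.mpr ⟨by omega, by omega⟩)
          exact hkk ⟨hkX, hk1X⟩
end
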